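/- arXiv:1410.1409 — 14 statements merged into one kernel-verified Lean document; each statement's English description precedes it below -/
import Mathlib

section
/- Let F and C be finite nonempty sets and let c : F → C → ℝ be nonnegative costs satisfying the four-point metric inequality. Define the extended facility set F' = F ⊕ C (each client j contributing a dummy facility denoted i_j) and extended costs c' : F' → C → ℝ by c' i j = c i j for i ∈ F, c' i_j j = 0, and c' i_j j0 = min_{i∈F} (c i j0 + c i j) for j0 ≠ j. Then c' is nonnegative and satisfies the four-point metric inequality on F' × C. -/
/-- the costs `c'` of the metric extension on `F ⊕ C` are nonnegative
and satisfy the four-point metric inequality. -/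
theorem stmt_0 {F C : Type} [Fintype F] [Fintype C] [Nonempty F] [Nonempty C]
    (c : F → C → ℝ)
    (hc_nonneg : ∀ i j, 0 ≤ c i j)
    (hc_metric : ∀ (i0 i1 : F) (j0 j1 : C), c i0 j0 ≤ c i0 j1 + c i1 j1 + c i1 j0)
    (c' : F ⊕ C → C → ℝ)
    (hc'F : ∀ (i : F) (j : C), c' (Sum.inl i) j = c i j)
    (hc'diag : ∀ j : C, c' (Sum.inr j) j = 0)
    (hc'off : ∀ j j0 : C, j0 ≠ j →
      c' (Sum.inr j) j0 =
        Finset.univ.inf' Finset.univ_nonempty (fun i : F => c i j0 + c i j)) :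
    (∀ (i : F ⊕ C) (j : C), 0 ≤ c' i j) ∧
      (∀ (i0 i1 : F ⊕ C) (j0 j1 : C), c' i0 j0 ≤ c' i0 j1 + c' i1 j1 + c' i1 j0) := by
  -- witness of the infimum for off-diagonal dummy costs
  have hwit : ∀ (k j : C), j ≠ k → ∃ a : F, c' (Sum.inr k) j = c a j + c a k := by
    intro k j hjk
    obtain ⟨a, -, ha⟩ :=
      Finset.exists_mem_eq_inf' (Finset.univ_nonempty) (fun i : F => c i j + c i k)
    exact ⟨a, by rw [hc'off k j hjk, ha]⟩
  -- L1 : c a j ≤ c a k + c' (inr k) j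
  have L1 : ∀ (a : F) (k j : C), c a j ≤ c a k + c' (Sum.inr k) j := by
    intro a k j
    by_cases hjk : j = k
    · subst hjk; rw [hc'diag]; linarith
    · obtain ⟨b, hb⟩ := hwit k j hjk
      rw [hb]
      have := hc_metric a b j k
      linarith
  -- L1' : c a k ≤ c a j + c' (inr k) j
  have L1' : ∀ (a : F) (k j : C), c a k ≤ c a j + c' (Sum.inr k) j := by
    intro a k j
    by_cases hjk : j = k
    · subst hjk; rw [hc'diag]; linarith
    · obtain ⟨b, hb⟩ := hwit k j hjk
      rw [hb]
      have := hc_metric a b k j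
      linarith
  -- nonnegativity
  have hN : ∀ (i : F ⊕ C) (j : C), 0 ≤ c' i j := by
    rintro (a | k) j
    · rw [hc'F]; exact hc_nonneg a j
    · by_cases hjk : j = k
      · subst hjk; rw [hc'diag]
      · obtain ⟨b, hb⟩ := hwit k j hjk
        rw [hb]
        have := hc_nonneg b j
        have := hc_nonneg b k
        linarith
  refine ⟨hN, ?_⟩
  -- L2 : c' (inr k) j ≤ c a j + c a k
  have L2 : ∀ (a : F) (k j : C), c' (Sum.inr k) j ≤ c a j + c a k := by
    intro a k j
    by_cases hjk : j = k
    · subst hjk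
      rw [hc'diag]
      have := hc_nonneg a j
      linarith
    · rw [hc'off k j hjk]
      exact Finset.inf'_le _ (Finset.mem_univ a)
  -- P1 : c' i j0 ≤ c' i j1 + c a j1 + c a j0 for any facility a
  have P1 : ∀ (i : F ⊕ C) (a : F) (j0 j1 : C),
      c' i j0 ≤ c' i j1 + c a j1 + c a j0 := by
    rintro (b | k) a j0 j1
    · rw [hc'F, hc'F]; exact hc_metric b a j0 j1
    · have h1 := L2 a k j0      -- c' (inr k) j0 ≤ c a j0 + c a k
      have h2 := L1' a k j1     -- c a k ≤ c a j1 + c' (inr k) j1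
      linarith
  -- P2 : witness facility below c' i1 j1 + c' i1 j0
  have P2 : ∀ (i1 : F ⊕ C) (j0 j1 : C), j0 ≠ j1 →
      ∃ a : F, c a j1 + c a j0 ≤ c' i1 j1 + c' i1 j0 := by
    rintro (b | k) j0 j1 hne
    · exact ⟨b, by rw [hc'F, hc'F]⟩
    · by_cases hj0k : j0 = k
      · obtain ⟨a, ha⟩ := hwit k j1 (fun h => hne (hj0k.trans h.symm))
        refine ⟨a, ?_⟩
        rw [ha, hj0k, hc'diag]
        linarith
      · obtain ⟨a, ha⟩ := hwit k j0 hj0k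
        refine ⟨a, ?_⟩
        have h1 := L1 a k j1   -- c a j1 ≤ c a k + c' (inr k) j1
        rw [ha]
        linarith
  intro i0 i1 j0 j1
  by_cases hj : j0 = j1
  · subst hj
    have h1 := hN i1 j0
    have h2 := hN i1 j0
    linarith [hN i1 j0]
  · obtain ⟨a, ha⟩ := P2 i1 j0 j1 hj
    have := P1 i0 a j0 j1
    linarith
end

section
/- Let I1 = (F, C, s, d, c, r) be a TMC instance with costs satisfying the four-point metric inequality, and let I2 be the associated CFL instance of the metric TMC-to-CFL reduction. Then for every feasible TMC solution (x, z) of I1 there exists a feasible CFL solution (x', z') of I2 whose objective value equals the objective value of (x, z). -/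
/-- metric TMC-to-CFL reduction, forward direction.
Every feasible TMC solution of `I1` yields a feasible CFL solution of `I2`
with the same objective value. -/
theorem stmt_1 {F C : Type} [Fintype F] [Fintype C] [Nonempty F] [Nonempty C]
    -- TMC instance I1 = (F, C, s, d, c, r)
    (s : F → ℕ) (d : C → ℕ) (c : F → C → ℝ) (r : C → ℕ)
    (hc_nonneg : ∀ i j, 0 ≤ c i j)
    (hc_metric : ∀ (i0 i1 : F) (j0 j1 : C), c i0 j0 ≤ c i0 j1 + c i1 j1 + c i1 j0)
    -- CFL instance I2 on facility set F ⊕ C given by the reduction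
    (s' : F ⊕ C → ℕ) (f' : F ⊕ C → ℕ) (c' : F ⊕ C → C → ℝ)
    (hs'F : ∀ i : F, s' (Sum.inl i) = s i)
    (hs'C : ∀ j : C, s' (Sum.inr j) = d j)
    (hf'F : ∀ i : F, f' (Sum.inl i) = 0)
    (hf'C : ∀ j : C, f' (Sum.inr j) = r j)
    (hc'F : ∀ (i : F) (j : C), c' (Sum.inl i) j = c i j)
    (hc'diag : ∀ j : C, c' (Sum.inr j) j = 0)
    (hc'off : ∀ j j0 : C, j0 ≠ j →
      c' (Sum.inr j) j0 =
        Finset.univ.inf' Finset.univ_nonempty (fun i : F => c i j0 + c i j))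
    -- a feasible TMC solution (x, z) of I1
    (x : F → C → ℝ) (z : C → ℝ)
    (hx : ∀ i j, 0 ≤ x i j)
    (hz : ∀ j, z j = 0 ∨ z j = 1)
    (hdem : ∀ j, ∑ i, x i j = (1 - z j) * (d j : ℝ))
    (hcap : ∀ i, ∑ j, x i j ≤ (s i : ℝ)) :
    -- there is a feasible CFL solution (x', z') of I2 with equal objective value
    ∃ (x' : F ⊕ C → C → ℝ) (z' : F ⊕ C → ℝ),
      (∀ i' j, 0 ≤ x' i' j) ∧
      (∀ i', z' i' = 0 ∨ z' i' = 1) ∧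
      (∀ j, ∑ i', x' i' j = (d j : ℝ)) ∧
      (∀ i', ∑ j, x' i' j ≤ (s' i' : ℝ) * z' i') ∧
      (∑ i', ∑ j, c' i' j * x' i' j) + (∑ i', (f' i' : ℝ) * z' i')
        = (∑ i, ∑ j, c i j * x i j) + (∑ j, (r j : ℝ) * z j) := by
  classical
  refine ⟨Sum.elim (fun i j => x i j) (fun j' j => if j' = j then z j' * d j' else 0),
    Sum.elim (fun _ => 1) z, ?_, ?_, ?_, ?_, ?_⟩
  · rintro (i | j') j
    · exact hx i j
    · simp only [Sum.elim_inr]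
      split
      · rcases hz j' with h | h <;> simp [h] <;> positivity
      · exact le_rfl
  · rintro (i | j')
    · simp
    · simpa using hz j'
  · intro j
    rw [Fintype.sum_sum_type]
    simp only [Sum.elim_inl, Sum.elim_inr]
    rw [Finset.sum_ite_eq' Finset.univ j (fun j' => z j' * d j')]
    simp [hdem j]
    ring
  · rintro (i | j')
    · simpa [hs'F] using hcap i
    · simp only [Sum.elim_inr, hs'C]
      rw [Finset.sum_ite_eq Finset.univ j' (fun _ => z j' * d j')]
      simp [mul_comm]
  · rw [Fintype.sum_sum_type, Fintype.sum_sum_type]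
    have h1 : ∀ i : F, ∑ j, c' (Sum.inl i) j * Sum.elim (fun i j => x i j)
        (fun j' j => if j' = j then z j' * d j' else 0) (Sum.inl i) j = ∑ j, c i j * x i j := by
      intro i; simp [hc'F]
    have h2 : ∀ j' : C, ∑ j, c' (Sum.inr j') j * Sum.elim (fun i j => x i j)
        (fun j' j => if j' = j then z j' * d j' else 0) (Sum.inr j') j = 0 := by
      intro j'
      apply Finset.sum_eq_zero
      intro j _
      simp only [Sum.elim_inr]
      by_cases hj : j' = j
      · subst hj; simp [hc'diag]
      · simp [hj]
    simp only [h2]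
    rw [Finset.sum_congr rfl (fun i _ => h1 i)]
    simp [hf'F, hf'C]
end

section
/- Let I1 = (F, C, s, d, c, r) be a TMC instance with costs satisfying the four-point metric inequality, and let I2 be the associated CFL instance of the metric TMC-to-CFL reduction. Then for every feasible CFL solution (x', z') of I2 there exists a feasible TMC solution (x, z) of I1 whose objective value is at most the objective value of (x', z'). -/
/-!
Reroute the CFL plan until every dummy facility `i_j` ships only to its own client `j`. A
shipment of `i_j` to a client `j₀ ≠ j` is swapped against shipments into `j` from other
facilities `a`, which then serve `j₀` instead: all row and column sums are unchanged, and
since `c' a j₀ ≤ c' a j + c' i_j j₀` (the four-point inequality, through the minimum defining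
`c' i_j j₀`) the cost does not increase. There is always enough flow into `j` to swap against,
because `i_j` has capacity `d j`. In the final plan an open dummy `i_j` becomes the rejection of
`j` at penalty `r j = f' i_j`, and the client of a closed dummy is served by `F` alone.
-/

open Finset

section ViaFacility

variable {F C : Type*} [Fintype F] [Nonempty F] (c : F → C → ℝ)

def viaFacilityDist (j k : C) : ℝ := univ.inf' univ_nonempty fun i => c i j + c i k

variable {c}

theorem viaFacilityDist_comm (j k : C) : viaFacilityDist c j k = viaFacilityDist c k j := by
  simp only [viaFacilityDist, add_comm]

theorem viaFacilityDist_nonneg (hc : ∀ i j, 0 ≤ c i j) (j k : C) : 0 ≤ viaFacilityDist c j k :=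
  le_inf' _ _ fun i _ => add_nonneg (hc i j) (hc i k)

theorem le_add_viaFacilityDist (hc : ∀ i₀ i₁ j₀ j₁, c i₀ j₀ ≤ c i₀ j₁ + c i₁ j₁ + c i₁ j₀)
    (i : F) (j k : C) : c i j ≤ c i k + viaFacilityDist c j k := by
  have : c i j - c i k ≤ viaFacilityDist c j k :=
    le_inf' _ _ fun i₁ _ => by linarith [hc i i₁ j k]
  linarith

theorem viaFacilityDist_triangle (hc : ∀ i₀ i₁ j₀ j₁, c i₀ j₀ ≤ c i₀ j₁ + c i₁ j₁ + c i₁ j₀)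
    (j k l : C) : viaFacilityDist c j l ≤ viaFacilityDist c j k + viaFacilityDist c k l := by
  obtain ⟨i, -, hi⟩ := exists_mem_eq_inf' univ_nonempty fun i => c i j + c i k
  calc viaFacilityDist c j l ≤ c i j + c i l := inf'_le _ (mem_univ i)
    _ ≤ c i j + (c i k + viaFacilityDist c l k) := by grw [le_add_viaFacilityDist hc i l k]
    _ = viaFacilityDist c j k + viaFacilityDist c k l := by
      rw [viaFacilityDist_comm l k, show viaFacilityDist c j k = c i j + c i k from hi]; ring

end ViaFacility

theorem reductionCost_exchange {F C : Type*} [Fintype F] [Nonempty F] {c : F → C → ℝ}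
    (hc_nonneg : ∀ i j, 0 ≤ c i j)
    (hc_metric : ∀ i₀ i₁ j₀ j₁, c i₀ j₀ ≤ c i₀ j₁ + c i₁ j₁ + c i₁ j₀)
    {c' : F ⊕ C → C → ℝ} (hc'F : ∀ i j, c' (Sum.inl i) j = c i j)
    (hc'diag : ∀ j, c' (Sum.inr j) j = 0)
    (hc'off : ∀ j j₀, j₀ ≠ j → c' (Sum.inr j) j₀ = viaFacilityDist c j₀ j)
    (a : F ⊕ C) (j k : C) : c' a j + c' (Sum.inr k) k ≤ c' a k + c' (Sum.inr k) j := by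
  rw [hc'diag, add_zero]
  rcases eq_or_ne j k with rfl | hjk
  · rw [hc'diag, add_zero]
  rw [hc'off k j hjk]
  rcases a with i | l
  · rw [hc'F, hc'F]
    exact le_add_viaFacilityDist hc_metric i j k
  rcases eq_or_ne j l with rfl | hjl
  · rw [hc'diag, hc'off j k hjk.symm]
    exact add_nonneg (viaFacilityDist_nonneg hc_nonneg k j) (viaFacilityDist_nonneg hc_nonneg j k)
  rw [hc'off l j hjl]
  rcases eq_or_ne k l with rfl | hkl
  · rw [hc'diag, zero_add]
  rw [hc'off l k hkl]
  linarith [viaFacilityDist_triangle hc_metric j k l]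

section Rerouting

variable {A C : Type*} [Fintype A] [Fintype C]

structure Reroutes (c x y : A → C → ℝ) : Prop where
  nonneg : ∀ a j, 0 ≤ y a j
  sum_row : ∀ a, ∑ j, y a j = ∑ j, x a j
  sum_col : ∀ j, ∑ a, y a j = ∑ a, x a j
  cost_le : ∑ a, ∑ j, c a j * y a j ≤ ∑ a, ∑ j, c a j * x a j

variable {c x y z : A → C → ℝ}

theorem Reroutes.refl (hx : ∀ a j, 0 ≤ x a j) : Reroutes c x x :=
  ⟨hx, fun _ => rfl, fun _ => rfl, le_rfl⟩

theorem Reroutes.trans (hxy : Reroutes c x y) (hyz : Reroutes c y z) : Reroutes c x z :=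
  ⟨hyz.nonneg, fun a => (hyz.sum_row a).trans (hxy.sum_row a),
    fun j => (hyz.sum_col j).trans (hxy.sum_col j), hyz.cost_le.trans hxy.cost_le⟩

theorem sum_eq_add_sum_ite_ne {ι M : Type*} [Fintype ι] [DecidableEq ι] [AddCommMonoid M]
    (f : ι → M) (i : ι) :
    ∑ j, f j = f i + ∑ j, if j = i then 0 else f j := by
  rw [← Fintype.sum_ite_eq' i f, ← sum_add_distrib]
  exact sum_congr rfl fun j _ => by split_ifs <;> simp_all

theorem sum_mul_rankOne_exchange_nonpos [DecidableEq A] [DecidableEq C] {a₀ : A} {k : C}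
    (hc : ∀ a j, c a j + c a₀ k ≤ c a k + c a₀ j) {w : A → ℝ} (hw : ∀ a, 0 ≤ w a)
    (hw_sum : ∑ a, w a = 1) {v : C → ℝ} (hv : ∀ j, 0 ≤ v j) (hvk : v k = 0) :
    ∑ a, ∑ j, c a j *
      ((w a - if a = a₀ then 1 else 0) * (v j - if j = k then ∑ l, v l else 0)) ≤ 0 := by
  set β : C → ℝ := fun j => v j - if j = k then ∑ l, v l else 0
  set G : A → ℝ := fun a => ∑ j, c a j * β j
  -- G a is the cost change of moving v from k to the other clients along row a; the exchange
  -- inequality makes it largest on the hub row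
  have hG : ∀ a, G a = ∑ j, v j * (c a j - c a k) := fun a => by
    have hβ : ∑ j, β j = 0 := by simp [β, sum_sub_distrib]
    have : G a = ∑ j, (c a j - c a k) * β j := by
      simp [G, sub_mul, sum_sub_distrib, ← mul_sum, hβ]
    rw [this]
    refine sum_congr rfl fun j _ => ?_
    by_cases hj : j = k
    · simp [β, hvk, hj]
    · simp [β, hj, mul_comm]
  have hG_le : ∀ a, G a ≤ G a₀ := fun a => by
    rw [hG, hG]
    exact sum_le_sum fun j _ => mul_le_mul_of_nonneg_left (by linarith [hc a j]) (hv j)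
  calc ∑ a, ∑ j, c a j * ((w a - if a = a₀ then 1 else 0) * β j)
      = ∑ a, (w a - if a = a₀ then 1 else 0) * G a := by
        simp only [G, mul_sum, mul_left_comm]
    _ = ∑ a, w a * G a - G a₀ := by
        simp only [sub_mul, sum_sub_distrib, ite_mul, one_mul, zero_mul, Fintype.sum_ite_eq']
    _ ≤ ∑ a, w a * G a₀ - G a₀ :=
        sub_le_sub_right (sum_le_sum fun a _ => mul_le_mul_of_nonneg_left (hG_le a) (hw a)) _
    _ = 0 := by rw [← sum_mul, hw_sum, one_mul, sub_self]

theorem Reroutes.exists_hub_serves_only [DecidableEq A] [DecidableEq C] {a₀ : A} {k : C}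
    (hc : ∀ a j, c a j + c a₀ k ≤ c a k + c a₀ j) (hx : ∀ a j, 0 ≤ x a j)
    (hhub : ∑ j, x a₀ j ≤ ∑ a, x a k) :
    ∃ y, Reroutes c x y ∧ (∀ j, j ≠ k → y a₀ j = 0) ∧ ∀ a, a ≠ a₀ → x a k = 0 → y a = x a := by
  set u : A → ℝ := fun a => if a = a₀ then 0 else x a k
  set v : C → ℝ := fun j => if j = k then 0 else x a₀ j
  set P := ∑ a, u a
  set t := ∑ j, v j
  have hu : ∀ a, 0 ≤ u a := fun a => by simp only [u]; split_ifs <;> simp [hx]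
  have hv : ∀ j, 0 ≤ v j := fun j => by simp only [v]; split_ifs <;> simp [hx]
  have htP : t ≤ P := by
    rw [sum_eq_add_sum_ite_ne _ k, sum_eq_add_sum_ite_ne _ a₀] at hhub
    simpa using hhub
  rcases (sum_nonneg fun a _ => hu a : 0 ≤ P).eq_or_lt with hP | hP
  · have ht0 : t = 0 := le_antisymm (hP ▸ htP) (sum_nonneg fun j _ => hv j)
    have hv0 : ∀ j, v j = 0 := fun j =>
      (sum_eq_zero_iff_of_nonneg fun j _ => hv j).1 ht0 j (mem_univ j)
    refine ⟨x, .refl hx, fun j hj => by simpa [v, hj] using hv0 j, fun _ _ _ => rfl⟩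
  -- y = x + α ⊗ β: every shipment of the hub to a client j ≠ k is swapped with the shipments
  -- of the other facilities to k, in proportion to them; zero-sum factors keep the marginals
  set α : A → ℝ := fun a => u a / P - if a = a₀ then 1 else 0
  set β : C → ℝ := fun j => v j - if j = k then t else 0
  have hα : ∑ a, α a = 0 := by
    simp only [α, sum_sub_distrib, ← sum_div, Fintype.sum_ite_eq']
    exact sub_eq_zero.2 (div_self hP.ne')
  have hβ : ∑ j, β j = 0 := by simp [β, sum_sub_distrib, t]
  have hcost : ∑ a, ∑ j, c a j * (α a * β j) ≤ 0 :=
    sum_mul_rankOne_exchange_nonpos hc (fun a => div_nonneg (hu a) hP.le)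
      (by rw [← sum_div, div_self hP.ne']) hv (by simp [v])
  refine ⟨fun a j => x a j + α a * β j, ⟨?nonneg, ?sum_row, ?sum_col, ?cost_le⟩, ?hub, ?rows⟩
  case nonneg =>
    intro a j
    by_cases ha : a = a₀ <;> by_cases hj : j = k
    · simpa [α, β, u, v, ha, hj] using add_nonneg (hx a₀ k) (sum_nonneg fun j _ => hv j)
    · simp [α, β, u, v, ha, hj]
    · have : x a k / P * t ≤ x a k := by
        rw [div_mul_eq_mul_div, div_le_iff₀ hP]
        exact mul_le_mul_of_nonneg_left htP (hx a k)
      simpa [α, β, u, v, ha, hj] using this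
    · simpa [α, β, u, v, ha, hj] using
        add_nonneg (hx a j) (mul_nonneg (div_nonneg (hx a k) hP.le) (hx a₀ j))
  case sum_row => intro a; simp [sum_add_distrib, ← mul_sum, hβ]
  case sum_col => intro j; simp [sum_add_distrib, ← sum_mul, hα]
  case cost_le => simpa [mul_add, sum_add_distrib] using hcost
  case hub => intro j hj; simp [α, β, u, v, hj]
  case rows => intro a ha hxa; ext j; simp [α, u, ha, hxa]

theorem Reroutes.exists_hubs_serve_only {h : C → A} (hh : Function.Injective h)
    (hc : ∀ a j k, c a j + c (h k) k ≤ c a k + c (h k) j) (hx : ∀ a j, 0 ≤ x a j)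
    (hhub : ∀ k, ∑ j, x (h k) j ≤ ∑ a, x a k) :
    ∃ y, Reroutes c x y ∧ ∀ k j, j ≠ k → y (h k) j = 0 := by
  classical
  suffices ∀ S : Finset C, ∃ y, Reroutes c x y ∧ ∀ k ∈ S, ∀ j, j ≠ k → y (h k) j = 0 by
    obtain ⟨y, hxy, hy⟩ := this univ
    exact ⟨y, hxy, fun k => hy k (mem_univ k)⟩
  intro S
  induction S using Finset.induction_on with
  | empty => exact ⟨x, .refl hx, by simp⟩
  | insert k S hkS ih =>
    obtain ⟨y, hxy, hyS⟩ := ih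
    obtain ⟨w, hyw, hwk, hw_eq⟩ := Reroutes.exists_hub_serves_only (hc · · k) hxy.nonneg
      (by rw [hxy.sum_row, hxy.sum_col]; exact hhub k)
    refine ⟨w, hxy.trans hyw, fun l hl j hjl => ?_⟩
    rcases mem_insert.1 hl with rfl | hlS
    · exact hwk j hjl
    · have hlk : l ≠ k := ne_of_mem_of_not_mem hlS hkS
      rw [hw_eq (h l) (hh.ne hlk) (hyS l hlS k hlk.symm)]
      exact hyS l hlS j hjl

end Rerouting

section DummyServesOwn

variable {F C : Type*} [Fintype F] [Fintype C] {y : F ⊕ C → C → ℝ}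

theorem sum_col_of_dummy_serves_own (hy : ∀ k j, j ≠ k → y (Sum.inr k) j = 0) (j : C) :
    ∑ a, y a j = ∑ i, y (Sum.inl i) j + y (Sum.inr j) j := by
  rw [Fintype.sum_sum_type, Fintype.sum_eq_single j fun k hk => hy k j (Ne.symm hk)]

theorem sum_cost_of_dummy_serves_own (hy : ∀ k j, j ≠ k → y (Sum.inr k) j = 0)
    {c' : F ⊕ C → C → ℝ} (hc'diag : ∀ j, c' (Sum.inr j) j = 0) :
    ∑ a, ∑ j, c' a j * y a j = ∑ i, ∑ j, c' (Sum.inl i) j * y (Sum.inl i) j := by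
  rw [Fintype.sum_sum_type, add_eq_left]
  refine sum_eq_zero fun k _ => sum_eq_zero fun j _ => ?_
  rcases eq_or_ne j k with rfl | hjk
  · rw [hc'diag, zero_mul]
  · rw [hy k j hjk, mul_zero]

end DummyServesOwn

theorem stmt_2_general {F C : Type} [Fintype F] [Fintype C] [Nonempty F]
    -- TMC instance I1 = (F, C, s, d, c, r)
    (s : F → ℕ) (d : C → ℕ) (c : F → C → ℝ) (r : C → ℕ)
    (hc_nonneg : ∀ i j, 0 ≤ c i j)
    (hc_metric : ∀ (i0 i1 : F) (j0 j1 : C), c i0 j0 ≤ c i0 j1 + c i1 j1 + c i1 j0)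
    -- CFL instance I2 on facility set F ⊕ C given by the reduction
    (s' : F ⊕ C → ℕ) (f' : F ⊕ C → ℕ) (c' : F ⊕ C → C → ℝ)
    (hs'F : ∀ i : F, s' (Sum.inl i) = s i)
    (hs'C : ∀ j : C, s' (Sum.inr j) = d j)
    (hf'F : ∀ i : F, f' (Sum.inl i) = 0)
    (hf'C : ∀ j : C, f' (Sum.inr j) = r j)
    (hc'F : ∀ (i : F) (j : C), c' (Sum.inl i) j = c i j)
    (hc'diag : ∀ j : C, c' (Sum.inr j) j = 0)
    (hc'off : ∀ j j0 : C, j0 ≠ j →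
      c' (Sum.inr j) j0 =
        Finset.univ.inf' Finset.univ_nonempty (fun i : F => c i j0 + c i j))
    -- a feasible CFL solution (x', z') of I2
    (x' : F ⊕ C → C → ℝ) (z' : F ⊕ C → ℝ)
    (hx' : ∀ i' j, 0 ≤ x' i' j)
    (hz' : ∀ i', z' i' = 0 ∨ z' i' = 1)
    (hdem' : ∀ j, ∑ i', x' i' j = (d j : ℝ))
    (hcap' : ∀ i', ∑ j, x' i' j ≤ (s' i' : ℝ) * z' i') :
    -- there is a feasible TMC solution (x, z) of I1 with objective value at most that of (x', z')
    ∃ (x : F → C → ℝ) (z : C → ℝ),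
      (∀ i j, 0 ≤ x i j) ∧
      (∀ j, z j = 0 ∨ z j = 1) ∧
      (∀ j, ∑ i, x i j = (1 - z j) * (d j : ℝ)) ∧
      (∀ i, ∑ j, x i j ≤ (s i : ℝ)) ∧
      (∑ i, ∑ j, c i j * x i j) + (∑ j, (r j : ℝ) * z j)
        ≤ (∑ i', ∑ j, c' i' j * x' i' j) + (∑ i', (f' i' : ℝ) * z' i') := by
  have hcap_dummy : ∀ k, ∑ j, x' (Sum.inr k) j ≤ d k := fun k =>
    (hcap' _).trans <| by rcases hz' (Sum.inr k) with h | h <;> simp [h, hs'C]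
  obtain ⟨y, hy, hy_own⟩ := Reroutes.exists_hubs_serve_only Sum.inr_injective
    (reductionCost_exchange hc_nonneg hc_metric hc'F hc'diag hc'off) hx'
    fun k => (hcap_dummy k).trans (hdem' k).ge
  set z : C → ℝ := fun j => z' (Sum.inr j)
  have hx_bounds : ∀ i j, 0 ≤ (1 - z j) * y (Sum.inl i) j ∧
      (1 - z j) * y (Sum.inl i) j ≤ y (Sum.inl i) j := fun i j => by
    rcases hz' (Sum.inr j) with h | h <;> simp [z, h, hy.nonneg]
  -- a closed dummy ships nothing, so its client is served by real facilities only
  have hy_closed : ∀ j, z j = 0 → ∑ i, y (Sum.inl i) j = d j := fun j hj => by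
    have hrow : ∑ l, y (Sum.inr j) l ≤ 0 := by simpa [hy.sum_row, z, hj] using hcap' (Sum.inr j)
    have hjj := (single_le_sum (fun l _ => hy.nonneg (Sum.inr j) l) (mem_univ j)).trans hrow
    linarith [hy.sum_col j, hdem' j, sum_col_of_dummy_serves_own hy_own j, hy.nonneg (Sum.inr j) j]
  refine ⟨fun i j => (1 - z j) * y (Sum.inl i) j, z, fun i j => (hx_bounds i j).1,
    fun j => hz' _, fun j => ?_, fun i => ?_, ?_⟩
  · rw [← mul_sum]
    rcases hz' (Sum.inr j) with h | h <;> simp [z, h, hy_closed]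
  · calc ∑ j, (1 - z j) * y (Sum.inl i) j ≤ ∑ j, x' (Sum.inl i) j :=
          (sum_le_sum fun j _ => (hx_bounds i j).2).trans (hy.sum_row _).le
      _ ≤ s i := (hcap' _).trans <| by rcases hz' (Sum.inl i) with h | h <;> simp [h, hs'F]
  · have hpen : ∑ j, (r j : ℝ) * z j = ∑ a, (f' a : ℝ) * z' a := by
      simp [Fintype.sum_sum_type, hf'F, hf'C, z]
    have htransport : ∑ i, ∑ j, c i j * ((1 - z j) * y (Sum.inl i) j)
        ≤ ∑ a, ∑ j, c' a j * y a j := by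
      rw [sum_cost_of_dummy_serves_own hy_own hc'diag]
      refine sum_le_sum fun i _ => sum_le_sum fun j _ => ?_
      rw [hc'F]
      exact mul_le_mul_of_nonneg_left (hx_bounds i j).2 (hc_nonneg i j)
    rw [hpen]
    exact add_le_add_left (htransport.trans hy.cost_le) _

/-- metric TMC-to-CFL reduction, backward direction.
Every feasible CFL solution of `I2` yields a feasible TMC solution of `I1`
with objective value at most that of the CFL solution. -/
theorem stmt_2 {F C : Type} [Fintype F] [Fintype C] [Nonempty F] [Nonempty C]
    -- TMC instance I1 = (F, C, s, d, c, r)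
    (s : F → ℕ) (d : C → ℕ) (c : F → C → ℝ) (r : C → ℕ)
    (hc_nonneg : ∀ i j, 0 ≤ c i j)
    (hc_metric : ∀ (i0 i1 : F) (j0 j1 : C), c i0 j0 ≤ c i0 j1 + c i1 j1 + c i1 j0)
    -- CFL instance I2 on facility set F ⊕ C given by the reduction
    (s' : F ⊕ C → ℕ) (f' : F ⊕ C → ℕ) (c' : F ⊕ C → C → ℝ)
    (hs'F : ∀ i : F, s' (Sum.inl i) = s i)
    (hs'C : ∀ j : C, s' (Sum.inr j) = d j)
    (hf'F : ∀ i : F, f' (Sum.inl i) = 0)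
    (hf'C : ∀ j : C, f' (Sum.inr j) = r j)
    (hc'F : ∀ (i : F) (j : C), c' (Sum.inl i) j = c i j)
    (hc'diag : ∀ j : C, c' (Sum.inr j) j = 0)
    (hc'off : ∀ j j0 : C, j0 ≠ j →
      c' (Sum.inr j) j0 =
        Finset.univ.inf' Finset.univ_nonempty (fun i : F => c i j0 + c i j))
    -- a feasible CFL solution (x', z') of I2
    (x' : F ⊕ C → C → ℝ) (z' : F ⊕ C → ℝ)
    (hx' : ∀ i' j, 0 ≤ x' i' j)
    (hz' : ∀ i', z' i' = 0 ∨ z' i' = 1)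
    (hdem' : ∀ j, ∑ i', x' i' j = (d j : ℝ))
    (hcap' : ∀ i', ∑ j, x' i' j ≤ (s' i' : ℝ) * z' i') :
    -- there is a feasible TMC solution (x, z) of I1 with objective value at most that of (x', z')
    ∃ (x : F → C → ℝ) (z : C → ℝ),
      (∀ i j, 0 ≤ x i j) ∧
      (∀ j, z j = 0 ∨ z j = 1) ∧
      (∀ j, ∑ i, x i j = (1 - z j) * (d j : ℝ)) ∧
      (∀ i, ∑ j, x i j ≤ (s i : ℝ)) ∧
      (∑ i, ∑ j, c i j * x i j) + (∑ j, (r j : ℝ) * z j)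
        ≤ (∑ i', ∑ j, c' i' j * x' i' j) + (∑ i', (f' i' : ℝ) * z' i') :=
  stmt_2_general s d c r hc_nonneg hc_metric s' f' c' hs'F hs'C hf'F hf'C hc'F hc'diag hc'off x' z'
    hx' hz' hdem' hcap'
end

section
/- Let I1 = (F, C, s, d, c, r) be a TMC instance with costs satisfying the four-point metric inequality, and let I2 be the associated CFL instance of the metric TMC-to-CFL reduction. Then the infimum of the objective values over all feasible TMC solutions of I1 equals the infimum of the objective values over all feasible CFL solutions of I2. -/
open Finset

/-- metric TMC-to-CFL reduction preserves the optimal value: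
the infimum of TMC objective values of `I1` equals the infimum of CFL objective
values of `I2`. -/
theorem stmt_3 {F C : Type} [Fintype F] [Fintype C] [Nonempty F] [Nonempty C]
    -- TMC instance I1 = (F, C, s, d, c, r)
    (s : F → ℕ) (d : C → ℕ) (c : F → C → ℝ) (r : C → ℕ)
    (hc_nonneg : ∀ i j, 0 ≤ c i j)
    (hc_metric : ∀ (i0 i1 : F) (j0 j1 : C), c i0 j0 ≤ c i0 j1 + c i1 j1 + c i1 j0)
    -- CFL instance I2 on facility set F ⊕ C given by the reduction
    (s' : F ⊕ C → ℕ) (f' : F ⊕ C → ℕ) (c' : F ⊕ C → C → ℝ)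
    (hs'F : ∀ i : F, s' (Sum.inl i) = s i)
    (hs'C : ∀ j : C, s' (Sum.inr j) = d j)
    (hf'F : ∀ i : F, f' (Sum.inl i) = 0)
    (hf'C : ∀ j : C, f' (Sum.inr j) = r j)
    (hc'F : ∀ (i : F) (j : C), c' (Sum.inl i) j = c i j)
    (hc'diag : ∀ j : C, c' (Sum.inr j) j = 0)
    (hc'off : ∀ j j0 : C, j0 ≠ j →
      c' (Sum.inr j) j0 =
        Finset.univ.inf' Finset.univ_nonempty (fun i : F => c i j0 + c i j)) :
    sInf {v : ℝ | ∃ (x : F → C → ℝ) (z : C → ℝ),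
        (∀ i j, 0 ≤ x i j) ∧
        (∀ j, z j = 0 ∨ z j = 1) ∧
        (∀ j, ∑ i, x i j = (1 - z j) * (d j : ℝ)) ∧
        (∀ i, ∑ j, x i j ≤ (s i : ℝ)) ∧
        v = (∑ i, ∑ j, c i j * x i j) + (∑ j, (r j : ℝ) * z j)}
      = sInf {v : ℝ | ∃ (x' : F ⊕ C → C → ℝ) (z' : F ⊕ C → ℝ),
        (∀ i' j, 0 ≤ x' i' j) ∧
        (∀ i', z' i' = 0 ∨ z' i' = 1) ∧
        (∀ j, ∑ i', x' i' j = (d j : ℝ)) ∧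
        (∀ i', ∑ j, x' i' j ≤ (s' i' : ℝ) * z' i') ∧
        v = (∑ i', ∑ j, c' i' j * x' i' j) + (∑ i', (f' i' : ℝ) * z' i')} := by
  classical
  set S1 := {v : ℝ | ∃ (x : F → C → ℝ) (z : C → ℝ),
        (∀ i j, 0 ≤ x i j) ∧
        (∀ j, z j = 0 ∨ z j = 1) ∧
        (∀ j, ∑ i, x i j = (1 - z j) * (d j : ℝ)) ∧
        (∀ i, ∑ j, x i j ≤ (s i : ℝ)) ∧
        v = (∑ i, ∑ j, c i j * x i j) + (∑ j, (r j : ℝ) * z j)} with hS1def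
  set S2 := {v : ℝ | ∃ (x' : F ⊕ C → C → ℝ) (z' : F ⊕ C → ℝ),
        (∀ i' j, 0 ≤ x' i' j) ∧
        (∀ i', z' i' = 0 ∨ z' i' = 1) ∧
        (∀ j, ∑ i', x' i' j = (d j : ℝ)) ∧
        (∀ i', ∑ j, x' i' j ≤ (s' i' : ℝ) * z' i') ∧
        v = (∑ i', ∑ j, c' i' j * x' i' j) + (∑ i', (f' i' : ℝ) * z' i')} with hS2def
  have hz01 : ∀ z : ℝ, z = 0 ∨ z = 1 → 0 ≤ z ∧ z ≤ 1 := by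
    rintro z (rfl | rfl) <;> norm_num
  -- nonnegativity of c'
  have hc'nn : ∀ (i' : F ⊕ C) (j : C), 0 ≤ c' i' j := by
    rintro (i | j1) j
    · rw [hc'F]; exact hc_nonneg i j
    · by_cases h : j = j1
      · subst h; rw [hc'diag]
      · rw [hc'off j1 j h]
        exact Finset.le_inf' _ _ fun i _ => add_nonneg (hc_nonneg i j) (hc_nonneg i j1)
  -- the key metric inequality for arcs of the CFL instance
  have hkey : ∀ (i' : F ⊕ C) (j j0 : C), j0 ≠ j → i' ≠ Sum.inr j →
      c' i' j0 ≤ c' (Sum.inr j) j0 + c' i' j := by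
    intro i' j j0 hj0j hi'
    obtain ⟨i1, -, hi1⟩ := Finset.exists_mem_eq_inf' (Finset.univ_nonempty)
      (fun i : F => c i j0 + c i j)
    rw [hc'off j j0 hj0j, hi1]
    rcases i' with i2 | j1
    · rw [hc'F, hc'F]
      have := hc_metric i2 i1 j0 j
      linarith
    · have hj1 : j1 ≠ j := fun h => hi' (by rw [h])
      by_cases hj10 : j0 = j1
      · subst hj10
        rw [hc'diag]
        have h1 : 0 ≤ c i1 j0 + c i1 j := add_nonneg (hc_nonneg _ _) (hc_nonneg _ _)
        have h2 : 0 ≤ c' (Sum.inr j0) j := hc'nn _ _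
        linarith
      · obtain ⟨i2, -, hi2⟩ := Finset.exists_mem_eq_inf' (Finset.univ_nonempty)
          (fun i : F => c i j + c i j1)
        rw [hc'off j1 j0 hj10, hc'off j1 j (fun h => hj1 h.symm), hi2]
        have h1 : Finset.univ.inf' Finset.univ_nonempty (fun i : F => c i j0 + c i j1)
            ≤ c i2 j0 + c i2 j1 := Finset.inf'_le _ (Finset.mem_univ i2)
        have h2 := hc_metric i2 i1 j0 j
        linarith
  -- S1 is nonempty
  have hS1ne : S1.Nonempty := by
    refine ⟨∑ j, (r j : ℝ), 0, fun _ => 1, fun i j => le_refl 0, fun j => Or.inr rfl, ?_, ?_, ?_⟩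
    · intro j; simp
    · intro i; simp [Nat.cast_nonneg]
    · simp
  -- S1 values map to S2 values (value preserving)
  have hsub : S1 ⊆ S2 := by
    rintro v ⟨x, z, hxnn, hz, hdem, hcap, rfl⟩
    refine ⟨Sum.elim (fun i j => x i j) (fun j' j => if j' = j then z j * (d j : ℝ) else 0),
      Sum.elim (fun _ => 1) z, ?_, ?_, ?_, ?_, ?_⟩
    · rintro (i | j') j
      · exact hxnn i j
      · dsimp only [Sum.elim_inr]
        split
        · exact mul_nonneg (hz01 _ (hz j)).1 (Nat.cast_nonneg _)
        · exact le_refl 0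
    · rintro (i | j')
      · exact Or.inr rfl
      · exact hz j'
    · intro j
      rw [Fintype.sum_sum_type]
      simp only [Sum.elim_inl, Sum.elim_inr]
      rw [hdem j, Finset.sum_ite_eq' Finset.univ j (fun _ => z j * (d j : ℝ))]
      simp only [Finset.mem_univ, if_true]
      ring
    · rintro (i | j')
      · simp only [Sum.elim_inl, Sum.elim_inl]
        rw [hs'F]
        simpa using hcap i
      · simp only [Sum.elim_inr]
        rw [Finset.sum_ite_eq Finset.univ j' (fun j => z j * (d j : ℝ))]
        simp only [Finset.mem_univ, if_true]
        rw [hs'C]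
        exact le_of_eq (mul_comm _ _)
    · rw [Fintype.sum_sum_type, Fintype.sum_sum_type]
      simp only [Sum.elim_inl, Sum.elim_inr]
      have h1 : ∀ i : F, ∑ j, c' (Sum.inl i) j * x i j = ∑ j, c i j * x i j := by
        intro i; exact Finset.sum_congr rfl fun j _ => by rw [hc'F]
      have h2 : ∀ j' : C, ∑ j, c' (Sum.inr j') j * (if j' = j then z j * (d j : ℝ) else 0) = 0 := by
        intro j'
        rw [Finset.sum_eq_zero]
        intro j _
        by_cases h : j' = j
        · subst h; rw [hc'diag]; ring
        · simp [h]
      have h3 : ∀ i : F, (f' (Sum.inl i) : ℝ) * 1 = 0 := by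
        intro i; rw [hf'F]; simp
      have h4 : ∀ j : C, (f' (Sum.inr j) : ℝ) * z j = (r j : ℝ) * z j := by
        intro j; rw [hf'C]
      rw [Finset.sum_congr rfl fun i _ => h1 i, Finset.sum_congr rfl fun j' _ => h2 j',
        Finset.sum_congr rfl fun i _ => h3 i, Finset.sum_congr rfl fun j _ => h4 j]
      simp
  have hS2ne : S2.Nonempty := hS1ne.mono hsub |>.elim fun _ h => ⟨_, h⟩
  -- bounded below by 0
  have hbdd1 : BddBelow S1 := by
    refine ⟨0, ?_⟩
    rintro v ⟨x, z, hxnn, hz, -, -, rfl⟩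
    have h1 : 0 ≤ ∑ i, ∑ j, c i j * x i j :=
      Finset.sum_nonneg fun i _ => Finset.sum_nonneg fun j _ =>
        mul_nonneg (hc_nonneg i j) (hxnn i j)
    have h2 : 0 ≤ ∑ j, (r j : ℝ) * z j :=
      Finset.sum_nonneg fun j _ => mul_nonneg (Nat.cast_nonneg _) (hz01 _ (hz j)).1
    linarith
  have hbdd2 : BddBelow S2 := by
    refine ⟨0, ?_⟩
    rintro v ⟨x', z', hxnn, hz, -, -, rfl⟩
    have h1 : 0 ≤ ∑ i', ∑ j, c' i' j * x' i' j :=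
      Finset.sum_nonneg fun i' _ => Finset.sum_nonneg fun j _ =>
        mul_nonneg (hc'nn i' j) (hxnn i' j)
    have h2 : 0 ≤ ∑ i', (f' i' : ℝ) * z' i' :=
      Finset.sum_nonneg fun i' _ => mul_nonneg (Nat.cast_nonneg _) (hz01 _ (hz i')).1
    linarith
  -- hard direction : every CFL value dominates the TMC infimum
  have hdir : ∀ v ∈ S2, sInf S1 ≤ v := by
    rintro v ⟨x0, z', hx0nn, hz', hdem0, hcap0, rfl⟩
    have hz'le1 : ∀ i', z' i' ≤ 1 := fun i' => (hz01 _ (hz' i')).2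
    have hz'nn : ∀ i', 0 ≤ z' i' := fun i' => (hz01 _ (hz' i')).1
    set Cost : (F ⊕ C → C → ℝ) → ℝ := fun y => ∑ i', ∑ j, c' i' j * y i' j with hCostdef
    set K : Set (F ⊕ C → C → ℝ) := {y | (∀ i' j, 0 ≤ y i' j) ∧ (∀ j, ∑ i', y i' j = (d j : ℝ)) ∧
      (∀ i', ∑ j, y i' j ≤ (s' i' : ℝ) * z' i') ∧ Cost y ≤ Cost x0} with hKdef
    have hx0K : x0 ∈ K := ⟨hx0nn, hdem0, hcap0, le_refl _⟩
    have hbound : ∀ y ∈ K, ∀ (i' : F ⊕ C) (j : C), y i' j ≤ (s' i' : ℝ) := by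
      intro y hy i' j
      have h1 : y i' j ≤ ∑ j0, y i' j0 :=
        Finset.single_le_sum (fun j0 _ => hy.1 i' j0) (Finset.mem_univ j)
      have h2 := hy.2.2.1 i'
      have h3 : (s' i' : ℝ) * z' i' ≤ (s' i' : ℝ) * 1 :=
        mul_le_mul_of_nonneg_left (hz'le1 i') (Nat.cast_nonneg _)
      rw [mul_one] at h3; linarith
    have hev : ∀ (i' : F ⊕ C) (j : C), Continuous fun y : F ⊕ C → C → ℝ => y i' j :=
      fun i' j => (continuous_apply j).comp (continuous_apply i')
    have hCostCont : Continuous Cost := by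
      apply continuous_finset_sum
      intro i' _
      apply continuous_finset_sum
      intro j _
      exact continuous_const.mul (hev i' j)
    have hKclosed : IsClosed K := by
      have h1 : IsClosed {y : F ⊕ C → C → ℝ | ∀ i' j, 0 ≤ y i' j} := by
        have he : {y : F ⊕ C → C → ℝ | ∀ i' j, 0 ≤ y i' j}
            = ⋂ i', ⋂ j, {y : F ⊕ C → C → ℝ | 0 ≤ y i' j} := by
          ext y; simp [Set.mem_iInter]
        rw [he]
        exact isClosed_iInter fun i' => isClosed_iInter fun j =>
          isClosed_le continuous_const (hev i' j)
      have h2 : IsClosed {y : F ⊕ C → C → ℝ | ∀ j, ∑ i', y i' j = (d j : ℝ)} := by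
        have he : {y : F ⊕ C → C → ℝ | ∀ j, ∑ i', y i' j = (d j : ℝ)}
            = ⋂ j, {y : F ⊕ C → C → ℝ | ∑ i', y i' j = (d j : ℝ)} := by
          ext y; simp [Set.mem_iInter]
        rw [he]
        exact isClosed_iInter fun j =>
          isClosed_eq (continuous_finset_sum _ fun i' _ => hev i' j) continuous_const
      have h3 : IsClosed {y : F ⊕ C → C → ℝ | ∀ i', ∑ j, y i' j ≤ (s' i' : ℝ) * z' i'} := by
        have he : {y : F ⊕ C → C → ℝ | ∀ i', ∑ j, y i' j ≤ (s' i' : ℝ) * z' i'}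
            = ⋂ i', {y : F ⊕ C → C → ℝ | ∑ j, y i' j ≤ (s' i' : ℝ) * z' i'} := by
          ext y; simp [Set.mem_iInter]
        rw [he]
        exact isClosed_iInter fun i' =>
          isClosed_le (continuous_finset_sum _ fun j _ => hev i' j) continuous_const
      have h4 : IsClosed {y : F ⊕ C → C → ℝ | Cost y ≤ Cost x0} :=
        isClosed_le hCostCont continuous_const
      have hKeq : K = {y : F ⊕ C → C → ℝ | ∀ i' j, 0 ≤ y i' j}
          ∩ ({y : F ⊕ C → C → ℝ | ∀ j, ∑ i', y i' j = (d j : ℝ)}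
            ∩ ({y : F ⊕ C → C → ℝ | ∀ i', ∑ j, y i' j ≤ (s' i' : ℝ) * z' i'}
              ∩ {y : F ⊕ C → C → ℝ | Cost y ≤ Cost x0})) := rfl
      rw [hKeq]
      exact h1.inter (h2.inter (h3.inter h4))
    have hKcomp : IsCompact K := by
      have hbox : IsCompact (Set.pi Set.univ fun i' : F ⊕ C =>
          Set.pi Set.univ fun _ : C => Set.Icc (0:ℝ) (s' i')) :=
        isCompact_univ_pi fun i' => isCompact_univ_pi fun _ => isCompact_Icc
      refine hbox.of_isClosed_subset hKclosed ?_
      intro y hy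
      rw [Set.mem_univ_pi]
      intro i'
      rw [Set.mem_univ_pi]
      intro j
      exact ⟨hy.1 i' j, hbound y hy i' j⟩
    set Phi : (F ⊕ C → C → ℝ) → ℝ :=
      fun y => ∑ j' : C, ∑ j0 ∈ Finset.univ.erase j', y (Sum.inr j') j0 with hPhidef
    have hPhiCont : Continuous Phi := by
      apply continuous_finset_sum
      intro j' _
      apply continuous_finset_sum
      intro j0 _
      exact hev _ _
    obtain ⟨x1, hx1K, hx1min⟩ := hKcomp.exists_isMinOn ⟨x0, hx0K⟩ hPhiCont.continuousOn
    -- off-diagonal dummy flows vanish at x1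
    have hoff : ∀ j' j0 : C, j0 ≠ j' → x1 (Sum.inr j') j0 = 0 := by
      by_contra hcon
      push_neg at hcon
      obtain ⟨j, j0, hj0j, hne⟩ := hcon
      have ht : 0 < x1 (Sum.inr j) j0 := lt_of_le_of_ne (hx1K.1 _ _) (Ne.symm hne)
      have hrow : x1 (Sum.inr j) j + x1 (Sum.inr j) j0 ≤ (d j : ℝ) := by
        have h2 : x1 (Sum.inr j) j0 ≤ ∑ b ∈ Finset.univ.erase j, x1 (Sum.inr j) b :=
          Finset.single_le_sum (fun b _ => hx1K.1 _ b)
            (Finset.mem_erase.mpr ⟨hj0j, Finset.mem_univ _⟩)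
        have h1 : (∑ b ∈ Finset.univ.erase j, x1 (Sum.inr j) b) + x1 (Sum.inr j) j
            = ∑ b, x1 (Sum.inr j) b := Finset.sum_erase_add _ _ (Finset.mem_univ j)
        have h3 := hx1K.2.2.1 (Sum.inr j)
        have h4 : (s' (Sum.inr j) : ℝ) * z' (Sum.inr j) ≤ (s' (Sum.inr j) : ℝ) := by
          have h5 := mul_le_mul_of_nonneg_left (hz'le1 (Sum.inr j))
            (Nat.cast_nonneg (s' (Sum.inr j)))
          rw [mul_one] at h5
          exact h5
        have h6 : ((s' (Sum.inr j) : ℝ)) = (d j : ℝ) := by rw [hs'C]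
        linarith
      have hsrc : ∃ i' : F ⊕ C, i' ≠ Sum.inr j ∧ 0 < x1 i' j := by
        by_contra hsc
        push_neg at hsc
        have hall : ∀ i' ∈ Finset.univ.erase (Sum.inr j : F ⊕ C), x1 i' j = 0 := by
          intro i' hi'
          exact le_antisymm (hsc i' (Finset.mem_erase.mp hi').1) (hx1K.1 _ _)
        have hsum : ∑ i', x1 i' j = x1 (Sum.inr j) j := by
          rw [← Finset.sum_erase_add _ _ (Finset.mem_univ (Sum.inr j : F ⊕ C)),
            Finset.sum_eq_zero hall, zero_add]
        have h7 := hx1K.2.1 j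
        rw [hsum] at h7
        linarith
      obtain ⟨i', hi'ne, hi'pos⟩ := hsrc
      set t' : ℝ := min (x1 (Sum.inr j) j0) (x1 i' j) with ht'def
      have ht'pos : 0 < t' := lt_min ht hi'pos
      have ht'le1 : t' ≤ x1 (Sum.inr j) j0 := min_le_left _ _
      have ht'le2 : t' ≤ x1 i' j := min_le_right _ _
      set e : (F ⊕ C) → C → ℝ := fun a b =>
        (if a = Sum.inr j ∧ b = j then (1:ℝ) else 0)
        - (if a = Sum.inr j ∧ b = j0 then 1 else 0)
        + (if a = i' ∧ b = j0 then 1 else 0)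
        - (if a = i' ∧ b = j then 1 else 0) with hedef
      set x2 : (F ⊕ C) → C → ℝ := fun a b => x1 a b + t' * e a b with hx2def
      have hδrow : ∀ (a0 : F ⊕ C) (b0 : C) (a : F ⊕ C) (t : Finset C),
          ∑ b ∈ t, (if a = a0 ∧ b = b0 then (1:ℝ) else 0)
            = if a = a0 ∧ b0 ∈ t then 1 else 0 := by
        intro a0 b0 a t
        by_cases ha : a = a0
        · simp [ha, Finset.sum_ite_eq']
        · simp [ha]
      have hδcol : ∀ (a0 : F ⊕ C) (b0 : C) (b : C),
          ∑ a, (if a = a0 ∧ b = b0 then (1:ℝ) else 0) = if b = b0 then 1 else 0 := by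
        intro a0 b0 b
        by_cases hb : b = b0
        · simp [hb, Finset.sum_ite_eq']
        · simp [hb]
      have hδwt : ∀ (w : (F ⊕ C) → C → ℝ) (a0 : F ⊕ C) (b0 : C),
          ∑ a, ∑ b, w a b * (if a = a0 ∧ b = b0 then (1:ℝ) else 0) = w a0 b0 := by
        intro w a0 b0
        have hinner : ∀ a, ∑ b, w a b * (if a = a0 ∧ b = b0 then (1:ℝ) else 0)
            = if a = a0 then w a b0 else 0 := by
          intro a
          by_cases ha : a = a0
          · simp [ha, mul_ite, Finset.sum_ite_eq']
          · simp [ha]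
        rw [Finset.sum_congr rfl fun a _ => hinner a]
        simp [Finset.sum_ite_eq']
      have hrowe : ∀ a, ∑ b, e a b = 0 := by
        intro a
        simp only [hedef, Finset.sum_sub_distrib, Finset.sum_add_distrib, hδrow,
          Finset.mem_univ, and_true]
        by_cases h1 : a = Sum.inr j <;> by_cases h2 : a = i' <;> simp [h1, h2]
      have hcole : ∀ b, ∑ a, e a b = 0 := by
        intro b
        simp only [hedef, Finset.sum_sub_distrib, Finset.sum_add_distrib, hδcol]
        by_cases h1 : b = j <;> by_cases h2 : b = j0 <;> simp [h1, h2]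
      have hwte : ∀ w : (F ⊕ C) → C → ℝ,
          ∑ a, ∑ b, w a b * e a b
            = w (Sum.inr j) j - w (Sum.inr j) j0 + w i' j0 - w i' j := by
        intro w
        have hsplit : ∀ (a : F ⊕ C) (b : C), w a b * e a b
            = w a b * (if a = Sum.inr j ∧ b = j then (1:ℝ) else 0)
            - w a b * (if a = Sum.inr j ∧ b = j0 then 1 else 0)
            + w a b * (if a = i' ∧ b = j0 then 1 else 0)
            - w a b * (if a = i' ∧ b = j then 1 else 0) := by
          intro a b
          simp only [hedef]
          ring
        simp only [hsplit, Finset.sum_sub_distrib, Finset.sum_add_distrib, hδwt]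
      have hx2nn : ∀ a b, 0 ≤ x2 a b := by
        intro a b
        have hcases : (0 ≤ e a b) ∨ (e a b = -1 ∧ t' ≤ x1 a b) := by
          by_cases hB : a = Sum.inr j ∧ b = j0
          · refine Or.inr ⟨?_, ?_⟩
            · have hne1 : ¬ (j0 = j) := hj0j
              have hne2 : ¬ ((Sum.inr j : F ⊕ C) = i') := fun h => hi'ne h.symm
              simp [hedef, hB.1, hB.2, hne1, hne2]
            · rw [hB.1, hB.2]
              exact ht'le1
          · by_cases hD : a = i' ∧ b = j
            · refine Or.inr ⟨?_, ?_⟩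
              · have hne1 : ¬ (j = j0) := Ne.symm hj0j
                have hne2 : ¬ (i' = (Sum.inr j : F ⊕ C)) := hi'ne
                simp [hedef, hD.1, hD.2, hne1, hne2]
              · rw [hD.1, hD.2]
                exact ht'le2
            · refine Or.inl ?_
              simp only [hedef, if_neg hB, if_neg hD]
              split_ifs <;> norm_num
        rcases hcases with hpos | ⟨hm, hle⟩
        · have h8 : 0 ≤ t' * e a b := mul_nonneg ht'pos.le hpos
          have h9 := hx1K.1 a b
          simp only [hx2def]
          linarith
        · simp only [hx2def]
          rw [hm]
          linarith
      have hx2dem : ∀ b, ∑ a, x2 a b = (d b : ℝ) := by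
        intro b
        simp only [hx2def]
        rw [Finset.sum_add_distrib, ← Finset.mul_sum, hcole b, mul_zero, add_zero]
        exact hx1K.2.1 b
      have hx2cap : ∀ a, ∑ b, x2 a b ≤ (s' a : ℝ) * z' a := by
        intro a
        simp only [hx2def]
        rw [Finset.sum_add_distrib, ← Finset.mul_sum, hrowe a, mul_zero, add_zero]
        exact hx1K.2.2.1 a
      have hx2cost : Cost x2 ≤ Cost x0 := by
        have hexp : Cost x2 = Cost x1
            + t' * (c' (Sum.inr j) j - c' (Sum.inr j) j0 + c' i' j0 - c' i' j) := by
          have hterm : ∀ (a : F ⊕ C) (b : C), c' a b * x2 a b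
              = c' a b * x1 a b + t' * (c' a b * e a b) := by
            intro a b
            simp only [hx2def]
            ring
          simp only [hCostdef, hterm, Finset.sum_add_distrib, ← Finset.mul_sum]
          rw [hwte (fun a b => c' a b)]
        have hbr : c' (Sum.inr j) j - c' (Sum.inr j) j0 + c' i' j0 - c' i' j ≤ 0 := by
          have h1 := hkey i' j j0 hj0j hi'ne
          have h2 := hc'diag j
          linarith
        have h3 : t' * (c' (Sum.inr j) j - c' (Sum.inr j) j0 + c' i' j0 - c' i' j) ≤ 0 := by
          have h4 := mul_le_mul_of_nonneg_left hbr ht'pos.le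
          rw [mul_zero] at h4
          exact h4
        have h5 := hx1K.2.2.2
        linarith [hexp.le, hexp.ge]
      have hx2K : x2 ∈ K := ⟨hx2nn, hx2dem, hx2cap, hx2cost⟩
      have hS : ∑ j' : C, ∑ b ∈ Finset.univ.erase j', e (Sum.inr j') b ≤ -1 := by
        have hinner : ∀ j' : C, ∑ b ∈ Finset.univ.erase j', e (Sum.inr j') b
            = (if (Sum.inr j' : F ⊕ C) = Sum.inr j ∧ j ∈ Finset.univ.erase j'
                then (1:ℝ) else 0)
            - (if (Sum.inr j' : F ⊕ C) = Sum.inr j ∧ j0 ∈ Finset.univ.erase j' then 1 else 0)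
            + (if (Sum.inr j' : F ⊕ C) = i' ∧ j0 ∈ Finset.univ.erase j' then 1 else 0)
            - (if (Sum.inr j' : F ⊕ C) = i' ∧ j ∈ Finset.univ.erase j' then 1 else 0) := by
          intro j'
          simp only [hedef, Finset.sum_sub_distrib, Finset.sum_add_distrib, hδrow]
        rw [Finset.sum_congr rfl fun j' _ => hinner j']
        have e1 : ∑ j' : C, (if (Sum.inr j' : F ⊕ C) = Sum.inr j ∧ j ∈ Finset.univ.erase j'
            then (1:ℝ) else 0) = 0 := by
          apply Finset.sum_eq_zero
          intro j' _
          rw [if_neg]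
          rintro ⟨h1, h2⟩
          rw [Sum.inr.injEq] at h1
          exact (Finset.mem_erase.mp h2).1 (by rw [h1])
        have e2 : ∑ j' : C, (if (Sum.inr j' : F ⊕ C) = Sum.inr j ∧ j0 ∈ Finset.univ.erase j'
            then (1:ℝ) else 0) = 1 := by
          rw [Finset.sum_eq_single j]
          · rw [if_pos ⟨rfl, Finset.mem_erase.mpr ⟨hj0j, Finset.mem_univ _⟩⟩]
          · intro j' _ hj'
            rw [if_neg]
            rintro ⟨h1, -⟩
            rw [Sum.inr.injEq] at h1
            exact hj' h1
          · intro h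
            exact absurd (Finset.mem_univ j) h
        have e34 : ∑ j' : C, (if (Sum.inr j' : F ⊕ C) = i' ∧ j0 ∈ Finset.univ.erase j'
              then (1:ℝ) else 0)
            ≤ ∑ j' : C, (if (Sum.inr j' : F ⊕ C) = i' ∧ j ∈ Finset.univ.erase j'
              then (1:ℝ) else 0) := by
          apply Finset.sum_le_sum
          intro j' _
          by_cases h : (Sum.inr j' : F ⊕ C) = i' ∧ j0 ∈ Finset.univ.erase j'
          · rw [if_pos h, if_pos]
            refine ⟨h.1, Finset.mem_erase.mpr ⟨?_, Finset.mem_univ _⟩⟩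
            intro hjj'
            exact hi'ne (by rw [← h.1, hjj'])
          · rw [if_neg h]
            split <;> norm_num
        simp only [Finset.sum_sub_distrib, Finset.sum_add_distrib]
        rw [e1, e2]
        linarith
      have hPhix2 : Phi x2 < Phi x1 := by
        have hPeq : Phi x2 = Phi x1
            + t' * (∑ j' : C, ∑ b ∈ Finset.univ.erase j', e (Sum.inr j') b) := by
          simp only [hPhidef, hx2def, Finset.sum_add_distrib, ← Finset.mul_sum]
        rw [hPeq]
        nlinarith [ht'pos, hS]
      exact absurd ((isMinOn_iff.mp hx1min) x2 hx2K) (not_le.mpr hPhix2)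
    -- construct the TMC solution from x1
    set zT : C → ℝ := fun jj => if 0 < x1 (Sum.inr jj) jj then 1 else 0 with hzdef
    set xT : F → C → ℝ :=
      fun i jj => if 0 < x1 (Sum.inr jj) jj then 0 else x1 (Sum.inl i) jj with hxdef
    have hw : ((∑ i, ∑ jj, c i jj * xT i jj) + ∑ jj, (r jj : ℝ) * zT jj) ∈ S1 := by
      rw [hS1def]
      refine ⟨xT, zT, ?_, ?_, ?_, ?_, rfl⟩
      · intro i jj
        simp only [hxdef]
        split
        · exact le_refl 0
        · exact hx1K.1 _ _
      · intro jj
        simp only [hzdef]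
        split
        · exact Or.inr rfl
        · exact Or.inl rfl
      · intro jj
        by_cases h : 0 < x1 (Sum.inr jj) jj
        · simp [hxdef, hzdef, h]
        · have h0 : x1 (Sum.inr jj) jj = 0 := le_antisymm (not_lt.mp h) (hx1K.1 _ _)
          have hsum := hx1K.2.1 jj
          rw [Fintype.sum_sum_type] at hsum
          have hz2 : ∑ j' : C, x1 (Sum.inr j') jj = 0 := by
            apply Finset.sum_eq_zero
            intro j' _
            by_cases hj' : jj = j'
            · rw [← hj']
              exact h0
            · exact hoff j' jj hj'
          rw [hz2, add_zero] at hsum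
          simp only [hxdef, hzdef, if_neg h]
          rw [hsum]
          ring
      · intro i
        have h1 : ∑ jj, xT i jj ≤ ∑ jj, x1 (Sum.inl i) jj := by
          apply Finset.sum_le_sum
          intro jj _
          simp only [hxdef]
          split
          · exact hx1K.1 _ _
          · exact le_refl _
        have h2 := hx1K.2.2.1 (Sum.inl i)
        have h3 : (s' (Sum.inl i) : ℝ) * z' (Sum.inl i) ≤ (s' (Sum.inl i) : ℝ) := by
          have h5 := mul_le_mul_of_nonneg_left (hz'le1 (Sum.inl i))
            (Nat.cast_nonneg (s' (Sum.inl i)))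
          rw [mul_one] at h5
          exact h5
        have h4 : ((s' (Sum.inl i) : ℝ)) = (s i : ℝ) := by rw [hs'F]
        linarith
    have hle : (∑ i, ∑ jj, c i jj * xT i jj) + ∑ jj, (r jj : ℝ) * zT jj
        ≤ (∑ i', ∑ jj, c' i' jj * x0 i' jj) + ∑ i', (f' i' : ℝ) * z' i' := by
      have ht1 : ∑ i, ∑ jj, c i jj * xT i jj
          ≤ ∑ i : F, ∑ jj, c' (Sum.inl i) jj * x1 (Sum.inl i) jj := by
        apply Finset.sum_le_sum
        intro i _
        apply Finset.sum_le_sum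
        intro jj _
        rw [hc'F]
        simp only [hxdef]
        split
        · simpa using mul_nonneg (hc_nonneg i jj) (hx1K.1 (Sum.inl i) jj)
        · exact le_refl _
      have ht2 : ∑ i : F, ∑ jj, c' (Sum.inl i) jj * x1 (Sum.inl i) jj ≤ Cost x1 := by
        have hCeq : Cost x1 = (∑ i : F, ∑ jj, c' (Sum.inl i) jj * x1 (Sum.inl i) jj)
            + ∑ j' : C, ∑ jj, c' (Sum.inr j') jj * x1 (Sum.inr j') jj := by
          simp only [hCostdef]
          rw [Fintype.sum_sum_type]
        have hnn : 0 ≤ ∑ j' : C, ∑ jj, c' (Sum.inr j') jj * x1 (Sum.inr j') jj :=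
          Finset.sum_nonneg fun j' _ => Finset.sum_nonneg fun jj _ =>
            mul_nonneg (hc'nn _ _) (hx1K.1 _ _)
        linarith
      have ht3 : Cost x1 ≤ Cost x0 := hx1K.2.2.2
      have hp1 : ∑ jj, (r jj : ℝ) * zT jj
          ≤ ∑ jj, (f' (Sum.inr jj) : ℝ) * z' (Sum.inr jj) := by
        apply Finset.sum_le_sum
        intro jj _
        simp only [hzdef]
        by_cases h : 0 < x1 (Sum.inr jj) jj
        · rw [if_pos h, mul_one, hf'C]
          have hz1 : z' (Sum.inr jj) = 1 := by
            rcases hz' (Sum.inr jj) with h0 | h1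
            · exfalso
              have hcap := hx1K.2.2.1 (Sum.inr jj)
              rw [h0, mul_zero] at hcap
              have hsle : x1 (Sum.inr jj) jj ≤ ∑ b, x1 (Sum.inr jj) b :=
                Finset.single_le_sum (f := fun b => x1 (Sum.inr jj) b)
                  (fun b _ => hx1K.1 _ b) (Finset.mem_univ jj)
              linarith
            · exact h1
          rw [hz1, mul_one]
        · rw [if_neg h, mul_zero]
          exact mul_nonneg (Nat.cast_nonneg _) (hz'nn _)
      have hp2 : ∑ jj, (f' (Sum.inr jj) : ℝ) * z' (Sum.inr jj)
          ≤ ∑ i', (f' i' : ℝ) * z' i' := by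
        rw [Fintype.sum_sum_type]
        have hnn : 0 ≤ ∑ i : F, (f' (Sum.inl i) : ℝ) * z' (Sum.inl i) :=
          Finset.sum_nonneg fun i _ => mul_nonneg (Nat.cast_nonneg _) (hz'nn _)
        linarith
      have hCx0 : Cost x0 = ∑ i', ∑ jj, c' i' jj * x0 i' jj := by
        simp only [hCostdef]
      linarith
    exact le_trans (csInf_le hbdd1 hw) hle
  refine le_antisymm (le_csInf hS2ne hdir) (csInf_le_csInf hbdd2 hS1ne hsub)
end

section
/- Let I1 = (F, C, s, d, c, r) be a TMC instance (no metric assumption), and let I2 be the associated CFL instance of the general TMC-to-CFL reduction, in which each dummy facility has cost 0 to its own client and cost M = max_{i∈F, j∈C} c i j to every other client. Then for every feasible TMC solution (x, z) of I1 there exists a feasible CFL solution (x', z') of I2 whose objective value equals the objective value of (x, z). -/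
/-- general (non-metric) TMC-to-CFL reduction, forward direction.
Every feasible TMC solution of `I1` yields a feasible CFL solution of `I2`
with the same objective value. -/
theorem stmt_5 {F C : Type} [Fintype F] [Fintype C] [Nonempty F] [Nonempty C]
    -- TMC instance I1 = (F, C, s, d, c, r), no metric assumption
    (s : F → ℕ) (d : C → ℕ) (c : F → C → ℝ) (r : C → ℕ)
    (hc_nonneg : ∀ i j, 0 ≤ c i j)
    -- the maximum unit transportation cost
    (M : ℝ)
    (hM : M = Finset.univ.sup' Finset.univ_nonempty
        (fun i : F => Finset.univ.sup' Finset.univ_nonempty fun j : C => c i j))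
    -- CFL instance I2 on facility set F ⊕ C given by the general reduction
    (s' : F ⊕ C → ℕ) (f' : F ⊕ C → ℕ) (c' : F ⊕ C → C → ℝ)
    (hs'F : ∀ i : F, s' (Sum.inl i) = s i)
    (hs'C : ∀ j : C, s' (Sum.inr j) = d j)
    (hf'F : ∀ i : F, f' (Sum.inl i) = 0)
    (hf'C : ∀ j : C, f' (Sum.inr j) = r j)
    (hc'F : ∀ (i : F) (j : C), c' (Sum.inl i) j = c i j)
    (hc'diag : ∀ j : C, c' (Sum.inr j) j = 0)
    (hc'off : ∀ j j0 : C, j0 ≠ j → c' (Sum.inr j) j0 = M)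
    -- a feasible TMC solution (x, z) of I1
    (x : F → C → ℝ) (z : C → ℝ)
    (hx : ∀ i j, 0 ≤ x i j)
    (hz : ∀ j, z j = 0 ∨ z j = 1)
    (hdem : ∀ j, ∑ i, x i j = (1 - z j) * (d j : ℝ))
    (hcap : ∀ i, ∑ j, x i j ≤ (s i : ℝ)) :
    -- there is a feasible CFL solution (x', z') of I2 with equal objective value
    ∃ (x' : F ⊕ C → C → ℝ) (z' : F ⊕ C → ℝ),
      (∀ i' j, 0 ≤ x' i' j) ∧
      (∀ i', z' i' = 0 ∨ z' i' = 1) ∧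
      (∀ j, ∑ i', x' i' j = (d j : ℝ)) ∧
      (∀ i', ∑ j, x' i' j ≤ (s' i' : ℝ) * z' i') ∧
      (∑ i', ∑ j, c' i' j * x' i' j) + (∑ i', (f' i' : ℝ) * z' i')
        = (∑ i, ∑ j, c i j * x i j) + (∑ j, (r j : ℝ) * z j) := by
  classical
  refine ⟨fun i' j => match i' with
    | Sum.inl i => x i j
    | Sum.inr j0 => if j = j0 then z j * d j else 0,
    fun i' => match i' with
    | Sum.inl _ => 1
    | Sum.inr j0 => z j0, ?_, ?_, ?_, ?_, ?_⟩
  · rintro (i | j0) j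
    · exact hx i j
    · dsimp only
      split
      · rcases hz j with h | h <;> simp [h] <;> positivity
      · exact le_rfl
  · rintro (i | j0)
    · exact Or.inr rfl
    · exact hz j0
  · intro j
    rw [Fintype.sum_sum_type]
    simp only [Finset.sum_ite_eq, Finset.mem_univ, if_true, hdem j]
    ring
  · rintro (i | j0)
    · simp only [hs'F, mul_one]
      exact hcap i
    · simp only [hs'C]
      rw [Finset.sum_ite_eq' Finset.univ j0 (fun x => z x * d x)]
      simp [mul_comm]
  · rw [Fintype.sum_sum_type, Fintype.sum_sum_type]
    simp only [hf'F, hf'C, hc'F, Nat.cast_zero, zero_mul, mul_one,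
      Finset.sum_const_zero, zero_add]
    congr 1
    · have : ∀ j0 : C, ∑ j, c' (Sum.inr j0) j * (if j = j0 then z j * d j else 0) = 0 := by
        intro j0
        apply Finset.sum_eq_zero
        intro j _
        by_cases h : j = j0
        · subst h; simp [hc'diag]
        · simp [h]
      simp only [this]
      simp [hc'diag]
end

section
/- Let I1 = (F, C, s, d, c, r) be a TMC instance (no metric assumption), and let I2 be the associated CFL instance of the general TMC-to-CFL reduction, in which each dummy facility has cost 0 to its own client and cost M = max_{i∈F, j∈C} c i j to every other client. Then for every feasible CFL solution (x', z') of I2 there exists a feasible TMC solution (x, z) of I1 whose objective value is at most the objective value of (x', z'). -/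
/-- general (non-metric) TMC-to-CFL reduction, backward direction.
Every feasible CFL solution of `I2` yields a feasible TMC solution of `I1`
with objective value at most that of the CFL solution. -/
theorem stmt_6 {F C : Type} [Fintype F] [Fintype C] [Nonempty F] [Nonempty C]
    -- TMC instance I1 = (F, C, s, d, c, r), no metric assumption
    (s : F → ℕ) (d : C → ℕ) (c : F → C → ℝ) (r : C → ℕ)
    (hc_nonneg : ∀ i j, 0 ≤ c i j)
    -- the maximum unit transportation cost
    (M : ℝ)
    (hM : M = Finset.univ.sup' Finset.univ_nonempty
        (fun i : F => Finset.univ.sup' Finset.univ_nonempty fun j : C => c i j))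
    -- CFL instance I2 on facility set F ⊕ C given by the general reduction
    (s' : F ⊕ C → ℕ) (f' : F ⊕ C → ℕ) (c' : F ⊕ C → C → ℝ)
    (hs'F : ∀ i : F, s' (Sum.inl i) = s i)
    (hs'C : ∀ j : C, s' (Sum.inr j) = d j)
    (hf'F : ∀ i : F, f' (Sum.inl i) = 0)
    (hf'C : ∀ j : C, f' (Sum.inr j) = r j)
    (hc'F : ∀ (i : F) (j : C), c' (Sum.inl i) j = c i j)
    (hc'diag : ∀ j : C, c' (Sum.inr j) j = 0)
    (hc'off : ∀ j j0 : C, j0 ≠ j → c' (Sum.inr j) j0 = M)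
    -- a feasible CFL solution (x', z') of I2
    (x' : F ⊕ C → C → ℝ) (z' : F ⊕ C → ℝ)
    (hx' : ∀ i' j, 0 ≤ x' i' j)
    (hz' : ∀ i', z' i' = 0 ∨ z' i' = 1)
    (hdem' : ∀ j, ∑ i', x' i' j = (d j : ℝ))
    (hcap' : ∀ i', ∑ j, x' i' j ≤ (s' i' : ℝ) * z' i') :
    -- there is a feasible TMC solution (x, z) of I1 with objective value at most that of (x', z')
    ∃ (x : F → C → ℝ) (z : C → ℝ),
      (∀ i j, 0 ≤ x i j) ∧
      (∀ j, z j = 0 ∨ z j = 1) ∧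
      (∀ j, ∑ i, x i j = (1 - z j) * (d j : ℝ)) ∧
      (∀ i, ∑ j, x i j ≤ (s i : ℝ)) ∧
      (∑ i, ∑ j, c i j * x i j) + (∑ j, (r j : ℝ) * z j)
        ≤ (∑ i', ∑ j, c' i' j * x' i' j) + (∑ i', (f' i' : ℝ) * z' i') := by
  classical
  have hcM : ∀ i j, c i j ≤ M := by
    intro i j
    rw [hM]
    exact le_trans (Finset.le_sup' (fun j => c i j) (Finset.mem_univ j))
      (Finset.le_sup' (fun i => Finset.univ.sup' Finset.univ_nonempty fun j : C => c i j)
        (Finset.mem_univ i))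
  have hM0 : 0 ≤ M :=
    le_trans (hc_nonneg (Classical.arbitrary F) (Classical.arbitrary C)) (hcM _ _)
  have hz0 : ∀ i', 0 ≤ z' i' := fun i' => by rcases hz' i' with h | h <;> simp [h]
  have hz1 : ∀ i', z' i' ≤ 1 := fun i' => by rcases hz' i' with h | h <;> simp [h]
  set P : C → Prop := fun j => z' (Sum.inr j) = 1 with hPdef
  have hPz : ∀ j, ¬ P j → z' (Sum.inr j) = 0 := by
    intro j hj; rcases hz' (Sum.inr j) with h | h
    · exact h
    · exact absurd h hj
  -- a closed dummy ships nothing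
  have h_closed : ∀ j, ¬ P j → ∀ j0, x' (Sum.inr j) j0 = 0 := by
    intro j hj
    have hcap := hcap' (Sum.inr j)
    rw [hPz j hj, mul_zero] at hcap
    have hsum0 : ∑ j0, x' (Sum.inr j) j0 = 0 :=
      le_antisymm hcap (Finset.sum_nonneg fun j0 _ => hx' _ _)
    intro j0
    exact (Finset.sum_eq_zero_iff_of_nonneg (fun j0 _ => hx' _ _)).mp hsum0 j0 (Finset.mem_univ j0)
  set a : C → ℝ := fun j => ∑ i, x' (Sum.inl i) j with ha
  set infl : C → ℝ := fun j => ∑ j', x' (Sum.inr j') j with hinfl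
  have hsplit : ∀ j, a j + infl j = (d j : ℝ) := by
    intro j
    rw [← hdem' j, Fintype.sum_sum_type]
  set b : C → ℝ := fun j => if P j then 0 else infl j with hb
  set e : F → ℝ := fun i => ∑ j, if P j then x' (Sum.inl i) j else 0 with he
  set E : ℝ := ∑ i, e i with hE
  have hinfl_nn : ∀ j, 0 ≤ infl j := fun j => Finset.sum_nonneg fun _ _ => hx' _ _
  have hb_nn : ∀ j, 0 ≤ b j := by
    intro j; rw [hb]; dsimp only; split
    · exact le_refl 0
    · exact hinfl_nn j
  have he_nn : ∀ i, 0 ≤ e i := by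
    intro i; exact Finset.sum_nonneg fun j _ => by split; exacts [hx' _ _, le_refl 0]
  have hE_nn : 0 ≤ E := Finset.sum_nonneg fun i _ => he_nn i
  have hE' : E = ∑ j, if P j then a j else 0 := by
    rw [hE, he, Finset.sum_comm]
    refine Finset.sum_congr rfl fun j _ => ?_
    split <;> simp [ha]
  -- key inequality: total reallocation demand ≤ total spare supply
  have hbE : ∑ j, b j ≤ E := by
    have hT : ∑ j, infl j ≤ ∑ j', if P j' then (d j' : ℝ) else 0 := by
      rw [hinfl, Finset.sum_comm]
      refine Finset.sum_le_sum fun j' _ => ?_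
      by_cases h : P j'
      · rw [if_pos h]
        have h1 := hcap' (Sum.inr j')
        rw [hs'C, show z' (Sum.inr j') = 1 from h, mul_one] at h1
        exact h1
      · rw [if_neg h]
        have : ∀ j0, x' (Sum.inr j') j0 = 0 := h_closed j' h
        simp [this]
    have hd : ∑ j', (if P j' then (d j' : ℝ) else 0)
        = E + ∑ j', if P j' then infl j' else 0 := by
      rw [hE', ← Finset.sum_add_distrib]
      refine Finset.sum_congr rfl fun j' _ => ?_
      split
      · rw [← hsplit j']
      · simp
    have hbsum : ∑ j, b j = ∑ j, infl j - ∑ j, if P j then infl j else 0 := by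
      rw [← Finset.sum_sub_distrib]
      refine Finset.sum_congr rfl fun j _ => ?_
      rw [hb]; dsimp only; split <;> ring
    linarith [hT, hd, hbsum]
  set y : F → C → ℝ := fun i j => if E = 0 then 0 else e i * b j / E with hy
  have hy_nn : ∀ i j, 0 ≤ y i j := by
    intro i j; rw [hy]; dsimp only; split
    · exact le_refl 0
    · exact div_nonneg (mul_nonneg (he_nn i) (hb_nn j)) hE_nn
  have hb_single : ∀ j, b j ≤ ∑ j0, b j0 := fun j =>
    Finset.single_le_sum (fun j0 _ => hb_nn j0) (Finset.mem_univ j)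
  have hycol : ∀ j, ∑ i, y i j = b j := by
    intro j
    by_cases hE0 : E = 0
    · have : b j = 0 := le_antisymm (by linarith [hb_single j, hbE]) (hb_nn j)
      simp [hy, hE0, this]
    · simp only [hy, if_neg hE0]
      rw [← Finset.sum_div, ← Finset.sum_mul, ← hE]
      field_simp
  have hyrow : ∀ i, ∑ j, y i j ≤ e i := by
    intro i
    by_cases hE0 : E = 0
    · simp [hy, hE0, he_nn i]
    · have hEpos : 0 < E := lt_of_le_of_ne hE_nn (Ne.symm hE0)
      simp only [hy, if_neg hE0]
      rw [← Finset.sum_div, ← Finset.mul_sum]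
      rw [div_le_iff₀ hEpos]
      calc e i * ∑ j, b j ≤ e i * E := by
            exact mul_le_mul_of_nonneg_left hbE (he_nn i)
        _ = e i * E := rfl
  refine ⟨fun i j => if P j then 0 else x' (Sum.inl i) j + y i j,
    fun j => if P j then 1 else 0, ?_, ?_, ?_, ?_, ?_⟩
  · intro i j; dsimp only; split
    · exact le_refl 0
    · exact add_nonneg (hx' _ _) (hy_nn i j)
  · intro j
    dsimp only
    by_cases h : P j
    · right; rw [if_pos h]
    · left; rw [if_neg h]
  · intro j
    dsimp only
    by_cases h : P j
    · rw [if_pos h]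
      simp only [if_pos h]
      simp
    · rw [if_neg h]
      simp only [if_neg h]
      rw [Finset.sum_add_distrib, hycol j]
      have hbj : b j = infl j := by rw [hb]; dsimp only; rw [if_neg h]
      have := hsplit j
      rw [hbj]
      rw [ha] at this
      linarith
  · intro i
    dsimp only
    have step1 : ∑ j, (if P j then 0 else x' (Sum.inl i) j + y i j)
        ≤ ∑ j, ((if P j then 0 else x' (Sum.inl i) j) + y i j) := by
      refine Finset.sum_le_sum fun j _ => ?_
      by_cases h : P j
      · rw [if_pos h, if_pos h]
        exact add_nonneg (le_refl 0) (hy_nn i j)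
      · rw [if_neg h, if_neg h]
    have step2 : (∑ j, if P j then 0 else x' (Sum.inl i) j) + e i
        = ∑ j, x' (Sum.inl i) j := by
      rw [he, ← Finset.sum_add_distrib]
      refine Finset.sum_congr rfl fun j _ => ?_
      split <;> simp
    have step3 : ∑ j, x' (Sum.inl i) j ≤ (s i : ℝ) := by
      have h1 := hcap' (Sum.inl i)
      rw [hs'F] at h1
      have h2 : (s i : ℝ) * z' (Sum.inl i) ≤ (s i : ℝ) * 1 :=
        mul_le_mul_of_nonneg_left (hz1 _) (Nat.cast_nonneg _)
      linarith
    calc ∑ j, (if P j then 0 else x' (Sum.inl i) j + y i j)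
        ≤ ∑ j, ((if P j then 0 else x' (Sum.inl i) j) + y i j) := step1
      _ = (∑ j, if P j then 0 else x' (Sum.inl i) j) + ∑ j, y i j :=
          Finset.sum_add_distrib
      _ ≤ (∑ j, if P j then 0 else x' (Sum.inl i) j) + e i := by
          linarith [hyrow i]
      _ = ∑ j, x' (Sum.inl i) j := step2
      _ ≤ (s i : ℝ) := step3
  · -- objective value comparison
    dsimp only
    have hc'nn : ∀ j' j : C, 0 ≤ c' (Sum.inr j') j * x' (Sum.inr j') j := by
      intro j' j
      refine mul_nonneg ?_ (hx' _ _)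
      by_cases h : j = j'
      · subst h; rw [hc'diag]
      · rw [hc'off j' j h]; exact hM0
    have hterm : ∀ i j, c i j * (if P j then 0 else x' (Sum.inl i) j + y i j)
        ≤ c i j * x' (Sum.inl i) j + M * y i j := by
      intro i j
      by_cases h : P j
      · rw [if_pos h, mul_zero]
        exact add_nonneg (mul_nonneg (hc_nonneg i j) (hx' _ _))
          (mul_nonneg hM0 (hy_nn i j))
      · rw [if_neg h, mul_add]
        have : c i j * y i j ≤ M * y i j :=
          mul_le_mul_of_nonneg_right (hcM i j) (hy_nn i j)
        linarith
    have hMy : ∑ i, ∑ j, M * y i j = M * ∑ j, b j := by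
      rw [Finset.sum_comm]
      rw [Finset.mul_sum]
      refine Finset.sum_congr rfl fun j _ => ?_
      rw [← Finset.mul_sum, hycol j]
    have hL1 : ∑ i, ∑ j, c i j * (if P j then 0 else x' (Sum.inl i) j + y i j)
        ≤ (∑ i, ∑ j, c i j * x' (Sum.inl i) j) + M * ∑ j, b j := by
      calc ∑ i, ∑ j, c i j * (if P j then 0 else x' (Sum.inl i) j + y i j)
          ≤ ∑ i, ∑ j, (c i j * x' (Sum.inl i) j + M * y i j) :=
            Finset.sum_le_sum fun i _ => Finset.sum_le_sum fun j _ => hterm i j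
        _ = (∑ i, ∑ j, c i j * x' (Sum.inl i) j) + ∑ i, ∑ j, M * y i j := by
            rw [← Finset.sum_add_distrib]
            exact Finset.sum_congr rfl fun i _ => Finset.sum_add_distrib
        _ = (∑ i, ∑ j, c i j * x' (Sum.inl i) j) + M * ∑ j, b j := by rw [hMy]
    have hL2 : M * ∑ j, b j ≤ ∑ j', ∑ j, c' (Sum.inr j') j * x' (Sum.inr j') j := by
      have heq : M * ∑ j, b j
          = ∑ j, if P j then 0 else ∑ j', c' (Sum.inr j') j * x' (Sum.inr j') j := by
        rw [Finset.mul_sum]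
        refine Finset.sum_congr rfl fun j _ => ?_
        by_cases h : P j
        · rw [hb]; dsimp only; rw [if_pos h, if_pos h, mul_zero]
        · rw [hb]; dsimp only; rw [if_neg h, if_neg h, hinfl]
          dsimp only
          rw [Finset.mul_sum]
          refine Finset.sum_congr rfl fun j' _ => ?_
          by_cases hjj : j = j'
          · subst hjj
            rw [hc'diag, h_closed j h j, mul_zero, mul_zero]
          · rw [hc'off j' j hjj]
      rw [heq, Finset.sum_comm]
      refine Finset.sum_le_sum fun j _ => ?_
      by_cases h : P j
      · rw [if_pos h]
        exact Finset.sum_nonneg fun j' _ => hc'nn j' j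
      · rw [if_neg h]
    have hpen : ∑ j, (r j : ℝ) * (if P j then 1 else 0)
        = ∑ j, (r j : ℝ) * z' (Sum.inr j) := by
      refine Finset.sum_congr rfl fun j _ => ?_
      by_cases h : P j
      · rw [if_pos h, show z' (Sum.inr j) = 1 from h]
      · rw [if_neg h, hPz j h]
    have hRHS1 : ∑ i', ∑ j, c' i' j * x' i' j
        = (∑ i, ∑ j, c i j * x' (Sum.inl i) j)
          + ∑ j', ∑ j, c' (Sum.inr j') j * x' (Sum.inr j') j := by
      rw [Fintype.sum_sum_type]
      congr 1
      refine Finset.sum_congr rfl fun i _ => Finset.sum_congr rfl fun j _ => ?_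
      rw [hc'F]
    have hRHS2 : ∑ i', (f' i' : ℝ) * z' i' = ∑ j, (r j : ℝ) * z' (Sum.inr j) := by
      rw [Fintype.sum_sum_type]
      simp [hf'F, hf'C]
    rw [hpen, hRHS1, hRHS2]
    linarith
end

section
/- Let I1 = (F, C, s, d, c, f) be a CFL instance with costs satisfying the four-point metric inequality, and let I2 be the associated TMC instance of the metric CFL-to-TMC reduction. Then for every feasible CFL solution (x, z) of I1 there exists a feasible TMC solution (x', z') of I2 whose objective value equals the objective value of (x, z). -/
/-- metric CFL-to-TMC reduction, forward direction.
Every feasible CFL solution of `I1` yields a feasible TMC solution of `I2`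
with the same objective value. -/
theorem stmt_8 {F C : Type} [Fintype F] [Fintype C] [Nonempty F] [Nonempty C]
    -- CFL instance I1 = (F, C, s, d, c, f)
    (s : F → ℕ) (d : C → ℕ) (c : F → C → ℝ) (f : F → ℕ)
    (hc_nonneg : ∀ i j, 0 ≤ c i j)
    (hc_metric : ∀ (i0 i1 : F) (j0 j1 : C), c i0 j0 ≤ c i0 j1 + c i1 j1 + c i1 j0)
    -- the maximum unit transportation cost and the instance upper bound
    (M : ℝ)
    (hM : M = Finset.univ.sup' Finset.univ_nonempty
        (fun i : F => Finset.univ.sup' Finset.univ_nonempty fun j : C => c i j))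
    (B : ℝ)
    (hB : B = (∑ i, (f i : ℝ)) + M * (∑ j, (d j : ℝ)) + 1)
    -- TMC instance I2 on client set C ⊕ F given by the metric reduction
    (d' : C ⊕ F → ℕ) (r' : C ⊕ F → ℝ) (c' : F → C ⊕ F → ℝ)
    (hd'C : ∀ j : C, d' (Sum.inl j) = d j)
    (hd'F : ∀ i : F, d' (Sum.inr i) = s i)
    (hr'C : ∀ j : C, r' (Sum.inl j) = B)
    (hr'F : ∀ i : F, r' (Sum.inr i) = (f i : ℝ))
    (hc'C : ∀ (i : F) (j : C), c' i (Sum.inl j) = c i j)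
    (hc'diag : ∀ i : F, c' i (Sum.inr i) = 0)
    (hc'off : ∀ i0 i : F, i0 ≠ i →
      c' i0 (Sum.inr i) =
        Finset.univ.inf' Finset.univ_nonempty (fun j : C => c i0 j + c i j))
    -- a feasible CFL solution (x, z) of I1
    (x : F → C → ℝ) (z : F → ℝ)
    (hx : ∀ i j, 0 ≤ x i j)
    (hz : ∀ i, z i = 0 ∨ z i = 1)
    (hdem : ∀ j, ∑ i, x i j = (d j : ℝ))
    (hcap : ∀ i, ∑ j, x i j ≤ (s i : ℝ) * z i) :
    -- there is a feasible TMC solution (x', z') of I2 with equal objective value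
    ∃ (x' : F → C ⊕ F → ℝ) (z' : C ⊕ F → ℝ),
      (∀ i j', 0 ≤ x' i j') ∧
      (∀ j', z' j' = 0 ∨ z' j' = 1) ∧
      (∀ j', ∑ i, x' i j' = (1 - z' j') * (d' j' : ℝ)) ∧
      (∀ i, ∑ j', x' i j' ≤ (s i : ℝ)) ∧
      (∑ i, ∑ j', c' i j' * x' i j') + (∑ j', r' j' * z' j')
        = (∑ i, ∑ j, c i j * x i j) + (∑ i, (f i : ℝ) * z i) := by
  classical
  refine ⟨fun i j' => Sum.elim (fun j => x i j)
      (fun k => if i = k then (1 - z i) * (s i : ℝ) else 0) j',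
    Sum.elim (fun _ => 0) (fun i => z i), ?_, ?_, ?_, ?_, ?_⟩
  · rintro i (j | k)
    · exact hx i j
    · simp only [Sum.elim_inr]
      by_cases h : i = k
      · rw [if_pos h]
        rcases hz i with h' | h' <;> simp [h'] <;> positivity
      · rw [if_neg h]
  · rintro (j | k)
    · exact Or.inl rfl
    · exact hz k
  · rintro (j | k)
    · simpa [hd'C] using hdem j
    · simp only [Sum.elim_inr, hd'F]
      rw [Finset.sum_eq_single k (fun b _ hb => by rw [if_neg hb]) (by simp)]
      rw [if_pos rfl]
  · intro i
    rw [Fintype.sum_sum_type]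
    simp only [Sum.elim_inl, Sum.elim_inr]
    rw [Finset.sum_eq_single i (fun b _ hb => by rw [if_neg (Ne.symm hb)]) (by simp),
      if_pos rfl]
    nlinarith [hcap i]
  · rw [Fintype.sum_sum_type]
    have h2 : ∀ i : F, ∑ j' : C ⊕ F, c' i j' *
        (Sum.elim (fun j => x i j)
          (fun k => if i = k then (1 - z i) * (s i : ℝ) else 0) j')
        = ∑ j, c i j * x i j := by
      intro i
      rw [Fintype.sum_sum_type]
      have h1 : ∑ k : F, c' i (Sum.inr k) *
          (if i = k then (1 - z i) * (s i : ℝ) else 0) = 0 := by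
        apply Finset.sum_eq_zero
        intro k _
        by_cases h : i = k
        · subst h; simp [hc'diag]
        · rw [if_neg h, mul_zero]
      simp only [Sum.elim_inl, Sum.elim_inr, hc'C]
      rw [h1, add_zero]
    rw [Finset.sum_congr rfl (fun i _ => h2 i)]
    congr 1
    simp [hr'F]
end

section
/- Let I1 = (F, C, s, d, c, f) be a CFL instance with costs satisfying the four-point metric inequality and with Σ_{j∈C} d j ≤ Σ_{i∈F} s i, and let I2 be the associated TMC instance of the metric CFL-to-TMC reduction. Then for every feasible TMC solution (x', z') of I2 there exists a feasible CFL solution (x, z) of I1 whose objective value is at most the objective value of (x', z'). -/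
open Finset

lemma sum_if_one {α : Type*} [Fintype α] [DecidableEq α] (t : α) (g : α → ℝ) :
    ∑ b, (if b = t then (0:ℝ) else g b) = (∑ b, g b) - g t := by
  have h : ∀ b, (if b = t then (0:ℝ) else g b) = g b - (if b = t then g b else 0) := by
    intro b; split_ifs <;> ring
  rw [Finset.sum_congr rfl (fun b _ => h b), Finset.sum_sub_distrib,
    Finset.sum_ite_eq' Finset.univ t g, if_pos (Finset.mem_univ t)]

lemma sum_if_two {α : Type*} [Fintype α] [DecidableEq α] {t1 t2 : α} (h : t1 ≠ t2) (g : α → ℝ) :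
    ∑ b, (if b = t1 ∨ b = t2 then (0:ℝ) else g b) = (∑ b, g b) - g t1 - g t2 := by
  have h2 : ∀ b, (if b = t1 ∨ b = t2 then (0:ℝ) else g b)
      = g b - (if b = t1 then g b else 0) - (if b = t2 then g b else 0) := by
    intro b
    rcases eq_or_ne b t1 with rfl | h1
    · simp [h]
    · rcases eq_or_ne b t2 with rfl | hb2
      · simp [h1]
      · simp [h1, hb2]
  rw [Finset.sum_congr rfl (fun b _ => h2 b)]
  rw [Finset.sum_sub_distrib, Finset.sum_sub_distrib,
    Finset.sum_ite_eq' Finset.univ t1 g, Finset.sum_ite_eq' Finset.univ t2 g,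
    if_pos (Finset.mem_univ t1), if_pos (Finset.mem_univ t2)]

lemma reroute {F C : Type} [Fintype F] [Fintype C] [DecidableEq F]
    (c : F → C → ℝ) (D : F → F → ℝ) (s : F → ℕ) (K : Finset F)
    (hD0 : ∀ a b, 0 ≤ D a b)
    (hDc : ∀ a b j, c a j ≤ D a b + c b j)
    (hDtri : ∀ a b e, D a e ≤ D a b + D b e) :
    ∀ (S : Finset F), S ⊆ K →
    ∀ (y : F → C → ℝ) (w : F → F → ℝ),
    (∀ i j, 0 ≤ y i j) → (∀ a b, 0 ≤ w a b) →
    (∀ a b, w a b ≠ 0 → b ∈ S ∧ a ≠ b) →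
    (∀ i ∈ K, i ∉ S → ∀ j, y i j = 0) →
    (∀ i ∈ K, i ∉ S → ∀ b, w i b = 0) →
    (∀ i, i ∉ K → (∑ j, y i j) + (∑ b, w i b) ≤ (s i : ℝ)) →
    (∀ i ∈ S, (∑ j, y i j) + (∑ b, w i b) ≤ ∑ a, w a i) →
    ∃ x : F → C → ℝ,
      (∀ i j, 0 ≤ x i j) ∧
      (∀ j, ∑ i, x i j = ∑ i, y i j) ∧
      (∀ i ∈ K, ∀ j, x i j = 0) ∧
      (∀ i, i ∉ K → ∑ j, x i j ≤ (s i : ℝ)) ∧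
      ((∑ i, ∑ j, c i j * x i j) ≤ (∑ i, ∑ j, c i j * y i j) + ∑ a, ∑ b, D a b * w a b) := by
  intro S
  induction S using Finset.strongInduction with
  | _ S ih =>
  intro hSK y w hy hw hwsupp hdy hdw hopen hact
  rcases S.eq_empty_or_nonempty with rfl | ⟨i0, hi0⟩
  · -- base case
    have hw0 : ∀ a b, w a b = 0 := by
      intro a b
      by_contra h
      exact absurd (hwsupp a b h).1 (Finset.notMem_empty b)
    refine ⟨y, hy, fun j => rfl, fun i hiK j => hdy i hiK (Finset.notMem_empty i) j, ?_, ?_⟩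
    · intro i hiK
      have h1 := hopen i hiK
      have h2 : (0:ℝ) ≤ ∑ b, w i b := Finset.sum_nonneg (fun b _ => hw i b)
      linarith
    · have : ∑ a, ∑ b, D a b * w a b = 0 := by
        apply Finset.sum_eq_zero; intro a _
        apply Finset.sum_eq_zero; intro b _
        rw [hw0 a b, mul_zero]
      rw [this]; linarith
  · -- inductive step: eliminate i0 ∈ S
    have hSsub : S.erase i0 ⊂ S := Finset.erase_ssubset hi0
    have hSK' : S.erase i0 ⊆ K := (Finset.erase_subset i0 S).trans hSK
    have hww : w i0 i0 = 0 := by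
      by_contra h
      exact absurd rfl (hwsupp i0 i0 h).2
    set T := ∑ a, w a i0 with hT_def
    have hT0 : 0 ≤ T := Finset.sum_nonneg (fun a _ => hw a i0)
    by_cases hT : T = 0
    · -- trivial elimination
      have hwi0 : ∀ a, w a i0 = 0 := by
        intro a
        have := (Finset.sum_eq_zero_iff_of_nonneg (fun a _ => hw a i0)).mp hT
        exact this a (Finset.mem_univ a)
      have hzero : (∑ j, y i0 j) + (∑ b, w i0 b) ≤ 0 := by
        have := hact i0 hi0; rw [← hT_def, hT] at this; exact this
      have hY0 : ∀ j, y i0 j = 0 := by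
        have h1 : (0:ℝ) ≤ ∑ j, y i0 j := Finset.sum_nonneg (fun j _ => hy i0 j)
        have h2 : (0:ℝ) ≤ ∑ b, w i0 b := Finset.sum_nonneg (fun b _ => hw i0 b)
        have h3 : ∑ j, y i0 j = 0 := le_antisymm (by linarith) h1
        intro j
        exact (Finset.sum_eq_zero_iff_of_nonneg (fun j _ => hy i0 j)).mp h3 j (Finset.mem_univ j)
      have hW0 : ∀ b, w i0 b = 0 := by
        have h1 : (0:ℝ) ≤ ∑ j, y i0 j := Finset.sum_nonneg (fun j _ => hy i0 j)
        have h2 : (0:ℝ) ≤ ∑ b, w i0 b := Finset.sum_nonneg (fun b _ => hw i0 b)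
        have h3 : ∑ b, w i0 b = 0 := le_antisymm (by linarith) h2
        intro b
        exact (Finset.sum_eq_zero_iff_of_nonneg (fun b _ => hw i0 b)).mp h3 b (Finset.mem_univ b)
      refine ih (S.erase i0) hSsub hSK' y w hy hw ?_ ?_ ?_ hopen ?_
      · intro a b h
        obtain ⟨hbS, hab⟩ := hwsupp a b h
        refine ⟨Finset.mem_erase.mpr ⟨?_, hbS⟩, hab⟩
        rintro rfl
        exact h (hwi0 a)
      · intro i hiK hiS j
        rcases eq_or_ne i i0 with rfl | hi
        · exact hY0 j
        · exact hdy i hiK (fun hS => hiS (Finset.mem_erase.mpr ⟨hi, hS⟩)) j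
      · intro i hiK hiS b
        rcases eq_or_ne i i0 with rfl | hi
        · exact hW0 b
        · exact hdw i hiK (fun hS => hiS (Finset.mem_erase.mpr ⟨hi, hS⟩)) b
      · intro i hiS
        exact hact i (Finset.mem_of_mem_erase hiS)
    · -- main elimination: T > 0
      have hTpos : 0 < T := lt_of_le_of_ne hT0 (Ne.symm hT)
      set lam := fun a => w a i0 / T with hlam_def
      have hlam0 : ∀ a, 0 ≤ lam a := fun a => div_nonneg (hw a i0) hT0
      have hlamsum : ∑ a, lam a = 1 := by
        rw [hlam_def]
        rw [← Finset.sum_div, ← hT_def, div_self hT]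
      have hlami0 : lam i0 = 0 := by
        rw [hlam_def]; simp [hww]
      have hlamT : ∀ a, lam a * T = w a i0 := fun a => div_mul_cancel₀ _ hT
      set Y := ∑ j, y i0 j with hY_def
      set W := ∑ b, w i0 b with hW_def
      have hY0 : 0 ≤ Y := Finset.sum_nonneg (fun j _ => hy i0 j)
      have hW0 : 0 ≤ W := Finset.sum_nonneg (fun b _ => hw i0 b)
      have hYW : Y + W ≤ T := hact i0 hi0
      set y2 := fun i j => if i = i0 then (0:ℝ) else y i j + lam i * y i0 j with hy2_def
      set w2 := fun a b => if a = i0 ∨ b = i0 ∨ a = b then (0:ℝ) else w a b + lam a * w i0 b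
        with hw2_def
      have hwaa : ∀ a, w a a = 0 := by
        intro a
        by_contra h
        exact absurd rfl (hwsupp a a h).2
      have hy2nn : ∀ i j, 0 ≤ y2 i j := by
        intro i j
        rw [hy2_def]
        dsimp only
        split_ifs
        · exact le_refl _
        · exact add_nonneg (hy i j) (mul_nonneg (hlam0 i) (hy i0 j))
      have hw2nn : ∀ a b, 0 ≤ w2 a b := by
        intro a b
        rw [hw2_def]
        dsimp only
        split_ifs
        · exact le_refl _
        · exact add_nonneg (hw a b) (mul_nonneg (hlam0 a) (hw i0 b))
      -- row version of w2 for i ≠ i0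
      have hw2row : ∀ i, i ≠ i0 → ∀ b, w2 i b
          = if b = i0 ∨ b = i then (0:ℝ) else w i b + lam i * w i0 b := by
        intro i hi b
        rw [hw2_def]
        dsimp only
        rcases eq_or_ne b i0 with hb | hb
        · simp [hb]
        · rcases eq_or_ne b i with hb2 | hb2
          · simp [hb, hb2, hi]
          · have : ¬ (i = b) := fun h => hb2 h.symm
            simp [hb, hb2, hi, this]
      -- column version of w2 for i ≠ i0
      have hw2col : ∀ i, i ≠ i0 → ∀ a, w2 a i
          = if a = i0 ∨ a = i then (0:ℝ) else w a i + lam a * w i0 i := by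
        intro i hi a
        rw [hw2_def]
        dsimp only
        rcases eq_or_ne a i0 with ha | ha
        · simp [ha]
        · rcases eq_or_ne a i with ha2 | ha2
          · simp [ha, ha2, hi]
          · simp [ha, ha2, hi]
      -- sum facts
      have hS1 : ∀ j, ∑ i, y2 i j = ∑ i, y i j := by
        intro j
        have h1 : ∀ i, y2 i j = if i = i0 then (0:ℝ) else (y i j + lam i * y i0 j) := by
          intro i; rw [hy2_def]
        rw [Finset.sum_congr rfl (fun i _ => h1 i), sum_if_one i0 (fun i => y i j + lam i * y i0 j)]
        rw [Finset.sum_add_distrib, ← Finset.sum_mul, hlamsum, hlami0]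
        ring
      have hrowsum : ∀ i, i ≠ i0 →
          ∑ b, w2 i b = (∑ b, w i b) + lam i * W - w i i0 - lam i * w i0 i := by
        intro i hi
        rw [Finset.sum_congr rfl (fun b _ => hw2row i hi b),
          sum_if_two (fun h : i0 = i => hi h.symm) (fun b => w i b + lam i * w i0 b)]
        rw [Finset.sum_add_distrib, ← Finset.mul_sum, ← hW_def, hww, hwaa i]
        ring
      have hcolsum : ∀ i, i ≠ i0 →
          ∑ a, w2 a i = (∑ a, w a i) - lam i * w i0 i := by
        intro i hi
        rw [Finset.sum_congr rfl (fun a _ => hw2col i hi a),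
          sum_if_two (fun h : i0 = i => hi h.symm) (fun a => w a i + lam a * w i0 i)]
        rw [Finset.sum_add_distrib, ← Finset.sum_mul, hlamsum, hwaa i, hlami0]
        ring
      have hy2row : ∀ i, i ≠ i0 → ∑ j, y2 i j = (∑ j, y i j) + lam i * Y := by
        intro i hi
        have h1 : ∀ j, y2 i j = y i j + lam i * y i0 j := by
          intro j; rw [hy2_def]; dsimp only; rw [if_neg hi]
        rw [Finset.sum_congr rfl (fun j _ => h1 j), Finset.sum_add_distrib, ← Finset.mul_sum,
          ← hY_def]
      -- key inequality used twice
      have hkey : ∀ i, lam i * (Y + W) ≤ w i i0 := by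
        intro i
        have h1 : lam i * (Y + W) ≤ lam i * T := mul_le_mul_of_nonneg_left hYW (hlam0 i)
        rw [hlamT i] at h1
        exact h1
      have hwsupp2 : ∀ a b, w2 a b ≠ 0 → b ∈ S.erase i0 ∧ a ≠ b := by
        intro a b h
        have hcond : ¬ (a = i0 ∨ b = i0 ∨ a = b) := by
          intro hcon
          apply h
          rw [hw2_def]; dsimp only; rw [if_pos hcon]
        push_neg at hcond
        obtain ⟨ha, hb, hab⟩ := hcond
        have hval : w2 a b = w a b + lam a * w i0 b := by
          rw [hw2_def]; dsimp only
          rw [if_neg]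
          push_neg
          exact ⟨ha, hb, hab⟩
        rw [hval] at h
        have hbS : b ∈ S := by
          by_cases h1 : w a b = 0
          · by_cases h2 : w i0 b = 0
            · exfalso; apply h; rw [h1, h2]; ring
            · exact (hwsupp i0 b h2).1
          · exact (hwsupp a b h1).1
        exact ⟨Finset.mem_erase.mpr ⟨hb, hbS⟩, hab⟩
      have hdy2 : ∀ i ∈ K, i ∉ S.erase i0 → ∀ j, y2 i j = 0 := by
        intro i hiK hiS j
        rcases eq_or_ne i i0 with hi | hi
        · rw [hy2_def]; dsimp only; rw [if_pos hi]
        · have hiS' : i ∉ S := fun hS => hiS (Finset.mem_erase.mpr ⟨hi, hS⟩)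
          rw [hy2_def]; dsimp only; rw [if_neg hi, hdy i hiK hiS' j]
          have : lam i = 0 := by
            rw [hlam_def]; dsimp only; rw [hdw i hiK hiS' i0, zero_div]
          rw [this]
          ring
      have hdw2 : ∀ i ∈ K, i ∉ S.erase i0 → ∀ b, w2 i b = 0 := by
        intro i hiK hiS b
        rcases eq_or_ne i i0 with hi | hi
        · rw [hw2_def]; dsimp only; rw [if_pos (Or.inl hi)]
        · have hiS' : i ∉ S := fun hS => hiS (Finset.mem_erase.mpr ⟨hi, hS⟩)
          rw [hw2_def]; dsimp only
          rcases eq_or_ne b i0 with hb | hb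
          · rw [if_pos (Or.inr (Or.inl hb))]
          · rcases eq_or_ne i b with hib | hib
            · rw [if_pos (Or.inr (Or.inr hib))]
            · rw [if_neg (by push_neg; exact ⟨hi, hb, hib⟩), hdw i hiK hiS' b]
              have : lam i = 0 := by
                rw [hlam_def]; dsimp only; rw [hdw i hiK hiS' i0, zero_div]
              rw [this]
              ring
      have hopen2 : ∀ i, i ∉ K → (∑ j, y2 i j) + (∑ b, w2 i b) ≤ (s i : ℝ) := by
        intro i hiK
        have hi : i ≠ i0 := fun h => hiK (hSK (h ▸ hi0))
        rw [hy2row i hi, hrowsum i hi]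
        have h1 := hopen i hiK
        have h2 := hkey i
        have h3 : 0 ≤ lam i * w i0 i := mul_nonneg (hlam0 i) (hw i0 i)
        nlinarith [h1, h2, h3]
      have hact2 : ∀ i ∈ S.erase i0, (∑ j, y2 i j) + (∑ b, w2 i b) ≤ ∑ a, w2 a i := by
        intro i hiS
        have hi : i ≠ i0 := Finset.ne_of_mem_erase hiS
        have hiS' : i ∈ S := Finset.mem_of_mem_erase hiS
        rw [hy2row i hi, hrowsum i hi, hcolsum i hi]
        have h1 := hact i hiS'
        have h2 := hkey i
        nlinarith [h1, h2]

      obtain ⟨x, hx1, hx2, hx3, hx4, hx5⟩ := ih (S.erase i0) hSsub hSK' y2 w2 hy2nn hw2nn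
        hwsupp2 hdy2 hdw2 hopen2 hact2
      refine ⟨x, hx1, ?_, hx3, hx4, ?_⟩
      · intro j; rw [hx2 j, hS1 j]
      · -- cost chain
        set CY := ∑ j, c i0 j * y i0 j with hCY_def
        set DW := ∑ b, D i0 b * w i0 b with hDW_def
        set L := ∑ a, lam a * D a i0 with hL_def
        have hL0 : 0 ≤ L :=
          Finset.sum_nonneg (fun a _ => mul_nonneg (hlam0 a) (hD0 a i0))
        -- cost of y2
        have hc1 : ∑ i, ∑ j, c i j * y2 i j
            ≤ (∑ i, ∑ j, c i j * y i j) + L * Y := by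
          have hterm : ∀ i, ∑ j, c i j * y2 i j
              ≤ (if i = i0 then (0:ℝ)
                  else (∑ j, c i j * y i j) + lam i * (D i i0 * Y + CY)) := by
            intro i
            rcases eq_or_ne i i0 with hi | hi
            · rw [if_pos hi]
              apply le_of_eq
              apply Finset.sum_eq_zero
              intro j _
              rw [hy2_def]; dsimp only; rw [if_pos hi, mul_zero]
            · rw [if_neg hi]
              have h1 : ∀ j, c i j * y2 i j
                  ≤ c i j * y i j + lam i * ((D i i0 + c i0 j) * y i0 j) := by
                intro j
                rw [hy2_def]; dsimp only; rw [if_neg hi]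
                have h2 : c i j * (lam i * y i0 j) ≤ (D i i0 + c i0 j) * (lam i * y i0 j) :=
                  mul_le_mul_of_nonneg_right (hDc i i0 j)
                    (mul_nonneg (hlam0 i) (hy i0 j))
                nlinarith [h2]
              calc ∑ j, c i j * y2 i j
                  ≤ ∑ j, (c i j * y i j + lam i * ((D i i0 + c i0 j) * y i0 j)) :=
                    Finset.sum_le_sum (fun j _ => h1 j)
                _ = (∑ j, c i j * y i j) + lam i * (D i i0 * Y + CY) := by
                    have e : ∑ j, lam i * ((D i i0 + c i0 j) * y i0 j)
                        = lam i * (D i i0 * Y + CY) := by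
                      simp only [hY_def, hCY_def, Finset.mul_sum,
                        ← Finset.sum_add_distrib]
                      exact Finset.sum_congr rfl (fun j _ => by ring)
                    rw [Finset.sum_add_distrib, e]
          calc ∑ i, ∑ j, c i j * y2 i j
              ≤ ∑ i, (if i = i0 then (0:ℝ)
                  else (∑ j, c i j * y i j) + lam i * (D i i0 * Y + CY)) :=
                Finset.sum_le_sum (fun i _ => hterm i)
            _ = (∑ i, ((∑ j, c i j * y i j) + lam i * (D i i0 * Y + CY)))
                - ((∑ j, c i0 j * y i0 j) + lam i0 * (D i0 i0 * Y + CY)) :=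
                sum_if_one i0 _
            _ = (∑ i, ∑ j, c i j * y i j) + L * Y := by
                rw [Finset.sum_add_distrib, hlami0, ← hCY_def]
                have h9 : ∑ i, lam i * (D i i0 * Y + CY)
                    = L * Y + (∑ a, lam a) * CY := by
                  rw [hL_def, Finset.sum_mul, Finset.sum_mul, ← Finset.sum_add_distrib]
                  exact Finset.sum_congr rfl (fun i _ => by ring)
                rw [hlamsum, one_mul] at h9
                rw [h9]
                ring
        -- cost of w2
        have hc2 : ∑ a, ∑ b, D a b * w2 a b
            ≤ (∑ a, ∑ b, D a b * w a b) + L * W - L * T := by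
          have hterm : ∀ a, ∑ b, D a b * w2 a b
              ≤ (if a = i0 then (0:ℝ)
                  else (∑ b, D a b * w a b) + lam a * (D a i0 * W + DW)
                    - D a i0 * w a i0) := by
            intro a
            rcases eq_or_ne a i0 with ha | ha
            · rw [if_pos ha]
              apply le_of_eq
              apply Finset.sum_eq_zero
              intro b _
              rw [hw2_def]; dsimp only
              rw [if_pos (Or.inl ha), mul_zero]
            · rw [if_neg ha]
              have h1 : ∀ b, D a b * w2 a b
                  ≤ D a b * w a b + lam a * ((D a i0 + D i0 b) * w i0 b)
                    - (if b = i0 then D a i0 * w a i0 else 0) := by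
                intro b
                rcases eq_or_ne b i0 with hb | hb
                · subst hb
                  rw [if_pos rfl]
                  have : w2 a b = 0 := by
                    rw [hw2_def]; dsimp only; rw [if_pos (Or.inr (Or.inl rfl))]
                  rw [this, mul_zero, hww]
                  nlinarith [mul_nonneg (hlam0 a) (le_refl (0:ℝ))]
                · rw [if_neg hb]
                  rcases eq_or_ne a b with hab | hab
                  · have : w2 a b = 0 := by
                      rw [hw2_def]; dsimp only; rw [if_pos (Or.inr (Or.inr hab))]
                    rw [this, mul_zero, ← hab, hwaa a]
                    have h7 : 0 ≤ lam a * ((D a i0 + D i0 a) * w i0 a) :=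
                      mul_nonneg (hlam0 a)
                        (mul_nonneg (add_nonneg (hD0 a i0) (hD0 i0 a)) (hw i0 a))
                    nlinarith [h7]
                  · have hc : w2 a b = w a b + lam a * w i0 b := by
                      rw [hw2_def]; dsimp only
                      rw [if_neg]
                      push_neg
                      exact ⟨ha, hb, hab⟩
                    rw [hc]
                    have h2 : D a b * (lam a * w i0 b)
                        ≤ (D a i0 + D i0 b) * (lam a * w i0 b) :=
                      mul_le_mul_of_nonneg_right (hDtri a i0 b)
                        (mul_nonneg (hlam0 a) (hw i0 b))
                    nlinarith [h2]
              calc ∑ b, D a b * w2 a b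
                  ≤ ∑ b, (D a b * w a b + lam a * ((D a i0 + D i0 b) * w i0 b)
                      - (if b = i0 then D a i0 * w a i0 else 0)) :=
                    Finset.sum_le_sum (fun b _ => h1 b)
                _ = (∑ b, D a b * w a b) + lam a * (D a i0 * W + DW)
                    - D a i0 * w a i0 := by
                    have e : ∑ b, lam a * ((D a i0 + D i0 b) * w i0 b)
                        = lam a * (D a i0 * W + DW) := by
                      simp only [hW_def, hDW_def, Finset.mul_sum,
                        ← Finset.sum_add_distrib]
                      exact Finset.sum_congr rfl (fun b _ => by ring)
                    rw [Finset.sum_sub_distrib, Finset.sum_add_distrib,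
                      Finset.sum_ite_eq' Finset.univ i0 (fun _ => D a i0 * w a i0),
                      if_pos (Finset.mem_univ i0), e]
          calc ∑ a, ∑ b, D a b * w2 a b
              ≤ ∑ a, (if a = i0 then (0:ℝ)
                  else (∑ b, D a b * w a b) + lam a * (D a i0 * W + DW)
                    - D a i0 * w a i0) :=
                Finset.sum_le_sum (fun a _ => hterm a)
            _ = (∑ a, ((∑ b, D a b * w a b) + lam a * (D a i0 * W + DW)
                    - D a i0 * w a i0))
                - ((∑ b, D i0 b * w i0 b) + lam i0 * (D i0 i0 * W + DW)
                    - D i0 i0 * w i0 i0) := sum_if_one i0 _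
            _ = (∑ a, ∑ b, D a b * w a b) + L * W - L * T := by
                rw [Finset.sum_sub_distrib, Finset.sum_add_distrib, hlami0, hww, ← hDW_def]
                have e1 : ∑ a, lam a * (D a i0 * W + DW)
                    = L * W + (∑ a, lam a) * DW := by
                  rw [hL_def, Finset.sum_mul, Finset.sum_mul, ← Finset.sum_add_distrib]
                  exact Finset.sum_congr rfl (fun a _ => by ring)
                rw [hlamsum, one_mul] at e1
                have e2 : ∑ a, D a i0 * w a i0 = L * T := by
                  rw [hL_def, Finset.sum_mul]
                  apply Finset.sum_congr rfl
                  intro a _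
                  rw [← hlamT a]
                  ring
                rw [e1, e2]
                ring
        have hfin : L * (Y + W - T) ≤ 0 :=
          mul_nonpos_of_nonneg_of_nonpos hL0 (by linarith)
        calc ∑ i, ∑ j, c i j * x i j
            ≤ (∑ i, ∑ j, c i j * y2 i j) + ∑ a, ∑ b, D a b * w2 a b := hx5
          _ ≤ (∑ i, ∑ j, c i j * y i j) + L * Y
              + ((∑ a, ∑ b, D a b * w a b) + L * W - L * T) := by linarith
          _ ≤ (∑ i, ∑ j, c i j * y i j) + ∑ a, ∑ b, D a b * w a b := by nlinarith [hfin]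

lemma trans_feasible {F C : Type} [Fintype F] [Fintype C] :
    ∀ (n : ℕ) (s : F → ℕ) (d : C → ℕ), (∑ j, d j = n) → (∑ j, d j ≤ ∑ i, s i) →
    ∃ x : F → C → ℝ, (∀ i j, 0 ≤ x i j) ∧ (∀ j, ∑ i, x i j = (d j : ℝ)) ∧
      (∀ i, ∑ j, x i j ≤ (s i : ℝ)) := by
  intro n
  induction n with
  | zero =>
    intro s d h0 _
    refine ⟨fun _ _ => 0, fun _ _ => le_refl _, ?_, ?_⟩
    · intro j
      have hd : d j = 0 := by
        by_contra h
        have : 0 < ∑ j, d j := Finset.sum_pos' (fun _ _ => Nat.zero_le _)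
          ⟨j, Finset.mem_univ j, Nat.pos_of_ne_zero h⟩
        omega
      simp [hd]
    · intro i; simp
  | succ n ih =>
    intro s d hsum hle
    classical
    have hj0 : ∃ j0, d j0 ≠ 0 := by
      by_contra h
      push_neg at h
      rw [Finset.sum_eq_zero (fun j _ => h j)] at hsum
      omega
    obtain ⟨j0, hj0⟩ := hj0
    have hi0 : ∃ i0, s i0 ≠ 0 := by
      by_contra h
      push_neg at h
      rw [Finset.sum_eq_zero (fun i _ => h i)] at hle
      omega
    obtain ⟨i0, hi0⟩ := hi0
    have hdj : ∑ j, d j = d j0 + ∑ j ∈ univ \ {j0}, d j :=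
      Finset.sum_eq_add_sum_sdiff_singleton_of_mem (Finset.mem_univ j0) d
    have hsi : ∑ i, s i = s i0 + ∑ i ∈ univ \ {i0}, s i :=
      Finset.sum_eq_add_sum_sdiff_singleton_of_mem (Finset.mem_univ i0) s
    have hds : ∑ j, Function.update d j0 (d j0 - 1) j = n := by
      rw [Finset.sum_update_of_mem (Finset.mem_univ j0)]
      omega
    have hle' : ∑ j, Function.update d j0 (d j0 - 1) j ≤ ∑ i, Function.update s i0 (s i0 - 1) i := by
      rw [Finset.sum_update_of_mem (Finset.mem_univ j0), Finset.sum_update_of_mem (Finset.mem_univ i0)]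
      omega
    obtain ⟨x, hx0, hxd, hxs⟩ := ih _ _ hds hle'
    refine ⟨fun i j => x i j + if i = i0 ∧ j = j0 then 1 else 0, ?_, ?_, ?_⟩
    · intro i j
      have := hx0 i j
      dsimp only
      split_ifs <;> linarith
    · intro j
      dsimp only
      rw [Finset.sum_add_distrib, hxd j]
      rcases eq_or_ne j j0 with hj | hj
      · have h1 : ∑ i, (if i = i0 ∧ j = j0 then (1:ℝ) else 0) = 1 := by
          simp [hj]
        rw [h1, hj, Function.update_self]
        have : 1 ≤ d j0 := Nat.one_le_iff_ne_zero.mpr hj0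
        push_cast [Nat.cast_sub this]
        ring
      · have h1 : ∑ i, (if i = i0 ∧ j = j0 then (1:ℝ) else 0) = 0 := by
          simp [hj]
        rw [h1, Function.update_of_ne hj]
        ring
    · intro i
      dsimp only
      rw [Finset.sum_add_distrib]
      have hxi := hxs i
      rcases eq_or_ne i i0 with hi | hi
      · have h1 : ∑ j, (if i = i0 ∧ j = j0 then (1:ℝ) else 0) = 1 := by simp [hi]
        rw [h1, hi]
        rw [hi, Function.update_self] at hxi
        have : 1 ≤ s i0 := Nat.one_le_iff_ne_zero.mpr hi0
        push_cast [Nat.cast_sub this] at hxi ⊢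
        linarith
      · have h1 : ∑ j, (if i = i0 ∧ j = j0 then (1:ℝ) else 0) = 0 := by simp [hi]
        rw [h1]
        rw [Function.update_of_ne hi] at hxi
        linarith

/-- metric CFL-to-TMC reduction, backward direction (for feasible CFL
instances, i.e. total demand at most total supply). Every feasible TMC solution of
`I2` yields a feasible CFL solution of `I1` with objective value at most that of
the TMC solution. -/
theorem stmt_9 {F C : Type} [Fintype F] [Fintype C] [Nonempty F] [Nonempty C]
    -- CFL instance I1 = (F, C, s, d, c, f)
    (s : F → ℕ) (d : C → ℕ) (c : F → C → ℝ) (f : F → ℕ)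
    (hc_nonneg : ∀ i j, 0 ≤ c i j)
    (hc_metric : ∀ (i0 i1 : F) (j0 j1 : C), c i0 j0 ≤ c i0 j1 + c i1 j1 + c i1 j0)
    (hfeas : ∑ j, d j ≤ ∑ i, s i)
    -- the maximum unit transportation cost and the instance upper bound
    (M : ℝ)
    (hM : M = Finset.univ.sup' Finset.univ_nonempty
        (fun i : F => Finset.univ.sup' Finset.univ_nonempty fun j : C => c i j))
    (B : ℝ)
    (hB : B = (∑ i, (f i : ℝ)) + M * (∑ j, (d j : ℝ)) + 1)
    -- TMC instance I2 on client set C ⊕ F given by the metric reduction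
    (d' : C ⊕ F → ℕ) (r' : C ⊕ F → ℝ) (c' : F → C ⊕ F → ℝ)
    (hd'C : ∀ j : C, d' (Sum.inl j) = d j)
    (hd'F : ∀ i : F, d' (Sum.inr i) = s i)
    (hr'C : ∀ j : C, r' (Sum.inl j) = B)
    (hr'F : ∀ i : F, r' (Sum.inr i) = (f i : ℝ))
    (hc'C : ∀ (i : F) (j : C), c' i (Sum.inl j) = c i j)
    (hc'diag : ∀ i : F, c' i (Sum.inr i) = 0)
    (hc'off : ∀ i0 i : F, i0 ≠ i →
      c' i0 (Sum.inr i) =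
        Finset.univ.inf' Finset.univ_nonempty (fun j : C => c i0 j + c i j))
    -- a feasible TMC solution (x', z') of I2
    (x' : F → C ⊕ F → ℝ) (z' : C ⊕ F → ℝ)
    (hx' : ∀ i j', 0 ≤ x' i j')
    (hz' : ∀ j', z' j' = 0 ∨ z' j' = 1)
    (hdem' : ∀ j', ∑ i, x' i j' = (1 - z' j') * (d' j' : ℝ))
    (hcap' : ∀ i, ∑ j', x' i j' ≤ (s i : ℝ)) :
    -- there is a feasible CFL solution (x, z) of I1 with objective value at most that of (x', z')
    ∃ (x : F → C → ℝ) (z : F → ℝ),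
      (∀ i j, 0 ≤ x i j) ∧
      (∀ i, z i = 0 ∨ z i = 1) ∧
      (∀ j, ∑ i, x i j = (d j : ℝ)) ∧
      (∀ i, ∑ j, x i j ≤ (s i : ℝ) * z i) ∧
      (∑ i, ∑ j, c i j * x i j) + (∑ i, (f i : ℝ) * z i)
        ≤ (∑ i, ∑ j', c' i j' * x' i j') + (∑ j', r' j' * z' j') := by
  classical
  have hcM : ∀ i j, c i j ≤ M := by
    intro i j
    rw [hM]
    exact le_trans (Finset.le_sup' _ (Finset.mem_univ j))
      (Finset.le_sup' (fun i : F => Finset.univ.sup' Finset.univ_nonempty fun j : C => c i j)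
        (Finset.mem_univ i))
  have hM0 : 0 ≤ M := by
    obtain ⟨i⟩ := ‹Nonempty F›
    obtain ⟨j⟩ := ‹Nonempty C›
    exact le_trans (hc_nonneg i j) (hcM i j)
  have hc'0 : ∀ i j', 0 ≤ c' i j' := by
    intro i j'
    cases j' with
    | inl j => rw [hc'C]; exact hc_nonneg i j
    | inr b =>
      rcases eq_or_ne i b with rfl | h
      · rw [hc'diag]
      · rw [hc'off i b h]
        apply Finset.le_inf'
        intro j _
        exact add_nonneg (hc_nonneg i j) (hc_nonneg b j)
  have hz'0 : ∀ j', 0 ≤ z' j' := by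
    intro j'
    rcases hz' j' with h | h <;> rw [h] <;> norm_num
  have hB0 : 0 ≤ B := by
    have h1 : (0:ℝ) ≤ ∑ i, (f i : ℝ) := Finset.sum_nonneg (fun i _ => Nat.cast_nonneg _)
    have h2 : (0:ℝ) ≤ ∑ j, (d j : ℝ) := Finset.sum_nonneg (fun j _ => Nat.cast_nonneg _)
    have h3 : 0 ≤ M * ∑ j, (d j : ℝ) := mul_nonneg hM0 h2
    rw [hB]; linarith
  have hr'0 : ∀ j', 0 ≤ r' j' := by
    intro j'
    cases j' with
    | inl j => rw [hr'C]; exact hB0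
    | inr i => rw [hr'F]; exact Nat.cast_nonneg _
  have hobj2 : 0 ≤ ∑ i, ∑ j', c' i j' * x' i j' :=
    Finset.sum_nonneg (fun i _ => Finset.sum_nonneg
      (fun j' _ => mul_nonneg (hc'0 i j') (hx' i j')))
  by_cases hA : ∀ j : C, z' (Sum.inl j) = 0
  · -- all real clients are served
    set K : Finset F := Finset.univ.filter (fun i => z' (Sum.inr i) = 0) with hK_def
    set D : F → F → ℝ := fun a b =>
      Finset.univ.inf' Finset.univ_nonempty (fun j : C => c a j + c b j) with hD_def
    have hD0 : ∀ a b, 0 ≤ D a b := by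
      intro a b
      apply Finset.le_inf'
      intro j _
      exact add_nonneg (hc_nonneg a j) (hc_nonneg b j)
    have hDub : ∀ a b (j : C), D a b ≤ c a j + c b j := by
      intro a b j
      exact Finset.inf'_le _ (Finset.mem_univ j)
    have hDex : ∀ a b, ∃ j : C, D a b = c a j + c b j := by
      intro a b
      obtain ⟨j, _, hj⟩ := Finset.exists_mem_eq_inf' Finset.univ_nonempty
        (fun j : C => c a j + c b j)
      exact ⟨j, hj⟩
    have hDc : ∀ a b (j : C), c a j ≤ D a b + c b j := by
      intro a b j
      obtain ⟨j1, hj1⟩ := hDex a b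
      have := hc_metric a b j j1
      rw [hj1]
      linarith
    have hDtri : ∀ a b e, D a e ≤ D a b + D b e := by
      intro a b e
      obtain ⟨j1, hj1⟩ := hDex b e
      have h1 : D a e ≤ c a j1 + c e j1 := hDub a e j1
      have h2 : c a j1 ≤ D a b + c b j1 := hDc a b j1
      rw [hj1]
      linarith
    set y : F → C → ℝ := fun i j => x' i (Sum.inl j) with hy_def
    set w : F → F → ℝ := fun a b => if b ∈ K ∧ a ≠ b then x' a (Sum.inr b) else 0 with hw_def
    have hKz : ∀ i ∈ K, z' (Sum.inr i) = 0 := by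
      intro i hi
      exact (Finset.mem_filter.mp hi).2
    have hKz' : ∀ i, i ∉ K → z' (Sum.inr i) = 1 := by
      intro i hi
      rcases hz' (Sum.inr i) with h | h
      · exact absurd (Finset.mem_filter.mpr ⟨Finset.mem_univ i, h⟩) hi
      · exact h
    obtain ⟨x, hx1, hx2, hx3, hx4, hx5⟩ := reroute c D s K hD0 hDc hDtri K (le_refl K) y w
      (fun i j => hx' i (Sum.inl j))
      (by
        intro a b
        rw [hw_def]; dsimp only
        split_ifs
        · exact hx' a (Sum.inr b)
        · exact le_refl _)
      (by
        intro a b h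
        by_contra hcon
        apply h
        rw [hw_def]; dsimp only
        rw [if_neg]
        intro hc2
        exact hcon hc2)
      (fun i hi hni => absurd hi hni)
      (fun i hi hni => absurd hi hni)
      (by
        intro i hi
        have hcap := hcap' i
        rw [Fintype.sum_sum_type] at hcap
        have hwle : ∑ b, w i b ≤ ∑ b, x' i (Sum.inr b) := by
          apply Finset.sum_le_sum
          intro b _
          rw [hw_def]; dsimp only
          split_ifs
          · exact le_refl _
          · exact hx' i (Sum.inr b)
        calc (∑ j, y i j) + ∑ b, w i b ≤ (∑ j, x' i (Sum.inl j)) + ∑ b, x' i (Sum.inr b) := by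
              rw [hy_def]; linarith
          _ ≤ (s i : ℝ) := hcap
      )
      (by
        intro i hi
        have hzi := hKz i hi
        have hdem := hdem' (Sum.inr i)
        rw [hd'F, hzi] at hdem
        -- ∑ a, x' a (inr i) = s i
        have hdem2 : ∑ a, x' a (Sum.inr i) = (s i : ℝ) := by rw [hdem]; ring
        have hin : ∑ a, w a i = (s i : ℝ) - x' i (Sum.inr i) := by
          have h1 : ∀ a, w a i = if a = i then (0:ℝ) else x' a (Sum.inr i) := by
            intro a
            rw [hw_def]; dsimp only
            rcases eq_or_ne a i with ha | ha
            · rw [if_pos ha, if_neg (by simp [ha])]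
            · rw [if_neg ha, if_pos ⟨hi, ha⟩]
          rw [Finset.sum_congr rfl (fun a _ => h1 a), sum_if_one i (fun a => x' a (Sum.inr i)),
            hdem2]
        have hout : ∑ b, w i b ≤ (∑ b, x' i (Sum.inr b)) - x' i (Sum.inr i) := by
          have h1 : ∀ b, w i b ≤ if b = i then (0:ℝ) else x' i (Sum.inr b) := by
            intro b
            rw [hw_def]; dsimp only
            rcases eq_or_ne b i with hb | hb
            · subst hb
              simp
            · rw [if_neg hb]
              split_ifs
              · exact le_refl _
              · exact hx' i (Sum.inr b)
          calc ∑ b, w i b ≤ ∑ b, (if b = i then (0:ℝ) else x' i (Sum.inr b)) :=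
                Finset.sum_le_sum (fun b _ => h1 b)
            _ = (∑ b, x' i (Sum.inr b)) - x' i (Sum.inr i) :=
                sum_if_one i (fun b => x' i (Sum.inr b))
        have hcap := hcap' i
        rw [Fintype.sum_sum_type] at hcap
        rw [hin, hy_def]
        dsimp only
        linarith
      )
    refine ⟨x, fun i => z' (Sum.inr i), hx1, fun i => hz' (Sum.inr i), ?_, ?_, ?_⟩
    · intro j
      rw [hx2 j]
      have hdem := hdem' (Sum.inl j)
      rw [hd'C, hA j] at hdem
      rw [hy_def]
      dsimp only
      rw [hdem]
      ring
    · intro i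
      dsimp only
      by_cases hi : i ∈ K
      · have : ∑ j, x i j = 0 := Finset.sum_eq_zero (fun j _ => hx3 i hi j)
        rw [this, hKz i hi, mul_zero]
      · rw [hKz' i hi, mul_one]
        exact hx4 i hi
    · -- objective comparison
      dsimp only
      have h6 : ∑ i, ∑ j, c i j * y i j = ∑ i, ∑ j, c' i (Sum.inl j) * x' i (Sum.inl j) := by
        apply Finset.sum_congr rfl
        intro i _
        apply Finset.sum_congr rfl
        intro j _
        rw [hc'C, hy_def]
      have h7 : ∑ a, ∑ b, D a b * w a b ≤ ∑ a, ∑ b, c' a (Sum.inr b) * x' a (Sum.inr b) := by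
        apply Finset.sum_le_sum
        intro a _
        apply Finset.sum_le_sum
        intro b _
        rw [hw_def]; dsimp only
        by_cases hcond : b ∈ K ∧ a ≠ b
        · rw [if_pos hcond]
          apply le_of_eq
          rw [hc'off a b hcond.2]
        · rw [if_neg hcond, mul_zero]
          exact mul_nonneg (hc'0 a (Sum.inr b)) (hx' a (Sum.inr b))
      have h8 : ∑ i, ∑ j', c' i j' * x' i j'
          = (∑ i, ∑ j, c' i (Sum.inl j) * x' i (Sum.inl j))
            + ∑ i, ∑ b, c' i (Sum.inr b) * x' i (Sum.inr b) := by
        rw [← Finset.sum_add_distrib]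
        apply Finset.sum_congr rfl
        intro i _
        rw [Fintype.sum_sum_type]
      have h9 : ∑ j', r' j' * z' j' = ∑ i, (f i : ℝ) * z' (Sum.inr i) := by
        rw [Fintype.sum_sum_type]
        have h10 : ∑ j, r' (Sum.inl j) * z' (Sum.inl j) = 0 := by
          apply Finset.sum_eq_zero
          intro j _
          rw [hA j, mul_zero]
        rw [h10, zero_add]
        apply Finset.sum_congr rfl
        intro i _
        rw [hr'F]
      rw [h9, h8]
      rw [h6] at hx5
      linarith
  · -- some real client is rejected: the TMC objective is at least B
    push_neg at hA
    obtain ⟨j0, hj0⟩ := hA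
    have hz1 : z' (Sum.inl j0) = 1 := by
      rcases hz' (Sum.inl j0) with h | h
      · exact absurd h hj0
      · exact h
    obtain ⟨x, hx1, hx2, hx3⟩ := trans_feasible (∑ j, d j) s d rfl hfeas
    refine ⟨x, fun _ => 1, hx1, fun _ => Or.inr rfl, hx2, ?_, ?_⟩
    · intro i
      dsimp only
      rw [mul_one]
      exact hx3 i
    · have h1 : ∑ i, ∑ j, c i j * x i j ≤ M * ∑ j, (d j : ℝ) := by
        have h2 : ∑ i, ∑ j, c i j * x i j ≤ ∑ i, ∑ j, M * x i j := by
          apply Finset.sum_le_sum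
          intro i _
          apply Finset.sum_le_sum
          intro j _
          exact mul_le_mul_of_nonneg_right (hcM i j) (hx1 i j)
        have h3 : ∑ i, ∑ j, M * x i j = M * ∑ j, (d j : ℝ) := by
          rw [Finset.sum_comm, Finset.mul_sum]
          apply Finset.sum_congr rfl
          intro j _
          rw [← Finset.mul_sum, hx2 j]
        linarith
      have h4 : B ≤ ∑ j', r' j' * z' j' := by
        have h5 := Finset.single_le_sum (f := fun j' => r' j' * z' j')
          (fun j' _ => mul_nonneg (hr'0 j') (hz'0 j')) (Finset.mem_univ (Sum.inl j0))
        rw [hr'C j0, hz1, mul_one] at h5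
        exact h5
      have h6 : ∑ i, (f i : ℝ) * ((fun _ => (1:ℝ)) i) = ∑ i, (f i : ℝ) := by simp
      rw [h6]
      rw [hB] at h4
      linarith
end

section
/- Let I1 = (F, C, s, d, c, f) be a CFL instance with costs satisfying the four-point metric inequality and with Σ_{j∈C} d j ≤ Σ_{i∈F} s i, and let I2 be the associated TMC instance of the metric CFL-to-TMC reduction. Then the infimum of the objective values over all feasible CFL solutions of I1 equals the infimum of the objective values over all feasible TMC solutions of I2. -/
/-!
A CFL solution becomes a TMC solution of the same cost: every client is served, and each closed
facility ships its whole capacity to its own dummy client, where it costs nothing; not serving the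
dummy client of `i`, at penalty `f i`, is opening `i`. Conversely, a TMC solution that drops a real
client pays `B`, more than the CFL solution opening every facility. If it serves every real client,
call a facility closed when its dummy client is served. A closed facility `p` that still ships
elsewhere can be made to ship everything to its own dummy client, the facilities serving that
dummy client taking over its other shipments in proportion. The four-point inequality gives
`c' i j ≤ c' i j_p + c' p j`, so this does not increase the cost, and it strictly decreases the
number of such facilities. Once closed facilities ship only to their dummy clients, restricting
the flow to `C` is a CFL solution of no larger cost.
-/

open Finset

section Problems

variable {F C J : Type} [Fintype F] [Fintype C] [Fintype J]

structure IsCFLSolution (s : F → ℕ) (d : C → ℕ) (x : F → C → ℝ) (z : F → ℝ) : Prop where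
  nonneg : ∀ i j, 0 ≤ x i j
  binary : ∀ i, z i = 0 ∨ z i = 1
  demand : ∀ j, ∑ i, x i j = d j
  capacity : ∀ i, ∑ j, x i j ≤ s i * z i

def cflCost (c : F → C → ℝ) (f : F → ℕ) (x : F → C → ℝ) (z : F → ℝ) : ℝ :=
  ∑ i, ∑ j, c i j * x i j + ∑ i, (f i : ℝ) * z i

def cflValues (s : F → ℕ) (d : C → ℕ) (c : F → C → ℝ) (f : F → ℕ) : Set ℝ :=
  {v | ∃ x z, IsCFLSolution s d x z ∧ v = cflCost c f x z}

structure IsTMCSolution (s : F → ℕ) (d : J → ℕ) (x : F → J → ℝ) (z : J → ℝ) : Prop where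
  nonneg : ∀ i j, 0 ≤ x i j
  binary : ∀ j, z j = 0 ∨ z j = 1
  demand : ∀ j, ∑ i, x i j = (1 - z j) * d j
  capacity : ∀ i, ∑ j, x i j ≤ s i

def tmcCost (c : F → J → ℝ) (r : J → ℝ) (x : F → J → ℝ) (z : J → ℝ) : ℝ :=
  ∑ i, ∑ j, c i j * x i j + ∑ j, r j * z j

def tmcValues (s : F → ℕ) (d : J → ℕ) (c : F → J → ℝ) (r : J → ℝ) : Set ℝ :=
  {v | ∃ x z, IsTMCSolution s d x z ∧ v = tmcCost c r x z}

theorem isCFLSolution_iff {s : F → ℕ} {d : C → ℕ} {x : F → C → ℝ} {z : F → ℝ} :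
    IsCFLSolution s d x z ↔ (∀ i j, 0 ≤ x i j) ∧ (∀ i, z i = 0 ∨ z i = 1) ∧
      (∀ j, ∑ i, x i j = d j) ∧ (∀ i, ∑ j, x i j ≤ s i * z i) :=
  ⟨fun h => ⟨h.1, h.2, h.3, h.4⟩, fun ⟨h₁, h₂, h₃, h₄⟩ => ⟨h₁, h₂, h₃, h₄⟩⟩

theorem isTMCSolution_iff {s : F → ℕ} {d : J → ℕ} {x : F → J → ℝ} {z : J → ℝ} :
    IsTMCSolution s d x z ↔ (∀ i j, 0 ≤ x i j) ∧ (∀ j, z j = 0 ∨ z j = 1) ∧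
      (∀ j, ∑ i, x i j = (1 - z j) * d j) ∧ (∀ i, ∑ j, x i j ≤ s i) :=
  ⟨fun h => ⟨h.1, h.2, h.3, h.4⟩, fun ⟨h₁, h₂, h₃, h₄⟩ => ⟨h₁, h₂, h₃, h₄⟩⟩

theorem binary_nonneg {t : ℝ} (ht : t = 0 ∨ t = 1) : 0 ≤ t := by
  rcases ht with rfl | rfl <;> norm_num

theorem cflCost_nonneg {c : F → C → ℝ} (hc : ∀ i j, 0 ≤ c i j) (f : F → ℕ) {s : F → ℕ}
    {d : C → ℕ} {x : F → C → ℝ} {z : F → ℝ} (h : IsCFLSolution s d x z) :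
    0 ≤ cflCost c f x z :=
  add_nonneg (sum_nonneg fun i _ => sum_nonneg fun j _ => mul_nonneg (hc i j) (h.nonneg i j))
    (sum_nonneg fun i _ => mul_nonneg (Nat.cast_nonneg _) (binary_nonneg (h.binary i)))

theorem transport_cost_le {c x : F → C → ℝ} {d : C → ℝ} {M : ℝ} (hcM : ∀ i j, c i j ≤ M)
    (hx : ∀ i j, 0 ≤ x i j) (hd : ∀ j, ∑ i, x i j = d j) :
    ∑ i, ∑ j, c i j * x i j ≤ M * ∑ j, d j :=
  calc ∑ i, ∑ j, c i j * x i j ≤ ∑ i, ∑ j, M * x i j :=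
        sum_le_sum fun i _ => sum_le_sum fun j _ => mul_le_mul_of_nonneg_right (hcM i j) (hx i j)
    _ = M * ∑ j, d j := by simp_rw [← mul_sum, sum_comm (γ := F), hd]

/-- Ship to every client from every facility in proportion to the capacities. -/
theorem exists_isCFLSolution_one {s : F → ℕ} {d : C → ℕ} (hfeas : ∑ j, d j ≤ ∑ i, s i) :
    ∃ x, IsCFLSolution s d x 1 := by
  have hDS : ∑ j, (d j : ℝ) ≤ ∑ i, (s i : ℝ) := by exact_mod_cast hfeas
  set S : ℝ := ∑ i, (s i : ℝ)
  refine ⟨fun i j => d j * s i / S, ⟨fun i j => by positivity, fun i => Or.inr rfl, fun j => ?_,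
    fun i => ?_⟩⟩
  · rw [← sum_div, ← mul_sum]
    rcases eq_or_ne S 0 with hS | hS
    · have : (d j : ℝ) = 0 := le_antisymm
        ((single_le_sum (fun j _ => Nat.cast_nonneg (d j)) (mem_univ j)).trans (hS ▸ hDS))
        (Nat.cast_nonneg _)
      simp [this]
    · exact mul_div_cancel_right₀ _ hS
  · rw [← sum_div, ← sum_mul, Pi.one_apply, mul_one, mul_comm, mul_div_assoc]
    exact mul_le_of_le_one_right (Nat.cast_nonneg _)
      (div_le_one_of_le₀ hDS (sum_nonneg fun i _ => Nat.cast_nonneg _))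

theorem IsCFLSolution.cflCost_one_le {s : F → ℕ} {d : C → ℕ} {x : F → C → ℝ}
    (h : IsCFLSolution s d x 1) {c : F → C → ℝ} (f : F → ℕ) {M : ℝ} (hcM : ∀ i j, c i j ≤ M) :
    cflCost c f x 1 ≤ ∑ i, (f i : ℝ) + M * ∑ j, (d j : ℝ) := by
  simp only [cflCost, Pi.one_apply, mul_one]
  linarith [transport_cost_le hcM h.nonneg h.demand]

end Problems

section ReducedCost

variable {F C : Type} [Fintype C] [Nonempty C] [DecidableEq F]

noncomputable def reducedCost (c : F → C → ℝ) (i : F) : C ⊕ F → ℝ :=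
  Sum.elim (c i) fun k => if i = k then 0 else univ.inf' univ_nonempty fun j => c i j + c k j

variable {c : F → C → ℝ}

@[simp]
theorem reducedCost_inl (i : F) (j : C) : reducedCost c i (Sum.inl j) = c i j := rfl

@[simp]
theorem reducedCost_self (i : F) : reducedCost c i (Sum.inr i) = 0 := by
  simp [reducedCost]

theorem exists_reducedCost_inr_eq {i k : F} (h : i ≠ k) :
    ∃ j, reducedCost c i (Sum.inr k) = c i j + c k j := by
  obtain ⟨j, -, hj⟩ := exists_mem_eq_inf' univ_nonempty fun j => c i j + c k j
  exact ⟨j, by simp [reducedCost, h, hj]⟩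

theorem reducedCost_inr_le (hc : ∀ i j, 0 ≤ c i j) (i k : F) (j : C) :
    reducedCost c i (Sum.inr k) ≤ c i j + c k j := by
  by_cases h : i = k
  · subst h; simpa using add_nonneg (hc i j) (hc i j)
  · rw [reducedCost, Sum.elim_inr, if_neg h]
    exact inf'_le _ (mem_univ j)

theorem reducedCost_nonneg (hc : ∀ i j, 0 ≤ c i j) (i : F) (j : C ⊕ F) :
    0 ≤ reducedCost c i j := by
  rcases j with j | k
  · exact hc i j
  · by_cases h : i = k
    · simp [h]
    · obtain ⟨j, hj⟩ := exists_reducedCost_inr_eq (c := c) h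
      rw [hj]; exact add_nonneg (hc i j) (hc k j)

theorem le_reducedCost_inr_add
    (hc_metric : ∀ (i₀ i₁ : F) (j₀ j₁ : C), c i₀ j₀ ≤ c i₀ j₁ + c i₁ j₁ + c i₁ j₀)
    (i p : F) (j : C) : c i j ≤ reducedCost c i (Sum.inr p) + c p j := by
  by_cases h : i = p
  · subst h; simp
  · obtain ⟨j₁, hj₁⟩ := exists_reducedCost_inr_eq (c := c) h
    rw [hj₁]; exact hc_metric i p j j₁

theorem reducedCost_le_add (hc : ∀ i j, 0 ≤ c i j)
    (hc_metric : ∀ (i₀ i₁ : F) (j₀ j₁ : C), c i₀ j₀ ≤ c i₀ j₁ + c i₁ j₁ + c i₁ j₀)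
    (i p : F) (j : C ⊕ F) : reducedCost c i j ≤ reducedCost c i (Sum.inr p) + reducedCost c p j := by
  rcases j with j | k
  · exact le_reducedCost_inr_add hc_metric i p j
  · by_cases hpk : p = k
    · subst hpk; simp
    · obtain ⟨j, hj⟩ := exists_reducedCost_inr_eq (c := c) hpk
      rw [hj]
      linarith [reducedCost_inr_le hc i k j, le_reducedCost_inr_add hc_metric i p j]

end ReducedCost

theorem sum_mul_nonpos_of_sum_eq_zero {ι R : Type*} [Fintype ι] [CommRing R] [PartialOrder R]
    [IsOrderedRing R] {u h : ι → R} {p : ι}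
    (hu : ∑ i, u i = 0) (hu_nonneg : ∀ i, i ≠ p → 0 ≤ u i) (hh : ∀ i, h i ≤ h p) :
    ∑ i, u i * h i ≤ 0 :=
  calc ∑ i, u i * h i = ∑ i, u i * (h i - h p) := by simp [mul_sub, sum_sub_distrib, ← sum_mul, hu]
    _ ≤ 0 := sum_nonpos fun i _ => by
      by_cases hi : i = p
      · simp [hi]
      · exact mul_nonpos_of_nonneg_of_nonpos (hu_nonneg i hi) (sub_nonpos.2 (hh i))

theorem IsTMCSolution.sum_row_le_sum_col {F C : Type} [Fintype F] [Fintype C] {s : F → ℕ}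
    {d : C → ℕ} {x : F → C ⊕ F → ℝ} {z : C ⊕ F → ℝ} (h : IsTMCSolution s (Sum.elim d s) x z)
    {p : F} (hz : z (Sum.inr p) = 0) : ∑ j, x p j ≤ ∑ k, x k (Sum.inr p) := by
  simpa [h.demand, hz] using h.capacity p

section Rerouting

variable {F C : Type} [Fintype F] [DecidableEq F] (x : F → C ⊕ F → ℝ) (p : F)

def offColSum : ℝ :=
  ∑ k, x k (Sum.inr p) - x p (Sum.inr p)

def centeredCol (i : F) : ℝ :=
  x i (Sum.inr p) - if i = p then ∑ k, x k (Sum.inr p) else 0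

theorem sum_centeredCol : ∑ i, centeredCol x p i = 0 := by
  simp [centeredCol, sum_sub_distrib]

theorem centeredCol_self : centeredCol x p p = -offColSum x p := by
  simp [centeredCol, offColSum]

variable [Fintype C] [DecidableEq C]

def centeredRow (j : C ⊕ F) : ℝ :=
  x p j - if j = Sum.inr p then ∑ k, x p k else 0

theorem sum_centeredRow : ∑ j, centeredRow x p j = 0 := by
  simp only [centeredRow, sum_sub_distrib, sum_ite_eq', mem_univ, if_true, sub_self]

/-- Facility `p` moves all its shipments to its own dummy client; every other facility `i` takes
over the share `x i (inr p) / offColSum x p` of them and ships that much less to the dummy client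
of `p`. Both centered vectors sum to zero, so this rank-one correction keeps all row and column
sums. -/
noncomputable def reroute_s10 : F → C ⊕ F → ℝ := fun i j =>
  x i j + centeredCol x p i * centeredRow x p j / offColSum x p

theorem sum_reroute_row (i : F) : ∑ j, reroute_s10 x p i j = ∑ j, x i j := by
  simp only [reroute_s10, sum_add_distrib, mul_div_assoc, ← mul_sum, ← sum_div, sum_centeredRow,
    zero_div, mul_zero, add_zero]

theorem sum_reroute_col (j : C ⊕ F) : ∑ i, reroute_s10 x p i j = ∑ i, x i j := by
  simp only [reroute_s10, sum_add_distrib, mul_div_right_comm _ (centeredRow x p j), ← sum_mul,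
    ← sum_div, sum_centeredCol, zero_div, zero_mul, add_zero]

variable {x p}

theorem reroute_self_of_ne (hT : offColSum x p ≠ 0) {j : C ⊕ F} (hj : j ≠ Sum.inr p) :
    reroute_s10 x p p j = 0 := by
  simp [reroute_s10, centeredCol_self, centeredRow, hj, neg_mul, neg_div, mul_div_cancel_left₀ _ hT]

theorem reroute_of_ne {i : F} (hi : i ≠ p) (hx : x i (Sum.inr p) = 0) : reroute_s10 x p i = x i := by
  ext j; simp [reroute_s10, centeredCol, hi, hx]

theorem reroute_nonneg (hx : ∀ i j, 0 ≤ x i j) (hT : 0 < offColSum x p)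
    (hrow : ∑ j, x p j ≤ ∑ k, x k (Sum.inr p)) (i : F) (j : C ⊕ F) : 0 ≤ reroute_s10 x p i j := by
  have hrow_nonneg : 0 ≤ ∑ k, x p k := sum_nonneg fun k _ => hx p k
  by_cases hi : i = p
  · subst hi
    by_cases hj : j = Sum.inr i
    · subst hj
      simp only [reroute_s10, centeredCol_self, centeredRow, if_true, neg_mul, neg_div,
        mul_div_cancel_left₀ _ hT.ne']
      linarith
    · exact (reroute_self_of_ne hT.ne' hj).ge
  · by_cases hj : j = Sum.inr p
    · subst hj
      have hshare : 0 ≤ 1 + (x p (Sum.inr p) - ∑ k, x p k) / offColSum x p := by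
        rw [one_add_div hT.ne']
        exact div_nonneg (by unfold offColSum; linarith) hT.le
      simpa [reroute_s10, centeredCol, centeredRow, hi, mul_div_assoc, ← mul_one_add] using
        mul_nonneg (hx i _) hshare
    · simp only [reroute_s10, centeredCol, centeredRow, hi, hj, if_false, sub_zero]
      exact add_nonneg (hx i j) (div_nonneg (mul_nonneg (hx i _) (hx p j)) hT.le)

theorem sum_mul_centeredRow (c : C ⊕ F → ℝ) :
    ∑ j, c j * centeredRow x p j = ∑ j, (c j - c (Sum.inr p)) * x p j := by
  simp only [centeredRow, mul_sub, sub_mul, sum_sub_distrib, mul_ite, mul_zero, sum_ite_eq',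
    mem_univ, if_true, mul_sum]

/-- Per unit taken over, facility `i` pays `c i j - c i (inr p)`, at most the `c p j` that `p`
saves. -/
theorem sum_mul_reroute_le (c : F → C ⊕ F → ℝ) (hdiag : c p (Sum.inr p) = 0)
    (htri : ∀ i j, c i j ≤ c i (Sum.inr p) + c p j) (hx : ∀ i j, 0 ≤ x i j)
    (hT : 0 < offColSum x p) :
    ∑ i, ∑ j, c i j * reroute_s10 x p i j ≤ ∑ i, ∑ j, c i j * x i j := by
  have hsplit : ∑ i, ∑ j, c i j * reroute_s10 x p i j = ∑ i, ∑ j, c i j * x i j +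
      (∑ i, centeredCol x p i * ∑ j, c i j * centeredRow x p j) / offColSum x p := by
    simp only [reroute_s10, mul_add, sum_add_distrib, sum_div, mul_sum]
    congr! 3 with i - j -
    ring
  have hgain : ∑ i, centeredCol x p i * ∑ j, c i j * centeredRow x p j ≤ 0 := by
    refine sum_mul_nonpos_of_sum_eq_zero (p := p) (sum_centeredCol x p)
      (fun i hi => by simpa [centeredCol, hi] using hx i (Sum.inr p)) fun i => ?_
    simp only [sum_mul_centeredRow, hdiag, sub_zero]
    exact sum_le_sum fun j _ => mul_le_mul_of_nonneg_right (by linarith [htri i j]) (hx p j)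
  rw [hsplit]
  linarith [div_nonpos_of_nonpos_of_nonneg hgain hT.le]

variable (x) in
/-- Facilities that are closed in the CFL reading (their dummy client is served) but still ship
to some other client. -/
noncomputable def activeClosed (z : C ⊕ F → ℝ) : Finset F :=
  univ.filter fun i => z (Sum.inr i) = 0 ∧ ∃ j, j ≠ Sum.inr i ∧ x i j ≠ 0

theorem activeClosed_reroute_ssubset {z : C ⊕ F → ℝ} (hp : p ∈ activeClosed x z)
    (hT : offColSum x p ≠ 0) : activeClosed (reroute_s10 x p) z ⊂ activeClosed x z := by
  refine Finset.ssubset_of_subset_of_ssubset (fun i hi => ?_) (erase_ssubset hp)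
  simp only [activeClosed, mem_filter, mem_univ, true_and, mem_erase] at hi ⊢
  obtain ⟨hz, j, hj, hxj⟩ := hi
  have hip : i ≠ p := by
    rintro rfl
    exact hxj (reroute_self_of_ne hT hj)
  refine ⟨hip, hz, ?_⟩
  by_contra! hclean
  rw [reroute_of_ne hip (hclean _ (Sum.inr_injective.ne hip.symm))] at hxj
  exact hxj (hclean j hj)

variable {s : F → ℕ} {d : C → ℕ} {z : C ⊕ F → ℝ}

theorem IsTMCSolution.offColSum_pos (h : IsTMCSolution s (Sum.elim d s) x z)
    (hp : p ∈ activeClosed x z) : 0 < offColSum x p := by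
  simp only [activeClosed, mem_filter, mem_univ, true_and] at hp
  obtain ⟨hz, j, hj, hxj⟩ := hp
  have hj_le : x p j ≤ ∑ k, x p k - x p (Sum.inr p) := by
    rw [← sum_erase_eq_sub (mem_univ _)]
    exact single_le_sum (fun k _ => h.nonneg p k) (mem_erase.2 ⟨hj, mem_univ j⟩)
  have := h.sum_row_le_sum_col hz
  unfold offColSum
  linarith [lt_of_le_of_ne (h.nonneg p j) (Ne.symm hxj)]

theorem IsTMCSolution.reroute (h : IsTMCSolution s (Sum.elim d s) x z)
    (hp : p ∈ activeClosed x z) : IsTMCSolution s (Sum.elim d s) (reroute_s10 x p) z where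
  nonneg := reroute_nonneg h.nonneg (h.offColSum_pos hp)
    (h.sum_row_le_sum_col (mem_filter.1 hp).2.1)
  binary := h.binary
  demand j := (sum_reroute_col x p j).trans (h.demand j)
  capacity i := (sum_reroute_row x p i).trans_le (h.capacity i)

theorem IsTMCSolution.exists_activeClosed_eq_empty (c : F → C ⊕ F → ℝ)
    (hdiag : ∀ p, c p (Sum.inr p) = 0) (htri : ∀ i p j, c i j ≤ c i (Sum.inr p) + c p j)
    (h : IsTMCSolution s (Sum.elim d s) x z) :
    ∃ y, IsTMCSolution s (Sum.elim d s) y z ∧ activeClosed y z = ∅ ∧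
      ∑ i, ∑ j, c i j * y i j ≤ ∑ i, ∑ j, c i j * x i j := by
  induction hn : #(activeClosed x z) using Nat.strong_induction_on generalizing x with
  | _ n ih =>
  obtain hempty | ⟨p, hp⟩ := (activeClosed x z).eq_empty_or_nonempty
  · exact ⟨x, h, hempty, le_rfl⟩
  have hT := h.offColSum_pos hp
  obtain ⟨y, hy, hclean, hcost⟩ := ih _ (hn ▸ card_lt_card (activeClosed_reroute_ssubset hp hT.ne'))
    (h.reroute hp) rfl
  exact ⟨y, hy, hclean, hcost.trans (sum_mul_reroute_le c (hdiag p) (htri · p) h.nonneg hT)⟩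

theorem IsTMCSolution.isCFLSolution (h : IsTMCSolution s (Sum.elim d s) x z)
    (hzC : ∀ j, z (Sum.inl j) = 0) (hclean : activeClosed x z = ∅) :
    IsCFLSolution s d (fun i j => x i (Sum.inl j)) (fun i => z (Sum.inr i)) where
  nonneg i j := h.nonneg i _
  binary i := h.binary _
  demand j := by simpa [hzC] using h.demand (Sum.inl j)
  capacity i := by
    have hrow := h.capacity i
    rw [Fintype.sum_sum_type] at hrow
    rcases h.binary (Sum.inr i) with hz | hz
    · have hzero : ∀ j, x i (Sum.inl j) = 0 := fun j => by
        by_contra hne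
        have hi : i ∈ activeClosed x z := by
          simp only [activeClosed, mem_filter, mem_univ, true_and]
          exact ⟨hz, Sum.inl j, Sum.inl_ne_inr, hne⟩
        simp [hclean] at hi
      simp [hzero, hz]
    · simp only [hz, mul_one]
      linarith [sum_nonneg fun k (_ : k ∈ univ) => h.nonneg i (Sum.inr k)]

end Rerouting

section Reduction

variable {F C : Type} [Fintype F] [Fintype C] [Nonempty C] [DecidableEq F]
  {s : F → ℕ} {d : C → ℕ} {c : F → C → ℝ} {f : F → ℕ}

theorem cflCost_le_tmcCost (hc : ∀ i j, 0 ≤ c i j) {y : F → C ⊕ F → ℝ} {z : C ⊕ F → ℝ}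
    (hy : ∀ i j, 0 ≤ y i j) (hzC : ∀ j, z (Sum.inl j) = 0) (B : ℝ) :
    cflCost c f (fun i j => y i (Sum.inl j)) (fun i => z (Sum.inr i)) ≤
      tmcCost (reducedCost c) (Sum.elim (fun _ => B) fun i => (f i : ℝ)) y z := by
  simp only [cflCost, tmcCost, Fintype.sum_sum_type, Sum.elim_inl, Sum.elim_inr, reducedCost_inl,
    hzC, mul_zero, sum_const_zero, zero_add, sum_add_distrib]
  linarith [sum_nonneg fun i (_ : i ∈ univ) => sum_nonneg fun k (_ : k ∈ univ) =>
    mul_nonneg (reducedCost_nonneg hc i (Sum.inr k)) (hy i (Sum.inr k))]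

theorem cflValues_subset_tmcValues (B : ℝ) :
    cflValues s d c f ⊆
      tmcValues s (Sum.elim d s) (reducedCost c) (Sum.elim (fun _ => B) fun i => (f i : ℝ)) := by
  rintro v ⟨x, z, h, rfl⟩
  refine ⟨fun i => Sum.elim (x i) fun k => if k = i then (1 - z i) * s i else 0, Sum.elim 0 z,
    ⟨fun i j => ?_, fun j => ?_, fun j => ?_, fun i => ?_⟩, ?_⟩
  · rcases j with j | k
    · exact h.nonneg i j
    · rcases h.binary i with hz | hz <;> by_cases hk : k = i <;> simp [hz, hk]
  · rcases j with j | i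
    · exact Or.inl rfl
    · exact h.binary i
  · rcases j with j | k
    · simpa using h.demand j
    · simp
  · have := h.capacity i
    simp only [Fintype.sum_sum_type, Sum.elim_inl, Sum.elim_inr, sum_ite_eq', mem_univ, if_true]
    linarith
  · simp [cflCost, tmcCost, Fintype.sum_sum_type]

theorem le_tmcCost_of_inl_eq_one (hc : ∀ i j, 0 ≤ c i j) {B : ℝ} (hB : 0 ≤ B) {d' : C ⊕ F → ℕ}
    {x : F → C ⊕ F → ℝ} {z : C ⊕ F → ℝ} (h : IsTMCSolution s d' x z) {j : C}
    (hj : z (Sum.inl j) = 1) :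
    B ≤ tmcCost (reducedCost c) (Sum.elim (fun _ => B) fun i => (f i : ℝ)) x z := by
  have hpenalty : B ≤ ∑ k, Sum.elim (fun _ => B) (fun i => (f i : ℝ)) k * z k :=
    calc B = Sum.elim (fun _ => B) (fun i => (f i : ℝ)) (Sum.inl j) * z (Sum.inl j) := by
          simp [hj]
      _ ≤ _ := single_le_sum (fun k _ => mul_nonneg (by rcases k with _ | _ <;> simp [hB])
          (binary_nonneg (h.binary k))) (mem_univ _)
  simp only [tmcCost]
  linarith [sum_nonneg fun i (_ : i ∈ univ) => sum_nonneg fun k (_ : k ∈ univ) =>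
    mul_nonneg (reducedCost_nonneg hc i k) (h.nonneg i k)]

theorem exists_cflValue_le [DecidableEq C] (hc : ∀ i j, 0 ≤ c i j)
    (hc_metric : ∀ (i₀ i₁ : F) (j₀ j₁ : C), c i₀ j₀ ≤ c i₀ j₁ + c i₁ j₁ + c i₁ j₀)
    (hfeas : ∑ j, d j ≤ ∑ i, s i) {M B : ℝ} (hcM : ∀ i j, c i j ≤ M)
    (hB : ∑ i, (f i : ℝ) + M * ∑ j, (d j : ℝ) ≤ B) {v : ℝ}
    (hv : v ∈ tmcValues s (Sum.elim d s) (reducedCost c) (Sum.elim (fun _ => B) fun i => (f i : ℝ))) :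
    ∃ w ∈ cflValues s d c f, w ≤ v := by
  obtain ⟨x, z, h, rfl⟩ := hv
  by_cases hzC : ∀ j, z (Sum.inl j) = 0
  · obtain ⟨y, hy, hclean, hcost⟩ := h.exists_activeClosed_eq_empty (reducedCost c)
      reducedCost_self (reducedCost_le_add hc hc_metric)
    refine ⟨_, ⟨_, _, hy.isCFLSolution hzC hclean, rfl⟩, ?_⟩
    exact (cflCost_le_tmcCost hc hy.nonneg hzC B).trans (by simp only [tmcCost]; linarith)
  · obtain ⟨j, hj⟩ := not_forall.1 hzC
    obtain ⟨x₀, h₀⟩ := exists_isCFLSolution_one hfeas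
    have hw : cflCost c f x₀ 1 ≤ B := (h₀.cflCost_one_le f hcM).trans hB
    exact ⟨_, ⟨x₀, 1, h₀, rfl⟩, hw.trans <| le_tmcCost_of_inl_eq_one hc
      ((cflCost_nonneg hc f h₀).trans hw) h ((h.binary _).resolve_left hj)⟩

theorem sInf_cflValues_eq_sInf_tmcValues [DecidableEq C] (hc : ∀ i j, 0 ≤ c i j)
    (hc_metric : ∀ (i₀ i₁ : F) (j₀ j₁ : C), c i₀ j₀ ≤ c i₀ j₁ + c i₁ j₁ + c i₁ j₀)
    (hfeas : ∑ j, d j ≤ ∑ i, s i) {M B : ℝ} (hcM : ∀ i j, c i j ≤ M)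
    (hB : ∑ i, (f i : ℝ) + M * ∑ j, (d j : ℝ) ≤ B) :
    sInf (cflValues s d c f) = sInf (tmcValues s (Sum.elim d s) (reducedCost c)
      (Sum.elim (fun _ => B) fun i => (f i : ℝ))) :=
  csInf_eq_csInf_of_forall_exists_le (fun v hv => ⟨v, cflValues_subset_tmcValues B hv, le_rfl⟩)
    fun _ hv => exists_cflValue_le hc hc_metric hfeas hcM hB hv

end Reduction

/-- for feasible CFL instances (total demand at most total supply),
the metric CFL-to-TMC reduction preserves the optimal value: the infimum of CFL
objective values of `I1` equals the infimum of TMC objective values of `I2`. -/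
theorem stmt_10 {F C : Type} [Fintype F] [Fintype C] [Nonempty F] [Nonempty C]
    -- CFL instance I1 = (F, C, s, d, c, f)
    (s : F → ℕ) (d : C → ℕ) (c : F → C → ℝ) (f : F → ℕ)
    (hc_nonneg : ∀ i j, 0 ≤ c i j)
    (hc_metric : ∀ (i0 i1 : F) (j0 j1 : C), c i0 j0 ≤ c i0 j1 + c i1 j1 + c i1 j0)
    (hfeas : ∑ j, d j ≤ ∑ i, s i)
    -- the maximum unit transportation cost and the instance upper bound
    (M : ℝ)
    (hM : M = Finset.univ.sup' Finset.univ_nonempty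
        (fun i : F => Finset.univ.sup' Finset.univ_nonempty fun j : C => c i j))
    (B : ℝ)
    (hB : B = (∑ i, (f i : ℝ)) + M * (∑ j, (d j : ℝ)) + 1)
    -- TMC instance I2 on client set C ⊕ F given by the metric reduction
    (d' : C ⊕ F → ℕ) (r' : C ⊕ F → ℝ) (c' : F → C ⊕ F → ℝ)
    (hd'C : ∀ j : C, d' (Sum.inl j) = d j)
    (hd'F : ∀ i : F, d' (Sum.inr i) = s i)
    (hr'C : ∀ j : C, r' (Sum.inl j) = B)
    (hr'F : ∀ i : F, r' (Sum.inr i) = (f i : ℝ))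
    (hc'C : ∀ (i : F) (j : C), c' i (Sum.inl j) = c i j)
    (hc'diag : ∀ i : F, c' i (Sum.inr i) = 0)
    (hc'off : ∀ i0 i : F, i0 ≠ i →
      c' i0 (Sum.inr i) =
        Finset.univ.inf' Finset.univ_nonempty (fun j : C => c i0 j + c i j)) :
    sInf {v : ℝ | ∃ (x : F → C → ℝ) (z : F → ℝ),
        (∀ i j, 0 ≤ x i j) ∧
        (∀ i, z i = 0 ∨ z i = 1) ∧
        (∀ j, ∑ i, x i j = (d j : ℝ)) ∧
        (∀ i, ∑ j, x i j ≤ (s i : ℝ) * z i) ∧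
        v = (∑ i, ∑ j, c i j * x i j) + (∑ i, (f i : ℝ) * z i)}
      = sInf {v : ℝ | ∃ (x' : F → C ⊕ F → ℝ) (z' : C ⊕ F → ℝ),
        (∀ i j', 0 ≤ x' i j') ∧
        (∀ j', z' j' = 0 ∨ z' j' = 1) ∧
        (∀ j', ∑ i, x' i j' = (1 - z' j') * (d' j' : ℝ)) ∧
        (∀ i, ∑ j', x' i j' ≤ (s i : ℝ)) ∧
        v = (∑ i, ∑ j', c' i j' * x' i j') + (∑ j', r' j' * z' j')} := by
  classical
  obtain rfl : d' = Sum.elim d s := funext fun j => by cases j <;> simp [hd'C, hd'F]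
  obtain rfl : r' = Sum.elim (fun _ => B) fun i => (f i : ℝ) :=
    funext fun j => by cases j <;> simp [hr'C, hr'F]
  obtain rfl : c' = reducedCost c := by
    funext i j
    rcases j with j | k
    · exact hc'C i j
    · by_cases h : i = k
      · subst h; simp [hc'diag]
      · simp [reducedCost, h, hc'off i k h]
  have hcM : ∀ i j, c i j ≤ M := fun i j => hM ▸ (le_sup' (fun j => c i j) (mem_univ j)).trans
    (le_sup' (fun i => univ.sup' univ_nonempty fun j => c i j) (mem_univ i))
  have hMB : ∑ i, (f i : ℝ) + M * ∑ j, (d j : ℝ) ≤ B := by linarith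
  convert sInf_cflValues_eq_sInf_tmcValues hc_nonneg hc_metric hfeas hcM hMB using 2 <;> ext v
  · simp only [cflValues, isCFLSolution_iff, cflCost, and_assoc]
  · simp only [tmcValues, isTMCSolution_iff, tmcCost, and_assoc]
end

section
/- Let I1 = (F, C, s, d, c, f) be a CFL instance (no metric assumption), and let I2 be the associated TMC instance of the general CFL-to-TMC reduction, in which each dummy client has cost 0 from its own facility and cost M = max_{i∈F, j∈C} c i j from every other facility. Then for every feasible CFL solution (x, z) of I1 there exists a feasible TMC solution (x', z') of I2 whose objective value equals the objective value of (x, z). -/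
/-- general (non-metric) CFL-to-TMC reduction, forward direction.
Every feasible CFL solution of `I1` yields a feasible TMC solution of `I2`
with the same objective value. -/
theorem stmt_11 {F C : Type} [Fintype F] [Fintype C] [Nonempty F] [Nonempty C]
    -- CFL instance I1 = (F, C, s, d, c, f)
    (s : F → ℕ) (d : C → ℕ) (c : F → C → ℝ) (f : F → ℕ)
    (hc_nonneg : ∀ i j, 0 ≤ c i j)
    -- the maximum unit transportation cost and the instance upper bound
    (M : ℝ)
    (hM : M = Finset.univ.sup' Finset.univ_nonempty
        (fun i : F => Finset.univ.sup' Finset.univ_nonempty fun j : C => c i j))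
    (B : ℝ)
    (hB : B = (∑ i, (f i : ℝ)) + M * (∑ j, (d j : ℝ)) + 1)
    -- TMC instance I2 on client set C ⊕ F given by the general reduction
    (d' : C ⊕ F → ℕ) (r' : C ⊕ F → ℝ) (c' : F → C ⊕ F → ℝ)
    (hd'C : ∀ j : C, d' (Sum.inl j) = d j)
    (hd'F : ∀ i : F, d' (Sum.inr i) = s i)
    (hr'C : ∀ j : C, r' (Sum.inl j) = B)
    (hr'F : ∀ i : F, r' (Sum.inr i) = (f i : ℝ))
    (hc'C : ∀ (i : F) (j : C), c' i (Sum.inl j) = c i j)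
    (hc'diag : ∀ i : F, c' i (Sum.inr i) = 0)
    (hc'off : ∀ i0 i : F, i0 ≠ i → c' i0 (Sum.inr i) = M)
    -- a feasible CFL solution (x, z) of I1
    (x : F → C → ℝ) (z : F → ℝ)
    (hx : ∀ i j, 0 ≤ x i j)
    (hz : ∀ i, z i = 0 ∨ z i = 1)
    (hdem : ∀ j, ∑ i, x i j = (d j : ℝ))
    (hcap : ∀ i, ∑ j, x i j ≤ (s i : ℝ) * z i) :
    -- there is a feasible TMC solution (x', z') of I2 with equal objective value
    ∃ (x' : F → C ⊕ F → ℝ) (z' : C ⊕ F → ℝ),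
      (∀ i j', 0 ≤ x' i j') ∧
      (∀ j', z' j' = 0 ∨ z' j' = 1) ∧
      (∀ j', ∑ i, x' i j' = (1 - z' j') * (d' j' : ℝ)) ∧
      (∀ i, ∑ j', x' i j' ≤ (s i : ℝ)) ∧
      (∑ i, ∑ j', c' i j' * x' i j') + (∑ j', r' j' * z' j')
        = (∑ i, ∑ j, c i j * x i j) + (∑ i, (f i : ℝ) * z i) := by
  classical
  refine ⟨fun i j' => Sum.casesOn j' (fun j => x i j)
      (fun i' => if i = i' then (1 - z i') * (s i' : ℝ) else 0),
    fun j' => Sum.casesOn j' (fun _ => 0) (fun i => z i), ?_, ?_, ?_, ?_, ?_⟩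
  · rintro i (j | i')
    · exact hx i j
    · dsimp only
      split
      · rcases hz i' with h | h <;> simp [h] <;> positivity
      · exact le_refl 0
  · rintro (j | i)
    · exact Or.inl rfl
    · exact hz i
  · rintro (j | i)
    · simpa [hd'C] using hdem j
    · simp [hd'F, Finset.sum_ite_eq, mul_comm]
  · intro i
    rw [Fintype.sum_sum_type]
    simp only [Finset.sum_ite_eq, Finset.mem_univ, if_true]
    have h0 : ∑ j, x i j ≤ (s i : ℝ) * z i := hcap i
    nlinarith [h0]
  · rw [Fintype.sum_sum_type]
    have hcost : ∀ i : F, (∑ j, c' i (Sum.inl j) * x i j) +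
        (∑ i' : F, c' i (Sum.inr i') *
          (if i = i' then (1 - z i') * (s i' : ℝ) else 0)) = ∑ j, c i j * x i j := by
      intro i
      have h1 : ∑ j, c' i (Sum.inl j) * x i j = ∑ j, c i j * x i j := by
        simp [hc'C]
      have h2 : ∑ i' : F, c' i (Sum.inr i') *
          (if i = i' then (1 - z i') * (s i' : ℝ) else 0) = 0 := by
        apply Finset.sum_eq_zero
        intro i' _
        by_cases h : i = i'
        · subst h; simp [hc'diag]
        · simp [h]
      rw [h1, h2, add_zero]
    have hsum : ∀ i : F, ∑ j' : C ⊕ F, c' i j' * (Sum.casesOn j' (fun j => x i j)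
        (fun i' => if i = i' then (1 - z i') * (s i' : ℝ) else 0) : ℝ)
        = ∑ j, c i j * x i j := by
      intro i
      rw [Fintype.sum_sum_type]
      exact hcost i
    rw [Finset.sum_congr rfl (fun i _ => hsum i)]
    simp [hr'F]
end

section
/- Let I1 = (F, C, s, d, c, f) be a CFL instance (no metric assumption) with Σ_{j∈C} d j ≤ Σ_{i∈F} s i, and let I2 be the associated TMC instance of the general CFL-to-TMC reduction, in which each dummy client has cost 0 from its own facility and cost M = max_{i∈F, j∈C} c i j from every other facility. Then for every feasible TMC solution (x', z') of I2 there exists a feasible CFL solution (x, z) of I1 whose objective value is at most the objective value of (x', z'). -/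
/-- general (non-metric) CFL-to-TMC reduction, backward direction (for feasible CFL
instances, i.e. total demand at most total supply). Every feasible TMC solution of
`I2` yields a feasible CFL solution of `I1` with objective value at most that of
the TMC solution. -/
theorem stmt_12 {F C : Type} [Fintype F] [Fintype C] [Nonempty F] [Nonempty C]
    -- CFL instance I1 = (F, C, s, d, c, f)
    (s : F → ℕ) (d : C → ℕ) (c : F → C → ℝ) (f : F → ℕ)
    (hc_nonneg : ∀ i j, 0 ≤ c i j)
    (hfeas : ∑ j, d j ≤ ∑ i, s i)
    -- the maximum unit transportation cost and the instance upper bound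
    (M : ℝ)
    (hM : M = Finset.univ.sup' Finset.univ_nonempty
        (fun i : F => Finset.univ.sup' Finset.univ_nonempty fun j : C => c i j))
    (B : ℝ)
    (hB : B = (∑ i, (f i : ℝ)) + M * (∑ j, (d j : ℝ)) + 1)
    -- TMC instance I2 on client set C ⊕ F given by the general reduction
    (d' : C ⊕ F → ℕ) (r' : C ⊕ F → ℝ) (c' : F → C ⊕ F → ℝ)
    (hd'C : ∀ j : C, d' (Sum.inl j) = d j)
    (hd'F : ∀ i : F, d' (Sum.inr i) = s i)
    (hr'C : ∀ j : C, r' (Sum.inl j) = B)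
    (hr'F : ∀ i : F, r' (Sum.inr i) = (f i : ℝ))
    (hc'C : ∀ (i : F) (j : C), c' i (Sum.inl j) = c i j)
    (hc'diag : ∀ i : F, c' i (Sum.inr i) = 0)
    (hc'off : ∀ i0 i : F, i0 ≠ i → c' i0 (Sum.inr i) = M)
    -- a feasible TMC solution (x', z') of I2
    (x' : F → C ⊕ F → ℝ) (z' : C ⊕ F → ℝ)
    (hx' : ∀ i j', 0 ≤ x' i j')
    (hz' : ∀ j', z' j' = 0 ∨ z' j' = 1)
    (hdem' : ∀ j', ∑ i, x' i j' = (1 - z' j') * (d' j' : ℝ))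
    (hcap' : ∀ i, ∑ j', x' i j' ≤ (s i : ℝ)) :
    -- there is a feasible CFL solution (x, z) of I1 with objective value at most that of (x', z')
    ∃ (x : F → C → ℝ) (z : F → ℝ),
      (∀ i j, 0 ≤ x i j) ∧
      (∀ i, z i = 0 ∨ z i = 1) ∧
      (∀ j, ∑ i, x i j = (d j : ℝ)) ∧
      (∀ i, ∑ j, x i j ≤ (s i : ℝ) * z i) ∧
      (∑ i, ∑ j, c i j * x i j) + (∑ i, (f i : ℝ) * z i)
        ≤ (∑ i, ∑ j', c' i j' * x' i j') + (∑ j', r' j' * z' j') := by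
  classical
  have hMc : ∀ i j, c i j ≤ M := by
    intro i j
    rw [hM]
    exact le_trans (Finset.le_sup' (fun j => c i j) (Finset.mem_univ j))
      (Finset.le_sup' (fun i : F => Finset.univ.sup' Finset.univ_nonempty fun j : C => c i j)
        (Finset.mem_univ i))
  have hM0 : 0 ≤ M :=
    le_trans (hc_nonneg (Classical.arbitrary F) (Classical.arbitrary C)) (hMc _ _)
  have hz'01 : ∀ j', (0:ℝ) ≤ z' j' := by
    intro j'; rcases hz' j' with h | h <;> rw [h] <;> norm_num
  have hc'_nonneg : ∀ i j', 0 ≤ c' i j' := by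
    intro i j'
    rcases j' with j | i0
    · rw [hc'C]; exact hc_nonneg i j
    · by_cases h : i = i0
      · subst h; rw [hc'diag]
      · rw [hc'off i i0 h]; exact hM0
  have htrans_nonneg : 0 ≤ ∑ i, ∑ j', c' i j' * x' i j' :=
    Finset.sum_nonneg fun i _ => Finset.sum_nonneg fun j' _ =>
      mul_nonneg (hc'_nonneg i j') (hx' i j')
  have hd_nonneg : (0:ℝ) ≤ ∑ j, (d j : ℝ) :=
    Finset.sum_nonneg fun j _ => Nat.cast_nonneg _
  have hf_nonneg : (0:ℝ) ≤ ∑ i, (f i : ℝ) :=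
    Finset.sum_nonneg fun i _ => Nat.cast_nonneg _
  have hB0 : (0:ℝ) ≤ B := by
    rw [hB]; nlinarith [mul_nonneg hM0 hd_nonneg]
  have hr'_nonneg : ∀ j', 0 ≤ r' j' := by
    intro j'; rcases j' with j | i
    · rw [hr'C]; exact hB0
    · rw [hr'F]; exact Nat.cast_nonneg _
  by_cases hall : ∀ j : C, z' (Sum.inl j) = 0
  · -- MAIN CASE: every real client is served.
    set Z : F → ℝ := fun i => z' (Sum.inr i) with hZ
    set t : F → ℝ := fun i => ∑ j, x' i (Sum.inl j) with ht
    set δ : C → ℝ := fun j => ∑ i, (1 - Z i) * x' i (Sum.inl j) with hδ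
    set σ : F → ℝ := fun i => Z i * ((s i : ℝ) - t i) with hσ
    set S : ℝ := ∑ i, σ i with hS
    set a : ℝ := ∑ j, δ j with ha
    set w : F → ℝ := fun i => ∑ i0, (if i0 = i then (0:ℝ) else x' i0 (Sum.inr i)) with hw
    have hZ01 : ∀ i, Z i = 0 ∨ Z i = 1 := fun i => hz' (Sum.inr i)
    have hZ0 : ∀ i, 0 ≤ Z i := fun i => hz'01 (Sum.inr i)
    have hZ1 : ∀ i, Z i ≤ 1 := by
      intro i; rcases hZ01 i with h | h <;> rw [h] <;> norm_num
    have ht0 : ∀ i, 0 ≤ t i := fun i =>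
      Finset.sum_nonneg fun j _ => hx' i (Sum.inl j)
    have hcapi : ∀ i, t i + ∑ i0, x' i (Sum.inr i0) ≤ (s i : ℝ) := by
      intro i
      have h := hcap' i
      rw [Fintype.sum_sum_type] at h
      exact h
    have hu0 : ∀ i, 0 ≤ ∑ i0, x' i (Sum.inr i0) := fun i =>
      Finset.sum_nonneg fun i0 _ => hx' _ _
    have hts : ∀ i, t i ≤ (s i : ℝ) := fun i => by linarith [hcapi i, hu0 i]
    have hdemC : ∀ j, ∑ i, x' i (Sum.inl j) = (d j : ℝ) := by
      intro j
      have h := hdem' (Sum.inl j)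
      rw [hall j, hd'C] at h
      simpa using h
    have hdemF : ∀ i, ∑ i0, x' i0 (Sum.inr i) = (1 - Z i) * (s i : ℝ) := by
      intro i
      have h := hdem' (Sum.inr i)
      rw [hd'F] at h
      exact h
    have hδ0 : ∀ j, 0 ≤ δ j := fun j =>
      Finset.sum_nonneg fun i _ => mul_nonneg (by linarith [hZ1 i]) (hx' _ _)
    have hσ0 : ∀ i, 0 ≤ σ i := fun i => mul_nonneg (hZ0 i) (by linarith [hts i])
    have hS0 : 0 ≤ S := Finset.sum_nonneg fun i _ => hσ0 i
    have ha0 : 0 ≤ a := Finset.sum_nonneg fun j _ => hδ0 j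
    have hw_eq : ∀ i, w i = (1 - Z i) * (s i : ℝ) - x' i (Sum.inr i) := by
      intro i
      have h1 : ∀ i0 : F, (if i0 = i then (0:ℝ) else x' i0 (Sum.inr i))
          = x' i0 (Sum.inr i) - (if i0 = i then x' i0 (Sum.inr i) else 0) := by
        intro i0; split <;> ring
      calc w i = ∑ i0, (x' i0 (Sum.inr i) - if i0 = i then x' i0 (Sum.inr i) else 0) :=
            Finset.sum_congr rfl fun i0 _ => h1 i0
        _ = (∑ i0, x' i0 (Sum.inr i)) - x' i (Sum.inr i) := by
            rw [Finset.sum_sub_distrib,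
              Finset.sum_ite_eq' Finset.univ i fun i0 => x' i0 (Sum.inr i)]
            simp
        _ = (1 - Z i) * (s i : ℝ) - x' i (Sum.inr i) := by rw [hdemF i]
    have hw0 : ∀ i, 0 ≤ w i := by
      intro i
      refine Finset.sum_nonneg fun i0 _ => ?_
      split
      · exact le_rfl
      · exact hx' _ _
    have htw : ∀ i, (1 - Z i) * t i ≤ w i := by
      intro i
      rcases hZ01 i with h | h
      · rw [hw_eq i, h]
        have h1 : x' i (Sum.inr i) ≤ ∑ i0, x' i (Sum.inr i0) :=
          Finset.single_le_sum (f := fun i0 => x' i (Sum.inr i0))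
            (fun i0 _ => hx' _ _) (Finset.mem_univ i)
        have h2 := hcapi i
        nlinarith
      · rw [h]
        simpa using hw0 i
    have haZt : a = ∑ i, (1 - Z i) * t i := by
      rw [ha, hδ]
      rw [Finset.sum_comm]
      exact Finset.sum_congr rfl fun i _ => by rw [← Finset.mul_sum, ht]
    have haw : a ≤ ∑ i, w i := by
      rw [haZt]
      exact Finset.sum_le_sum fun i _ => htw i
    have hta : ∑ i, t i ≤ ∑ i, Z i * (s i : ℝ) := by
      have h1 : ∑ i, (1 - Z i) * (s i : ℝ) = ∑ i, ∑ i0, x' i0 (Sum.inr i) :=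
        Finset.sum_congr rfl fun i _ => (hdemF i).symm
      have h2 : ∑ i, ∑ i0, x' i0 (Sum.inr i) = ∑ i0, ∑ i, x' i0 (Sum.inr i) :=
        Finset.sum_comm
      have h3 : ∑ i, (t i + ∑ i0, x' i (Sum.inr i0)) ≤ ∑ i, (s i : ℝ) :=
        Finset.sum_le_sum fun i _ => hcapi i
      rw [Finset.sum_add_distrib] at h3
      have h4 : ∑ i, Z i * (s i : ℝ) = ∑ i, (s i : ℝ) - ∑ i, (1 - Z i) * (s i : ℝ) := by
        rw [← Finset.sum_sub_distrib]
        exact Finset.sum_congr rfl fun i _ => by ring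
      rw [h4, h1, h2]
      linarith
    have haS : a ≤ S := by
      have hSexp : S = ∑ i, Z i * (s i : ℝ) - ∑ i, Z i * t i := by
        rw [hS, hσ, ← Finset.sum_sub_distrib]
        exact Finset.sum_congr rfl fun i _ => by ring
      have haexp : a = ∑ i, t i - ∑ i, Z i * t i := by
        rw [haZt, ← Finset.sum_sub_distrib]
        exact Finset.sum_congr rfl fun i _ => by ring
      rw [hSexp, haexp]
      linarith
    have hSzero : S = 0 → ∀ j, δ j = 0 := by
      intro h0 j
      have h1 : a = 0 := le_antisymm (h0 ▸ haS) ha0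
      have h2 : ∑ j, δ j = 0 := by rw [← ha]; exact h1
      exact (Finset.sum_eq_zero_iff_of_nonneg fun j _ => hδ0 j).1 h2 j (Finset.mem_univ j)
    refine ⟨fun i j => Z i * x' i (Sum.inl j) + δ j * σ i / S, Z, ?_, hZ01, ?_, ?_, ?_⟩
    · intro i j
      show 0 ≤ Z i * x' i (Sum.inl j) + δ j * σ i / S
      have h1 := mul_nonneg (hZ0 i) (hx' i (Sum.inl j))
      have h2 := div_nonneg (mul_nonneg (hδ0 j) (hσ0 i)) hS0
      linarith
    · intro j
      show ∑ i, (Z i * x' i (Sum.inl j) + δ j * σ i / S) = (d j : ℝ)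
      rw [Finset.sum_add_distrib]
      have h1 : ∑ i, δ j * σ i / S = δ j * S / S := by
        rw [← Finset.sum_div, ← Finset.mul_sum, ← hS]
      have h2 : (∑ i, Z i * x' i (Sum.inl j)) + δ j = (d j : ℝ) := by
        rw [hδ, ← Finset.sum_add_distrib, ← hdemC j]
        exact Finset.sum_congr rfl fun i _ => by ring
      by_cases hS' : S = 0
      · have hδj := hSzero hS' j
        rw [h1, hδj]
        simp only [zero_mul, zero_div, add_zero]
        linarith [h2]
      · rw [h1, mul_div_assoc, div_self hS', mul_one]
        exact h2
    · intro i
      show ∑ j, (Z i * x' i (Sum.inl j) + δ j * σ i / S) ≤ (s i : ℝ) * Z i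
      rw [Finset.sum_add_distrib, ← Finset.mul_sum]
      have h1 : ∑ j, δ j * σ i / S = a * σ i / S := by
        rw [← Finset.sum_div, ← Finset.sum_mul, ← ha]
      have h2 : a * σ i / S ≤ σ i := by
        by_cases hS' : S = 0
        · have ha' : a = 0 := le_antisymm (hS' ▸ haS) ha0
          rw [ha']
          simpa using hσ0 i
        · rw [div_le_iff₀ (lt_of_le_of_ne hS0 (Ne.symm hS'))]
          nlinarith [hσ0 i, haS]
      have h3 : Z i * t i + σ i = (s i : ℝ) * Z i := by
        rw [hσ]; ring
      have h4 : ∑ j, x' i (Sum.inl j) = t i := by rw [ht]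
      rw [h1, h4]
      linarith
    · show (∑ i, ∑ j, c i j * (Z i * x' i (Sum.inl j) + δ j * σ i / S))
          + (∑ i, (f i : ℝ) * Z i)
          ≤ (∑ i, ∑ j', c' i j' * x' i j') + (∑ j', r' j' * z' j')
      have hRHSpen : ∑ j', r' j' * z' j' = ∑ i, (f i : ℝ) * Z i := by
        rw [Fintype.sum_sum_type]
        have h1 : ∑ j, r' (Sum.inl j) * z' (Sum.inl j) = 0 :=
          Finset.sum_eq_zero fun j _ => by rw [hall j, mul_zero]
        rw [h1, zero_add]
        exact Finset.sum_congr rfl fun i _ => by rw [hr'F, hZ]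
      have hRHStrans : ∑ i, ∑ j', c' i j' * x' i j'
          = (∑ i, ∑ j, c i j * x' i (Sum.inl j)) + M * ∑ i, w i := by
        have h1 : ∀ i : F, ∑ j', c' i j' * x' i j'
            = (∑ j, c i j * x' i (Sum.inl j))
              + ∑ i0, c' i (Sum.inr i0) * x' i (Sum.inr i0) := by
          intro i
          rw [Fintype.sum_sum_type]
          congr 1
          exact Finset.sum_congr rfl fun j _ => by rw [hc'C]
        calc ∑ i, ∑ j', c' i j' * x' i j'
            = ∑ i, ((∑ j, c i j * x' i (Sum.inl j))
                + ∑ i0, c' i (Sum.inr i0) * x' i (Sum.inr i0)) :=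
              Finset.sum_congr rfl fun i _ => h1 i
          _ = (∑ i, ∑ j, c i j * x' i (Sum.inl j))
                + ∑ i, ∑ i0, c' i (Sum.inr i0) * x' i (Sum.inr i0) :=
              Finset.sum_add_distrib
          _ = (∑ i, ∑ j, c i j * x' i (Sum.inl j)) + M * ∑ i, w i := by
              congr 1
              rw [Finset.sum_comm, Finset.mul_sum]
              refine Finset.sum_congr rfl fun i0 _ => ?_
              rw [hw, Finset.mul_sum]
              refine Finset.sum_congr rfl fun i1 _ => ?_
              by_cases h : i1 = i0
              · subst h; rw [hc'diag, if_pos rfl]; ring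
              · rw [hc'off i1 i0 h, if_neg h]
      have hexp : ∑ i, ∑ j, c i j * (Z i * x' i (Sum.inl j) + δ j * σ i / S)
          = (∑ i, ∑ j, c i j * (Z i * x' i (Sum.inl j)))
            + ∑ i, ∑ j, c i j * (δ j * σ i / S) := by
        rw [← Finset.sum_add_distrib]
        refine Finset.sum_congr rfl fun i _ => ?_
        rw [← Finset.sum_add_distrib]
        exact Finset.sum_congr rfl fun j _ => by ring
      have hL1 : ∑ i, ∑ j, c i j * (Z i * x' i (Sum.inl j))
          ≤ ∑ i, ∑ j, c i j * x' i (Sum.inl j) := by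
        refine Finset.sum_le_sum fun i _ => Finset.sum_le_sum fun j _ => ?_
        have h1 : Z i * x' i (Sum.inl j) ≤ x' i (Sum.inl j) := by
          nlinarith [hZ1 i, hZ0 i, hx' i (Sum.inl j)]
        exact mul_le_mul_of_nonneg_left h1 (hc_nonneg i j)
      have hL2 : ∑ i, ∑ j, c i j * (δ j * σ i / S) ≤ M * a := by
        have h1 : ∑ i, ∑ j, c i j * (δ j * σ i / S)
            ≤ ∑ i, ∑ j, M * (δ j * σ i / S) :=
          Finset.sum_le_sum fun i _ => Finset.sum_le_sum fun j _ =>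
            mul_le_mul_of_nonneg_right (hMc i j)
              (div_nonneg (mul_nonneg (hδ0 j) (hσ0 i)) hS0)
        have h2 : ∑ i, ∑ j, M * (δ j * σ i / S)
            = M * ∑ i, ∑ j, δ j * σ i / S := by
          rw [Finset.mul_sum]
          exact Finset.sum_congr rfl fun i _ => by rw [Finset.mul_sum]
        have h3 : ∑ i, ∑ j, δ j * σ i / S = a * S / S := by
          have h4 : ∀ i : F, ∑ j, δ j * σ i / S = a * σ i / S := by
            intro i
            rw [← Finset.sum_div, ← Finset.sum_mul, ← ha]
          calc ∑ i, ∑ j, δ j * σ i / S = ∑ i, a * σ i / S :=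
                Finset.sum_congr rfl fun i _ => h4 i
            _ = a * S / S := by rw [← Finset.sum_div, ← Finset.mul_sum, ← hS]
        have h5 : a * S / S ≤ a := by
          by_cases hS' : S = 0
          · rw [hS']
            simpa using ha0
          · rw [mul_div_assoc, div_self hS', mul_one]
        calc ∑ i, ∑ j, c i j * (δ j * σ i / S) ≤ ∑ i, ∑ j, M * (δ j * σ i / S) := h1
          _ = M * (a * S / S) := by rw [h2, h3]
          _ ≤ M * a := mul_le_mul_of_nonneg_left h5 hM0
      have hwM : M * a ≤ M * ∑ i, w i := mul_le_mul_of_nonneg_left haw hM0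
      rw [hexp, hRHStrans, hRHSpen]
      linarith
  · -- PENALTY CASE: some real client is rejected, so the TMC objective is at least B.
    push_neg at hall
    obtain ⟨j0, hj0⟩ := hall
    have hz'j0 : z' (Sum.inl j0) = 1 := (hz' _).resolve_left hj0
    have hpenB : B ≤ ∑ j', r' j' * z' j' := by
      have h1 : r' (Sum.inl j0) * z' (Sum.inl j0) = B := by rw [hr'C, hz'j0, mul_one]
      calc B = r' (Sum.inl j0) * z' (Sum.inl j0) := h1.symm
        _ ≤ ∑ j', r' j' * z' j' :=
          Finset.single_le_sum (f := fun j' => r' j' * z' j')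
            (fun j' _ => mul_nonneg (hr'_nonneg j') (hz'01 j')) (Finset.mem_univ _)
    set S : ℝ := ∑ i, (s i : ℝ) with hSdef
    have hS0 : 0 ≤ S := Finset.sum_nonneg fun i _ => Nat.cast_nonneg _
    have hdS : (∑ j, (d j : ℝ)) ≤ S := by
      rw [hSdef]
      exact_mod_cast hfeas
    have hdzero : S = 0 → ∀ j, (d j : ℝ) = 0 := by
      intro h0 j
      have h1 : (∑ j, (d j : ℝ)) = 0 := le_antisymm (by rw [← h0]; exact hdS) hd_nonneg
      exact (Finset.sum_eq_zero_iff_of_nonneg fun j _ => Nat.cast_nonneg (d j)).1 h1 j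
        (Finset.mem_univ j)
    have hdem1 : ∀ j, ∑ i, (d j : ℝ) * (s i : ℝ) / S = (d j : ℝ) := by
      intro j
      rw [← Finset.sum_div, ← Finset.mul_sum, ← hSdef]
      by_cases hS' : S = 0
      · rw [hdzero hS' j]; simp
      · rw [mul_div_assoc, div_self hS', mul_one]
    refine ⟨fun i j => (d j : ℝ) * (s i : ℝ) / S, fun _ => 1, ?_, fun _ => Or.inr rfl, ?_, ?_, ?_⟩
    · intro i j
      show 0 ≤ (d j : ℝ) * (s i : ℝ) / S
      exact div_nonneg (mul_nonneg (Nat.cast_nonneg _) (Nat.cast_nonneg _)) hS0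
    · intro j
      exact hdem1 j
    · intro i
      show ∑ j, (d j : ℝ) * (s i : ℝ) / S ≤ (s i : ℝ) * 1
      rw [mul_one, ← Finset.sum_div, ← Finset.sum_mul]
      by_cases hS' : S = 0
      · have h1 : (∑ j, (d j : ℝ)) = 0 :=
          le_antisymm (by rw [← hS']; exact hdS) hd_nonneg
        rw [h1]
        simpa using Nat.cast_nonneg (s i)
      · rw [div_le_iff₀ (lt_of_le_of_ne hS0 (Ne.symm hS'))]
        nlinarith [hdS, (Nat.cast_nonneg (s i) : (0:ℝ) ≤ (s i : ℝ))]
    · show (∑ i, ∑ j, c i j * ((d j : ℝ) * (s i : ℝ) / S)) + (∑ i, (f i : ℝ) * 1)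
          ≤ (∑ i, ∑ j', c' i j' * x' i j') + (∑ j', r' j' * z' j')
      have hcost : ∑ i, ∑ j, c i j * ((d j : ℝ) * (s i : ℝ) / S) ≤ M * ∑ j, (d j : ℝ) := by
        have h1 : ∑ i, ∑ j, c i j * ((d j : ℝ) * (s i : ℝ) / S)
            ≤ ∑ i, ∑ j, M * ((d j : ℝ) * (s i : ℝ) / S) :=
          Finset.sum_le_sum fun i _ => Finset.sum_le_sum fun j _ =>
            mul_le_mul_of_nonneg_right (hMc i j)
              (div_nonneg (mul_nonneg (Nat.cast_nonneg _) (Nat.cast_nonneg _)) hS0)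
        have h2 : ∑ i, ∑ j, M * ((d j : ℝ) * (s i : ℝ) / S)
            = M * ∑ j, ∑ i, (d j : ℝ) * (s i : ℝ) / S := by
          rw [Finset.sum_comm, Finset.mul_sum]
          exact Finset.sum_congr rfl fun j _ => by rw [Finset.mul_sum]
        have h3 : ∑ j, ∑ i, (d j : ℝ) * (s i : ℝ) / S = ∑ j, (d j : ℝ) :=
          Finset.sum_congr rfl fun j _ => hdem1 j
        calc ∑ i, ∑ j, c i j * ((d j : ℝ) * (s i : ℝ) / S)
            ≤ ∑ i, ∑ j, M * ((d j : ℝ) * (s i : ℝ) / S) := h1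
          _ = M * ∑ j, (d j : ℝ) := by rw [h2, h3]
      have hopen : ∑ i, (f i : ℝ) * 1 = ∑ i, (f i : ℝ) := by simp
      rw [hopen]
      have hBle : M * (∑ j, (d j : ℝ)) + ∑ i, (f i : ℝ) ≤ B := by
        rw [hB]; linarith
      linarith [htrans_nonneg, hpenB, hcost]
end

section
/- Let I1 = (F, C, d, c, r) be a UTMC instance with costs satisfying the four-point metric inequality, and let I2 be the associated UFL instance of the metric UTMC-to-UFL reduction. Then for every feasible UTMC solution (x, z) of I1 there exists a feasible UFL solution (x', z') of I2 whose objective value equals the objective value of (x, z). -/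
/-- metric UTMC-to-UFL reduction, forward direction.
Every feasible UTMC solution of `I1` yields a feasible UFL solution of `I2`
with the same objective value. -/
theorem stmt_13 {F C : Type} [Fintype F] [Fintype C] [Nonempty F] [Nonempty C]
    -- UTMC instance I1 = (F, C, d, c, r)
    (d : C → ℕ) (c : F → C → ℝ) (r : C → ℕ)
    (hc_nonneg : ∀ i j, 0 ≤ c i j)
    (hc_metric : ∀ (i0 i1 : F) (j0 j1 : C), c i0 j0 ≤ c i0 j1 + c i1 j1 + c i1 j0)
    -- UFL instance I2 on facility set F ⊕ C given by the reduction
    (f' : F ⊕ C → ℕ) (c' : F ⊕ C → C → ℝ)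
    (hf'F : ∀ i : F, f' (Sum.inl i) = 0)
    (hf'C : ∀ j : C, f' (Sum.inr j) = r j)
    (hc'F : ∀ (i : F) (j : C), c' (Sum.inl i) j = c i j)
    (hc'diag : ∀ j : C, c' (Sum.inr j) j = 0)
    (hc'off : ∀ j j0 : C, j0 ≠ j →
      c' (Sum.inr j) j0 =
        Finset.univ.inf' Finset.univ_nonempty (fun i : F => c i j0 + c i j))
    -- a feasible UTMC solution (x, z) of I1
    (x : F → C → ℝ) (z : C → ℝ)
    (hx : ∀ i j, 0 ≤ x i j)
    (hz : ∀ j, z j = 0 ∨ z j = 1)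
    (hdem : ∀ j, ∑ i, x i j = (1 - z j) * (d j : ℝ)) :
    -- there is a feasible UFL solution (x', z') of I2 with equal objective value
    ∃ (x' : F ⊕ C → C → ℝ) (z' : F ⊕ C → ℝ),
      (∀ i' j, 0 ≤ x' i' j) ∧
      (∀ i', z' i' = 0 ∨ z' i' = 1) ∧
      (∀ j, ∑ i', x' i' j = (d j : ℝ)) ∧
      (∀ i' j, z' i' = 0 → x' i' j = 0) ∧
      (∑ i', ∑ j, c' i' j * x' i' j) + (∑ i', (f' i' : ℝ) * z' i')
        = (∑ i, ∑ j, c i j * x i j) + (∑ j, (r j : ℝ) * z j) := by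
  classical
  refine ⟨fun i' j => match i' with
      | Sum.inl i => x i j
      | Sum.inr j' => if j' = j then z j * (d j : ℝ) else 0,
    fun i' => match i' with
      | Sum.inl _ => 1
      | Sum.inr j' => z j', ?_, ?_, ?_, ?_, ?_⟩
  · rintro (i | j') j
    · exact hx i j
    · dsimp only
      split
      · rcases hz j with h | h <;> simp [h]
      · exact le_refl 0
  · rintro (i | j')
    · right; rfl
    · exact hz j'
  · intro j
    rw [Fintype.sum_sum_type]
    simp only [Finset.sum_ite_eq', Finset.mem_univ, if_true, hdem]
    ring
  · rintro (i | j') j h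
    · simp at h
    · dsimp only at h ⊢
      split
      · subst ‹j' = j›; rw [h, zero_mul]
      · rfl
  · rw [Fintype.sum_sum_type, Fintype.sum_sum_type]
    have h1 : ∀ j' : C, ∑ j, c' (Sum.inr j') j *
        (if j' = j then z j * (d j : ℝ) else 0) = 0 := by
      intro j'
      apply Finset.sum_eq_zero
      intro j _
      by_cases hjj : j' = j
      · subst hjj; simp [hc'diag]
      · simp [hjj]
    simp only [h1, hc'F, hf'F, hf'C, Finset.sum_const_zero, add_zero,
      Nat.cast_zero, zero_mul, Finset.sum_const_zero, zero_add]
end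

section
/- Let I1 = (F, C, d, c, r) be a UTMC instance with costs satisfying the four-point metric inequality, and let I2 be the associated UFL instance of the metric UTMC-to-UFL reduction. Then for every feasible UFL solution (x', z') of I2 there exists a feasible UTMC solution (x, z) of I1 whose objective value is at most the objective value of (x', z'). -/
/-!
Keep the rejections of `I2`: client `j` is rejected in `I1` exactly when its dummy facility `i_j`
is open, which costs `r j` in both instances. The demand of an accepted client `j` served at a real
facility stays there, and the demand served at a dummy facility `i_{j0}` with `j0 ≠ j` is moved to
a facility `i` realising the minimum `c i j + c i j0 = c' i_{j0} j`, where it costs only `c i j`.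
An accepted client gets nothing from its own dummy facility, which is closed.
-/

open Finset

theorem Finset.sum_mul_sum_fiberwise {ι κ R : Type*} [Fintype ι] [Fintype κ] [DecidableEq κ]
    [CommSemiring R] (g : ι → κ) (w : κ → R) (v : ι → R) :
    ∑ k, w k * ∑ i with g i = k, v i = ∑ i, w (g i) * v i := by
  simp_rw [mul_sum]
  rw [← sum_fiberwise univ g fun i => w (g i) * v i]
  refine sum_congr rfl fun k _ => sum_congr rfl fun i hi => ?_
  rw [(mem_filter.1 hi).2]

namespace UTMCtoUFL

variable {F C : Type} [Fintype F]

section Reroute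

variable [Nonempty F]

noncomputable def hub (c : F → C → ℝ) (j j0 : C) : F :=
  (exists_mem_eq_inf' univ_nonempty fun i => c i j + c i j0).choose

theorem hub_spec (c : F → C → ℝ) (j j0 : C) :
    univ.inf' univ_nonempty (fun i => c i j + c i j0) = c (hub c j j0) j + c (hub c j j0) j0 :=
  (exists_mem_eq_inf' univ_nonempty fun i => c i j + c i j0).choose_spec.2

/-- Where the demand of client `j` served at a facility of `I2` is sent in `I1`. -/
noncomputable def reroute (c : F → C → ℝ) (j : C) : F ⊕ C → F :=
  Sum.elim id (hub c j)

theorem cost_reroute_le {c : F → C → ℝ} {c' : F ⊕ C → C → ℝ}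
    (hc_nonneg : ∀ i j, 0 ≤ c i j) (hc'F : ∀ (i : F) (j : C), c' (Sum.inl i) j = c i j)
    (hc'off : ∀ j j0 : C, j0 ≠ j →
      c' (Sum.inr j) j0 = univ.inf' univ_nonempty (fun i : F => c i j0 + c i j))
    {j : C} {i' : F ⊕ C} (hi' : i' ≠ Sum.inr j) : c (reroute c j i') j ≤ c' i' j := by
  cases i' with
  | inl i => exact (hc'F i j).ge
  | inr j0 =>
    have hj : j ≠ j0 := fun h => hi' (h ▸ rfl)
    rw [hc'off j0 j hj, hub_spec]
    exact le_add_of_nonneg_right (hc_nonneg _ _)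

theorem mul_cost_reroute_le {c : F → C → ℝ} {c' : F ⊕ C → C → ℝ} {x' : F ⊕ C → C → ℝ}
    {z' : F ⊕ C → ℝ} (hc_nonneg : ∀ i j, 0 ≤ c i j)
    (hc'F : ∀ (i : F) (j : C), c' (Sum.inl i) j = c i j) (hc'diag : ∀ j : C, c' (Sum.inr j) j = 0)
    (hc'off : ∀ j j0 : C, j0 ≠ j →
      c' (Sum.inr j) j0 = univ.inf' univ_nonempty (fun i : F => c i j0 + c i j))
    (hx' : ∀ i' j, 0 ≤ x' i' j) (hz' : ∀ i', z' i' = 0 ∨ z' i' = 1)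
    (hopen' : ∀ i' j, z' i' = 0 → x' i' j = 0) (j : C) (i' : F ⊕ C) :
    (1 - z' (Sum.inr j)) * (c (reroute c j i') j * x' i' j) ≤ c' i' j * x' i' j := by
  by_cases hi' : i' = Sum.inr j
  · subst hi'
    rcases hz' (Sum.inr j) with hz | hz <;> simp [hz, hc'diag, hopen' _ j]
  · have hz1 : 1 - z' (Sum.inr j) ≤ 1 := by rcases hz' (Sum.inr j) with hz | hz <;> simp [hz]
    calc (1 - z' (Sum.inr j)) * (c (reroute c j i') j * x' i' j)
        ≤ c (reroute c j i') j * x' i' j :=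
          mul_le_of_le_one_left (mul_nonneg (hc_nonneg _ _) (hx' _ _)) hz1
      _ ≤ c' i' j * x' i' j :=
          mul_le_mul_of_nonneg_right (cost_reroute_le hc_nonneg hc'F hc'off hi') (hx' _ _)

end Reroute

variable [Fintype C] [DecidableEq F]

noncomputable def flow (σ : C → F ⊕ C → F) (x' : F ⊕ C → C → ℝ) (z' : F ⊕ C → ℝ)
    (i : F) (j : C) : ℝ :=
  (1 - z' (Sum.inr j)) * ∑ i' with σ j i' = i, x' i' j

variable (σ : C → F ⊕ C → F) (x' : F ⊕ C → C → ℝ) (z' : F ⊕ C → ℝ)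

theorem flow_nonneg (hx' : ∀ i' j, 0 ≤ x' i' j) (hz' : ∀ i', z' i' = 0 ∨ z' i' = 1)
    (i : F) (j : C) : 0 ≤ flow σ x' z' i j := by
  have hz0 : 0 ≤ 1 - z' (Sum.inr j) := by rcases hz' (Sum.inr j) with hz | hz <;> simp [hz]
  exact mul_nonneg hz0 (sum_nonneg fun i' _ => hx' i' j)

theorem sum_flow (j : C) :
    ∑ i, flow σ x' z' i j = (1 - z' (Sum.inr j)) * ∑ i', x' i' j := by
  simp only [flow, ← mul_sum, sum_fiberwise]

theorem sum_cost_mul_flow (c : F → C → ℝ) (j : C) :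
    ∑ i, c i j * flow σ x' z' i j
      = (1 - z' (Sum.inr j)) * ∑ i', c (σ j i') j * x' i' j := by
  simp only [flow, mul_left_comm (c _ j), ← mul_sum, sum_mul_sum_fiberwise]

end UTMCtoUFL

open UTMCtoUFL in
theorem stmt_14_general {F C : Type} [Fintype F] [Fintype C] [Nonempty F]
    -- UTMC instance I1 = (F, C, d, c, r)
    (d : C → ℕ) (c : F → C → ℝ) (r : C → ℕ)
    (hc_nonneg : ∀ i j, 0 ≤ c i j)
    -- UFL instance I2 on facility set F ⊕ C given by the reduction
    (f' : F ⊕ C → ℕ) (c' : F ⊕ C → C → ℝ)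
    (hf'F : ∀ i : F, f' (Sum.inl i) = 0)
    (hf'C : ∀ j : C, f' (Sum.inr j) = r j)
    (hc'F : ∀ (i : F) (j : C), c' (Sum.inl i) j = c i j)
    (hc'diag : ∀ j : C, c' (Sum.inr j) j = 0)
    (hc'off : ∀ j j0 : C, j0 ≠ j →
      c' (Sum.inr j) j0 =
        Finset.univ.inf' Finset.univ_nonempty (fun i : F => c i j0 + c i j))
    -- a feasible UFL solution (x', z') of I2
    (x' : F ⊕ C → C → ℝ) (z' : F ⊕ C → ℝ)
    (hx' : ∀ i' j, 0 ≤ x' i' j)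
    (hz' : ∀ i', z' i' = 0 ∨ z' i' = 1)
    (hdem' : ∀ j, ∑ i', x' i' j = (d j : ℝ))
    (hopen' : ∀ i' j, z' i' = 0 → x' i' j = 0) :
    -- there is a feasible UTMC solution (x, z) of I1 with objective value at most that of (x', z')
    ∃ (x : F → C → ℝ) (z : C → ℝ),
      (∀ i j, 0 ≤ x i j) ∧
      (∀ j, z j = 0 ∨ z j = 1) ∧
      (∀ j, ∑ i, x i j = (1 - z j) * (d j : ℝ)) ∧
      (∑ i, ∑ j, c i j * x i j) + (∑ j, (r j : ℝ) * z j)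
        ≤ (∑ i', ∑ j, c' i' j * x' i' j) + (∑ i', (f' i' : ℝ) * z' i') := by
  classical
  refine ⟨flow (reroute c) x' z', fun j => z' (Sum.inr j), flow_nonneg _ _ _ hx' hz',
    fun j => hz' _, fun j => by rw [sum_flow, hdem'], ?_⟩
  have hpenalty : ∑ i', (f' i' : ℝ) * z' i' = ∑ j, (r j : ℝ) * z' (Sum.inr j) := by
    simp [Fintype.sum_sum_type, hf'F, hf'C]
  have hcost : ∑ i, ∑ j, c i j * flow (reroute c) x' z' i j ≤ ∑ i', ∑ j, c' i' j * x' i' j := by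
    rw [Finset.sum_comm, Finset.sum_comm (s := Finset.univ (α := F ⊕ C))]
    gcongr with j
    rw [sum_cost_mul_flow, Finset.mul_sum]
    exact Finset.sum_le_sum fun i' _ =>
      mul_cost_reroute_le hc_nonneg hc'F hc'diag hc'off hx' hz' hopen' j i'
  exact add_le_add hcost hpenalty.ge

/-- metric UTMC-to-UFL reduction, backward direction.
Every feasible UFL solution of `I2` yields a feasible UTMC solution of `I1`
with objective value at most that of the UFL solution. -/
theorem stmt_14 {F C : Type} [Fintype F] [Fintype C] [Nonempty F] [Nonempty C]
    -- UTMC instance I1 = (F, C, d, c, r)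
    (d : C → ℕ) (c : F → C → ℝ) (r : C → ℕ)
    (hc_nonneg : ∀ i j, 0 ≤ c i j)
    (hc_metric : ∀ (i0 i1 : F) (j0 j1 : C), c i0 j0 ≤ c i0 j1 + c i1 j1 + c i1 j0)
    -- UFL instance I2 on facility set F ⊕ C given by the reduction
    (f' : F ⊕ C → ℕ) (c' : F ⊕ C → C → ℝ)
    (hf'F : ∀ i : F, f' (Sum.inl i) = 0)
    (hf'C : ∀ j : C, f' (Sum.inr j) = r j)
    (hc'F : ∀ (i : F) (j : C), c' (Sum.inl i) j = c i j)
    (hc'diag : ∀ j : C, c' (Sum.inr j) j = 0)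
    (hc'off : ∀ j j0 : C, j0 ≠ j →
      c' (Sum.inr j) j0 =
        Finset.univ.inf' Finset.univ_nonempty (fun i : F => c i j0 + c i j))
    -- a feasible UFL solution (x', z') of I2
    (x' : F ⊕ C → C → ℝ) (z' : F ⊕ C → ℝ)
    (hx' : ∀ i' j, 0 ≤ x' i' j)
    (hz' : ∀ i', z' i' = 0 ∨ z' i' = 1)
    (hdem' : ∀ j, ∑ i', x' i' j = (d j : ℝ))
    (hopen' : ∀ i' j, z' i' = 0 → x' i' j = 0) :
    -- there is a feasible UTMC solution (x, z) of I1 with objective value at most that of (x', z')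
    ∃ (x : F → C → ℝ) (z : C → ℝ),
      (∀ i j, 0 ≤ x i j) ∧
      (∀ j, z j = 0 ∨ z j = 1) ∧
      (∀ j, ∑ i, x i j = (1 - z j) * (d j : ℝ)) ∧
      (∑ i, ∑ j, c i j * x i j) + (∑ j, (r j : ℝ) * z j)
        ≤ (∑ i', ∑ j, c' i' j * x' i' j) + (∑ i', (f' i' : ℝ) * z' i') :=
  stmt_14_general d c r hc_nonneg f' c' hf'F hf'C hc'F hc'diag hc'off x' z' hx' hz' hdem' hopen'
end

section
/- Let I1 = (F, C, d, c, r) be a UTMC instance with costs satisfying the four-point metric inequality, and let I2 be the associated UFL instance of the metric UTMC-to-UFL reduction. Then the infimum of the objective values over all feasible UTMC solutions of I1 equals the infimum of the objective values over all feasible UFL solutions of I2. -/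
/-- the metric UTMC-to-UFL reduction preserves the optimal value:
the infimum of UTMC objective values of `I1` equals the infimum of UFL objective
values of `I2`. -/
theorem stmt_15 {F C : Type} [Fintype F] [Fintype C] [Nonempty F] [Nonempty C]
    -- UTMC instance I1 = (F, C, d, c, r)
    (d : C → ℕ) (c : F → C → ℝ) (r : C → ℕ)
    (hc_nonneg : ∀ i j, 0 ≤ c i j)
    (hc_metric : ∀ (i0 i1 : F) (j0 j1 : C), c i0 j0 ≤ c i0 j1 + c i1 j1 + c i1 j0)
    -- UFL instance I2 on facility set F ⊕ C given by the reduction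
    (f' : F ⊕ C → ℕ) (c' : F ⊕ C → C → ℝ)
    (hf'F : ∀ i : F, f' (Sum.inl i) = 0)
    (hf'C : ∀ j : C, f' (Sum.inr j) = r j)
    (hc'F : ∀ (i : F) (j : C), c' (Sum.inl i) j = c i j)
    (hc'diag : ∀ j : C, c' (Sum.inr j) j = 0)
    (hc'off : ∀ j j0 : C, j0 ≠ j →
      c' (Sum.inr j) j0 =
        Finset.univ.inf' Finset.univ_nonempty (fun i : F => c i j0 + c i j)) :
    sInf {v : ℝ | ∃ (x : F → C → ℝ) (z : C → ℝ),
        (∀ i j, 0 ≤ x i j) ∧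
        (∀ j, z j = 0 ∨ z j = 1) ∧
        (∀ j, ∑ i, x i j = (1 - z j) * (d j : ℝ)) ∧
        v = (∑ i, ∑ j, c i j * x i j) + (∑ j, (r j : ℝ) * z j)}
      = sInf {v : ℝ | ∃ (x' : F ⊕ C → C → ℝ) (z' : F ⊕ C → ℝ),
        (∀ i' j, 0 ≤ x' i' j) ∧
        (∀ i', z' i' = 0 ∨ z' i' = 1) ∧
        (∀ j, ∑ i', x' i' j = (d j : ℝ)) ∧
        (∀ i' j, z' i' = 0 → x' i' j = 0) ∧
        v = (∑ i', ∑ j, c' i' j * x' i' j) + (∑ i', (f' i' : ℝ) * z' i')} := by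
  classical
  have hFne : (Finset.univ : Finset F).Nonempty := Finset.univ_nonempty
  set S1 : Set ℝ := {v : ℝ | ∃ (x : F → C → ℝ) (z : C → ℝ),
        (∀ i j, 0 ≤ x i j) ∧
        (∀ j, z j = 0 ∨ z j = 1) ∧
        (∀ j, ∑ i, x i j = (1 - z j) * (d j : ℝ)) ∧
        v = (∑ i, ∑ j, c i j * x i j) + (∑ j, (r j : ℝ) * z j)} with hS1def
  set S2 : Set ℝ := {v : ℝ | ∃ (x' : F ⊕ C → C → ℝ) (z' : F ⊕ C → ℝ),
        (∀ i' j, 0 ≤ x' i' j) ∧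
        (∀ i', z' i' = 0 ∨ z' i' = 1) ∧
        (∀ j, ∑ i', x' i' j = (d j : ℝ)) ∧
        (∀ i' j, z' i' = 0 → x' i' j = 0) ∧
        v = (∑ i', ∑ j, c' i' j * x' i' j) + (∑ i', (f' i' : ℝ) * z' i')} with hS2def
  -- nonnegativity of c'
  have hc'_nonneg : ∀ i' j, 0 ≤ c' i' j := by
    rintro (i | j0) j
    · rw [hc'F]; exact hc_nonneg i j
    · rcases eq_or_ne j j0 with rfl | h
      · rw [hc'diag]
      · rw [hc'off j0 j h]
        exact Finset.le_inf' _ _ fun i _ => add_nonneg (hc_nonneg i j) (hc_nonneg i j0)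
  -- every element of S1 is an element of S2 (open all real facilities, send
  -- the rejected demand of client j to its dummy facility)
  have hsub : S1 ⊆ S2 := by
    rintro v ⟨x, z, hx, hz, hbal, rfl⟩
    have hzn : ∀ j, 0 ≤ z j := fun j => by rcases hz j with h | h <;> simp [h]
    refine ⟨fun i' j => match i' with
        | Sum.inl i => x i j
        | Sum.inr j0 => if j0 = j then z j * (d j : ℝ) else 0,
      fun i' => match i' with
        | Sum.inl _ => 1
        | Sum.inr j0 => z j0, ?_, ?_, ?_, ?_, ?_⟩
    · rintro (i | j0) j
      · exact hx i j
      · dsimp only; split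
        · exact mul_nonneg (hzn j) (by positivity)
        · exact le_refl 0
    · rintro (i | j0)
      · exact Or.inr rfl
      · exact hz j0
    · intro j
      rw [Fintype.sum_sum_type]
      simp only [Finset.sum_ite_eq', Finset.mem_univ, if_true, hbal j]
      ring
    · rintro (i | j0) j h
      · exact absurd h one_ne_zero
      · dsimp only at h ⊢
        rcases eq_or_ne j0 j with rfl | hne
        · simp [h]
        · simp [hne]
    · rw [Fintype.sum_sum_type, Fintype.sum_sum_type]
      have h1 : ∀ j0 : C, ∑ j, c' (Sum.inr j0) j * (if j0 = j then z j * (d j : ℝ) else 0) = 0 := by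
        intro j0
        rw [Finset.sum_eq_zero]
        intro j _
        rcases eq_or_ne j0 j with rfl | hne
        · simp [hc'diag]
        · simp [hne]
      simp only [hc'F, h1, hf'F, hf'C, Nat.cast_zero, zero_mul, mul_one,
        Finset.sum_const_zero, add_zero, Finset.sum_const, smul_zero, zero_add]
  -- S1 is nonempty: reject everything
  have hS1ne : S1.Nonempty := by
    refine ⟨∑ j, (r j : ℝ), fun _ _ => 0, fun _ => 1, fun _ _ => le_refl 0,
      fun _ => Or.inr rfl, fun j => by simp, by simp⟩
  have hS2ne : S2.Nonempty := ⟨_, hsub hS1ne.choose_spec⟩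
  -- both sets are bounded below by 0
  have hS1lb : ∀ v ∈ S1, (0:ℝ) ≤ v := by
    rintro v ⟨x, z, hx, hz, _, rfl⟩
    refine add_nonneg ?_ ?_
    · exact Finset.sum_nonneg fun i _ => Finset.sum_nonneg fun j _ =>
        mul_nonneg (hc_nonneg i j) (hx i j)
    · exact Finset.sum_nonneg fun j _ => mul_nonneg (Nat.cast_nonneg _)
        (by rcases hz j with h | h <;> simp [h])
  have hS1bdd : BddBelow S1 := ⟨0, hS1lb⟩
  have hS2lb : ∀ v ∈ S2, (0:ℝ) ≤ v := by
    rintro v ⟨x', z', hx', hz', _, _, rfl⟩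
    refine add_nonneg ?_ ?_
    · exact Finset.sum_nonneg fun i' _ => Finset.sum_nonneg fun j _ =>
        mul_nonneg (hc'_nonneg i' j) (hx' i' j)
    · exact Finset.sum_nonneg fun i' _ => mul_nonneg (Nat.cast_nonneg _)
        (by rcases hz' i' with h | h <;> simp [h])
  refine le_antisymm ?_ (csInf_le_csInf ⟨0, hS2lb⟩ hS1ne hsub)
  -- main direction: from a UFL solution, build a UTMC solution of value ≤ v
  refine le_csInf hS2ne ?_
  rintro v ⟨x', z', hx', hz', hbal', hcl', rfl⟩
  -- argmin facility for rerouting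
  have hm : ∀ j0 j : C, ∃ i : F,
      Finset.univ.inf' Finset.univ_nonempty (fun i : F => c i j + c i j0)
        = c i j + c i j0 := by
    intro j0 j
    obtain ⟨i, _, hi⟩ := Finset.exists_mem_eq_inf' Finset.univ_nonempty
      (fun i : F => c i j + c i j0)
    exact ⟨i, hi⟩
  set m : C → C → F := fun j0 j => (hm j0 j).choose with hmdef
  set M : F ⊕ C → C → F := fun i' j => match i' with
    | Sum.inl i => i
    | Sum.inr j0 => m j0 j with hMdef
  -- key per-term cost bound
  have hkey : ∀ j, z' (Sum.inr j) = 0 →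
      ∀ i', c (M i' j) j * x' i' j ≤ c' i' j * x' i' j := by
    rintro j hzj (i | j0)
    · rw [hc'F]
    · rcases eq_or_ne j0 j with rfl | hne
      · rw [hcl' _ _ hzj]; simp
      · have hb : c (m j0 j) j ≤ c' (Sum.inr j0) j := by
          rw [hc'off j0 j hne.symm]
          calc c (m j0 j) j ≤ c (m j0 j) j + c (m j0 j) j0 :=
                le_add_of_nonneg_right (hc_nonneg _ _)
            _ = _ := ((hm j0 j).choose_spec).symm
        exact mul_le_mul_of_nonneg_right hb (hx' _ _)
  -- construct the UTMC solution
  set z : C → ℝ := fun j => z' (Sum.inr j) with hzdef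
  set x : F → C → ℝ := fun i j => if z' (Sum.inr j) = 1 then 0
      else ∑ i', if M i' j = i then x' i' j else 0 with hxdef
  have hxcollapse : ∀ j, z' (Sum.inr j) = 0 → ∀ i,
      x i j = ∑ i', if M i' j = i then x' i' j else 0 := by
    intro j hzj i
    rw [hxdef]
    simp only [hzj, zero_ne_one, if_false]
  have hw : ((∑ i, ∑ j, c i j * x i j) + (∑ j, (r j : ℝ) * z j)) ∈ S1 := by
    refine ⟨x, z, ?_, fun j => hz' (Sum.inr j), ?_, rfl⟩
    · intro i j
      rw [hxdef]
      dsimp only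
      split
      · exact le_refl 0
      · refine Finset.sum_nonneg fun i' _ => ?_
        split
        · exact hx' _ _
        · exact le_refl 0
    · intro j
      rcases hz' (Sum.inr j) with hzj | hzj
      · have : ∀ i, x i j = ∑ i', if M i' j = i then x' i' j else 0 := hxcollapse j hzj
        simp only [this]
        rw [Finset.sum_comm]
        have : ∀ i' : F ⊕ C, ∑ i : F, (if M i' j = i then x' i' j else 0) = x' i' j := by
          intro i'
          rw [Finset.sum_ite_eq]
          simp
        simp only [this, hbal' j, hzdef, hzj]
        ring
      · have : ∀ i, x i j = 0 := by
          intro i; rw [hxdef]; simp only [hzj, if_true]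
        simp only [this, Finset.sum_const_zero, hzdef, hzj]
        ring
  refine le_trans (csInf_le hS1bdd hw) ?_
  -- compare objective values clientwise
  rw [Finset.sum_comm (γ := F) (α := C), Finset.sum_comm (γ := F ⊕ C) (α := C),
    Fintype.sum_sum_type (f := fun i' => (f' i' : ℝ) * z' i')]
  simp only [hf'F, hf'C, Nat.cast_zero, zero_mul, Finset.sum_const_zero, zero_add]
  rw [← Finset.sum_add_distrib, ← Finset.sum_add_distrib]
  refine Finset.sum_le_sum ?_
  intro j _
  rcases hz' (Sum.inr j) with hzj | hzj
  · have hxj : ∀ i, x i j = ∑ i', if M i' j = i then x' i' j else 0 := hxcollapse j hzj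
    have hL : ∑ i, c i j * x i j = ∑ i', c (M i' j) j * x' i' j := by
      simp only [hxj, Finset.mul_sum, mul_ite, mul_zero]
      rw [Finset.sum_comm]
      refine Finset.sum_congr rfl fun i' _ => ?_
      rw [Finset.sum_ite_eq]
      simp
    rw [hL]
    have : (r j : ℝ) * z j = (r j : ℝ) * z' (Sum.inr j) := rfl
    rw [this]
    exact add_le_add (Finset.sum_le_sum fun i' _ => hkey j hzj i') (le_refl _)
  · have hxj : ∀ i, x i j = 0 := by
      intro i; rw [hxdef]; simp only [hzj, if_true]
    have : (r j : ℝ) * z j = (r j : ℝ) * z' (Sum.inr j) := rfl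
    simp only [hxj, mul_zero, Finset.sum_const_zero, zero_add, this]
    exact le_add_of_nonneg_left (Finset.sum_nonneg fun i' _ =>
      mul_nonneg (hc'_nonneg _ _) (hx' _ _))
end
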